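/- arXiv:0903.3694 — 10 statements merged into one kernel-verified Lean document; each statement's English description precedes it below -/
import Mathlib

section
/- Let f be a juggling function and S a juggling state with ball number b. Then the image f(S) = {f(s) : s ∈ S} is a juggling state with ball number b + av(f). Consequently, for any two juggling functions f and g, the composite f∘g is a juggling function and av(f∘g) = av(f) + av(g); that is, the set G of juggling functions is closed under composition and av : G → ℤ is additive. -/
/-- A (virtual) juggling state: a subset of ℤ whose symmetric difference with
`{i : ℤ | i ≤ 0}` is finite. -/
def IsJugglingState (S : Set ℤ) : Prop := (symmDiff S {i : ℤ | i ≤ 0}).Finite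

/-- The ball number of a juggling state: |S ∩ ℤ_{>0}| − |ℤ_{≤0} ∖ S|. -/
noncomputable def ballNumber (S : Set ℤ) : ℤ :=
  ((S ∩ {i : ℤ | 0 < i}).ncard : ℤ) - (({i : ℤ | i ≤ 0} \ S).ncard : ℤ)

/-- A (virtual) juggling function: a bijection f : ℤ → ℤ such that f(ℤ_{≤0}) is a
juggling state. -/
def IsJugglingFunction (f : ℤ → ℤ) : Prop :=
  Function.Bijective f ∧ IsJugglingState (f '' {i : ℤ | i ≤ 0})

/-- The ball number of a juggling function. -/
noncomputable def av (f : ℤ → ℤ) : ℤ := ballNumber (f '' {i : ℤ | i ≤ 0})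

/-- Relative "size difference" of two sets. -/
noncomputable def sdiff' (S T : Set ℤ) : ℤ := ((S \ T).ncard : ℤ) - ((T \ S).ncard : ℤ)

lemma ballNumber_eq (S : Set ℤ) : ballNumber S = sdiff' S {i : ℤ | i ≤ 0} := by
  have h : S ∩ {i : ℤ | 0 < i} = S \ {i : ℤ | i ≤ 0} := by
    ext x; simp [Set.mem_setOf_eq, not_le]
  rw [ballNumber, sdiff', h]

lemma diff_eq_of_symmDiff_subset {S T F : Set ℤ} (h : symmDiff S T ⊆ F) :
    S \ T = (S ∩ F) \ (T ∩ F) := by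
  ext x
  constructor
  · intro hx
    exact ⟨⟨hx.1, h (Set.mem_symmDiff.mpr (Or.inl ⟨hx.1, hx.2⟩))⟩, fun hT => hx.2 hT.1⟩
  · intro hx
    exact ⟨hx.1.1, fun hT => hx.2 ⟨hT, hx.1.2⟩⟩

lemma ncard_diff_sub (A B : Set ℤ) (hA : A.Finite) (hB : B.Finite) :
    ((A \ B).ncard : ℤ) - ((B \ A).ncard : ℤ) = (A.ncard : ℤ) - (B.ncard : ℤ) := by
  have h1 := Set.ncard_inter_add_ncard_diff_eq_ncard A B hA
  have h2 := Set.ncard_inter_add_ncard_diff_eq_ncard B A hB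
  have h3 : (A ∩ B) = (B ∩ A) := Set.inter_comm A B
  rw [h3] at h1
  omega

lemma sdiff'_cocycle {S T U : Set ℤ} (h1 : (symmDiff S T).Finite)
    (h2 : (symmDiff T U).Finite) :
    sdiff' S U = sdiff' S T + sdiff' T U := by
  set F := symmDiff S T ∪ symmDiff T U with hFdef
  have hF : F.Finite := h1.union h2
  have hST : symmDiff S T ⊆ F := Set.subset_union_left
  have hTU : symmDiff T U ⊆ F := Set.subset_union_right
  have hSU : symmDiff S U ⊆ F := symmDiff_triangle S T U
  have hSF : (S ∩ F).Finite := hF.inter_of_right S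
  have hTF : (T ∩ F).Finite := hF.inter_of_right T
  have hUF : (U ∩ F).Finite := hF.inter_of_right U
  have dST : S \ T = (S ∩ F) \ (T ∩ F) := diff_eq_of_symmDiff_subset hST
  have dTS : T \ S = (T ∩ F) \ (S ∩ F) :=
    diff_eq_of_symmDiff_subset (symmDiff_comm S T ▸ hST)
  have dTU : T \ U = (T ∩ F) \ (U ∩ F) := diff_eq_of_symmDiff_subset hTU
  have dUT : U \ T = (U ∩ F) \ (T ∩ F) :=
    diff_eq_of_symmDiff_subset (symmDiff_comm T U ▸ hTU)
  have dSU : S \ U = (S ∩ F) \ (U ∩ F) := diff_eq_of_symmDiff_subset hSU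
  have dUS : U \ S = (U ∩ F) \ (S ∩ F) :=
    diff_eq_of_symmDiff_subset (symmDiff_comm S U ▸ hSU)
  have e1 : sdiff' S T = (S ∩ F).ncard - (T ∩ F).ncard := by
    rw [sdiff', dST, dTS, ncard_diff_sub _ _ hSF hTF]
  have e2 : sdiff' T U = (T ∩ F).ncard - (U ∩ F).ncard := by
    rw [sdiff', dTU, dUT, ncard_diff_sub _ _ hTF hUF]
  have e3 : sdiff' S U = (S ∩ F).ncard - (U ∩ F).ncard := by
    rw [sdiff', dSU, dUS, ncard_diff_sub _ _ hSF hUF]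
  rw [e1, e2, e3]; ring

lemma sdiff'_image {f : ℤ → ℤ} (hf : Function.Injective f) (S T : Set ℤ) :
    sdiff' (f '' S) (f '' T) = sdiff' S T := by
  rw [sdiff', sdiff', ← Set.image_diff hf, ← Set.image_diff hf,
    Set.ncard_image_of_injective _ hf, Set.ncard_image_of_injective _ hf]

lemma main_lemma {f : ℤ → ℤ} (hf : IsJugglingFunction f) {S : Set ℤ}
    (hS : IsJugglingState S) :
    IsJugglingState (f '' S) ∧ ballNumber (f '' S) = ballNumber S + av f := by
  have hinj := hf.1.injective
  have h1 : (symmDiff (f '' S) (f '' {i : ℤ | i ≤ 0})).Finite := by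
    rw [← Set.image_symmDiff hinj]
    exact hS.image f
  have h2 : (symmDiff (f '' {i : ℤ | i ≤ 0}) {i : ℤ | i ≤ 0}).Finite := hf.2
  constructor
  · exact (h1.union h2).subset (symmDiff_triangle _ (f '' {i : ℤ | i ≤ 0}) _)
  · rw [ballNumber_eq, sdiff'_cocycle h1 h2, sdiff'_image hinj]
    simp only [av, ballNumber_eq]

theorem stmt_0 (f : ℤ → ℤ) (hf : IsJugglingFunction f) :
    (∀ (S : Set ℤ) (b : ℤ), IsJugglingState S → ballNumber S = b →
      IsJugglingState (f '' S) ∧ ballNumber (f '' S) = b + av f) ∧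
    (∀ g : ℤ → ℤ, IsJugglingFunction g →
      IsJugglingFunction (f ∘ g) ∧ av (f ∘ g) = av f + av g) := by
  constructor
  · intro S b hS hb
    obtain ⟨h1, h2⟩ := main_lemma hf hS
    exact ⟨h1, by rw [h2, hb]⟩
  · intro g hg
    have himg : (f ∘ g) '' {i : ℤ | i ≤ 0} = f '' (g '' {i : ℤ | i ≤ 0}) :=
      Set.image_comp f g _
    obtain ⟨h1, h2⟩ := main_lemma hf hg.2
    refine ⟨⟨hf.1.comp hg.1, ?_⟩, ?_⟩
    · rw [IsJugglingState, himg]; exact h1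
    · simp only [av] at h2 ⊢
      rw [himg, h2]
      ring
end

section
/- For a bijection f : ℤ → ℤ the following are equivalent: (1) there is a uniform bound N with |f(i) − i| < N for all i ∈ ℤ; (2) the collection of states {st(f,t) : t ∈ ℤ} is a finite set of subsets of ℤ. Moreover, if these equivalent conditions hold, then f is a juggling function. -/
/-- The state of `f` at time `t`: st(f,t) = {f(i) − t : i ≤ t}. -/
def st (f : ℤ → ℤ) (t : ℤ) : Set ℤ := (fun i => f i - t) '' {i : ℤ | i ≤ t}

/-!
Bounded displacement pins every state between two rays `Set.Iic (-N)` and `Set.Iic N`, and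
there are only finitely many sets between two such rays.

Conversely, if the states are finitely many, then `st f a = st f (a + d)` for some `a` and
`d > 0`. Then `S = st f a` is closed under `x ↦ x - d`, and the `d` throws `f i - (a + d)`,
`a < i ≤ a + d`, are elements `y` of `S` with `y + d ∉ S`. No two of them are congruent mod `d`
(the larger would force `y + d ∈ S` for the smaller), so they meet every residue class, and `S`
meets each class in a ray below such a `y`. This bounds `S` above and gives it a lower ray, and
the same follows for all earlier states. Since there are finitely many states, the bounds are
uniform, and `f i - i ∈ st f i`, `f i - i + 1 ∉ st f (i - 1)` then bound the displacement.
-/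

open Set Filter Function

theorem exists_mem_modEq_of_card_eq {d : ℕ} [NeZero d] {T : Finset ℤ} (hcard : T.card = d)
    (hT : ∀ y ∈ T, ∀ y' ∈ T, y ≡ y' [ZMOD d] → y = y') (x : ℤ) :
    ∃ y ∈ T, x ≡ y [ZMOD d] := by
  have hinj : InjOn (fun y : ℤ => (y : ZMod d)) T := fun y hy y' hy' h =>
    hT y hy y' hy' ((ZMod.intCast_eq_intCast_iff _ _ _).mp h)
  have huniv : T.image (fun y : ℤ => (y : ZMod d)) = Finset.univ :=
    Finset.eq_univ_of_card _ (by rw [Finset.card_image_of_injOn hinj, hcard, ZMod.card])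
  obtain ⟨y, hy, hxy⟩ := Finset.mem_image.mp (huniv ▸ Finset.mem_univ (x : ZMod d))
  exact ⟨y, hy, ((ZMod.intCast_eq_intCast_iff _ _ _).mp hxy).symm⟩

theorem mem_of_le_of_modEq {S : Set ℤ} {d : ℕ} (hdown : ∀ x ∈ S, x - d ∈ S) {x z : ℤ}
    (hx : x ∈ S) (hzx : z ≤ x) (hmod : z ≡ x [ZMOD d]) : z ∈ S := by
  have hiter : ∀ n : ℕ, x - n * d ∈ S := by
    intro n
    induction n with
    | zero => simpa using hx
    | succ n ih => simpa [add_mul, sub_add_eq_sub_sub] using hdown _ ih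
  obtain ⟨k, hk⟩ := hmod.dvd
  rcases Nat.eq_zero_or_pos d with hd | hd
  · have : z = x := by rw [hd, Nat.cast_zero, zero_mul] at hk; omega
    rwa [this]
  · have hk0 : 0 ≤ k := by nlinarith
    convert hiter k.toNat using 1
    rw [Int.toNat_of_nonneg hk0]
    linarith

theorem exists_Iic_subset_subset_Iic_of_sub_mem {S : Set ℤ} {d : ℕ} [NeZero d]
    (hdown : ∀ x ∈ S, x - d ∈ S) {T : Finset ℤ} (hcard : T.card = d)
    (hT : ∀ y ∈ T, y ∈ S ∧ y + d ∉ S) : ∃ m M, Iic m ⊆ S ∧ S ⊆ Iic M := by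
  have le_of_modEq : ∀ y ∈ T, ∀ z ∈ S, z ≡ y [ZMOD d] → z ≤ y := by
    intro y hy z hz hzy
    by_contra! hlt
    have hyd : y + d ≤ z := by
      have := Int.le_of_dvd (by omega) hzy.symm.dvd
      omega
    exact (hT y hy).2 (mem_of_le_of_modEq hdown hz hyd (Int.add_modEq_right.trans hzy.symm))
  have cover := exists_mem_modEq_of_card_eq hcard fun y hy y' hy' h =>
    le_antisymm (le_of_modEq y' hy' y (hT y hy).1 h) (le_of_modEq y hy y' (hT y' hy').1 h.symm)
  obtain ⟨m, hm⟩ := T.bddBelow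
  obtain ⟨M, hM⟩ := T.bddAbove
  refine ⟨m, M, fun x hx => ?_, fun z hz => ?_⟩
  · obtain ⟨y, hy, hxy⟩ := cover x
    exact mem_of_le_of_modEq hdown (hT y hy).1 (le_trans hx (hm hy)) hxy
  · obtain ⟨y, hy, hzy⟩ := cover z
    exact (le_of_modEq y hy z hz hzy).trans (hM hy)

theorem finite_setOf_Iic_subset_subset_Iic (m M : ℤ) :
    {S : Set ℤ | Iic m ⊆ S ∧ S ⊆ Iic M}.Finite := by
  refine ((finite_Ioc m M).finite_subsets.image (Iic m ∪ ·)).subset ?_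
  rintro S ⟨hm, hM⟩
  exact ⟨S \ Iic m, fun x hx => ⟨not_le.1 hx.2, hM hx.1⟩, union_sdiff_cancel hm⟩

theorem isJugglingState_of_Iic_subset_subset_Iic {S : Set ℤ} {m M : ℤ} (hm : Iic m ⊆ S)
    (hM : S ⊆ Iic M) : IsJugglingState S := by
  refine (finite_Icc (min m 0) (max M 0)).subset fun x hx => ?_
  rcases mem_symmDiff.1 hx with ⟨hxS, hx0 : ¬x ≤ 0⟩ | ⟨hx0 : x ≤ 0, hxS⟩
  · have : x ≤ M := hM hxS
    exact ⟨by omega, le_max_of_le_left this⟩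
  · have : m < x := not_le.1 fun h => hxS (hm h)
    exact ⟨min_le_of_left_le this.le, by omega⟩

section States

variable {f : ℤ → ℤ}

theorem mem_st {t x : ℤ} : x ∈ st f t ↔ ∃ i ≤ t, f i - t = x := Iff.rfl

theorem st_subset_of_abs_sub_lt (hf : Surjective f) {N : ℤ} (hN : ∀ i, |f i - i| < N) (t : ℤ) :
    Iic (-N) ⊆ st f t ∧ st f t ⊆ Iic N := by
  refine ⟨fun x hx => ?_, fun x hx => ?_⟩
  · obtain ⟨i, hi⟩ := hf (x + t)
    have := abs_lt.1 (hN i)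
    exact mem_st.2 ⟨i, by rw [mem_Iic] at hx; omega, by omega⟩
  · obtain ⟨i, hi, rfl⟩ := mem_st.1 hx
    have := abs_lt.1 (hN i)
    simp only [mem_Iic]
    omega

theorem abs_sub_le_of_st_subset (hf : Injective f) {B : ℤ}
    (hB : ∀ t, Iic (-B) ⊆ st f t ∧ st f t ⊆ Iic B) (i : ℤ) : |f i - i| ≤ B := by
  have hup : f i - i ≤ B := (hB i).2 (mem_st.2 ⟨i, le_rfl, rfl⟩)
  have hnot : f i - (i - 1) ∉ st f (i - 1) := by
    intro hmem
    obtain ⟨j, hj, hji⟩ := mem_st.1 hmem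
    have := hf (show f j = f i by omega)
    omega
  have hlow : -B < f i - (i - 1) := not_le.1 fun h => hnot ((hB _).1 h)
  rw [abs_le]
  omega

theorem exists_abs_sub_lt_iff (hf : Bijective f) :
    (∃ N, ∀ i, |f i - i| < N) ↔ ∃ B, ∀ t, Iic (-B) ⊆ st f t ∧ st f t ⊆ Iic B :=
  ⟨fun ⟨N, hN⟩ => ⟨N, st_subset_of_abs_sub_lt hf.2 hN⟩,
    fun ⟨B, hB⟩ => ⟨B + 1, fun i => (abs_sub_le_of_st_subset hf.1 hB i).trans_lt (lt_add_one B)⟩⟩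

theorem exists_Iic_subset_st_subset_Iic_of_st_eq (hf : Injective f) {a : ℤ} {d : ℕ} [NeZero d]
    (h : st f a = st f (a + d)) : ∃ m M, Iic m ⊆ st f a ∧ st f a ⊆ Iic M := by
  refine exists_Iic_subset_subset_Iic_of_sub_mem (d := d)
    (T := (Finset.Ioc a (a + d)).image fun i => f i - (a + d)) ?_ ?_ ?_
  · intro x hx
    obtain ⟨i, hi, rfl⟩ := mem_st.1 hx
    rw [h]
    exact mem_st.2 ⟨i, by omega, by ring⟩
  · rw [Finset.card_image_of_injective _ fun i j hij => hf (sub_left_injective hij),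
      Int.card_Ioc]
    simp
  · simp only [Finset.mem_image, Finset.mem_Ioc]
    rintro _ ⟨i, ⟨hai, hid⟩, rfl⟩
    refine ⟨h ▸ mem_st.2 ⟨i, hid, rfl⟩, fun hmem => ?_⟩
    obtain ⟨j, hj, hji⟩ := mem_st.1 hmem
    have := hf (show f j = f i by omega)
    omega

/-- `st f u` shifted up by `u - t` is `st f t` together with the finitely many throws
`f i - t`, `t < i ≤ u`. -/
theorem exists_Iic_subset_st_subset_Iic_of_le {t u : ℤ} (htu : t ≤ u) {m M : ℤ}
    (hm : Iic m ⊆ st f u) (hM : st f u ⊆ Iic M) :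
    ∃ m' M', Iic m' ⊆ st f t ∧ st f t ⊆ Iic M' := by
  obtain ⟨c, hc⟩ := ((Finset.Ioc t u).image fun i => f i - t).bddBelow
  refine ⟨min (m + (u - t)) (c - 1), M + (u - t), fun x hx => ?_, fun x hx => ?_⟩
  · simp only [mem_Iic, le_min_iff] at hx
    obtain ⟨i, hiu, hi⟩ := mem_st.1 (hm (show x - (u - t) ≤ m by omega))
    refine mem_st.2 ⟨i, not_lt.1 fun hti => ?_, by omega⟩
    have : c ≤ f i - t := hc (Finset.mem_image.2 ⟨i, Finset.mem_Ioc.2 ⟨hti, hiu⟩, rfl⟩)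
    omega
  · obtain ⟨i, hi, rfl⟩ := mem_st.1 hx
    have : f i - u ≤ M := hM (mem_st.2 ⟨i, hi.trans htu, rfl⟩)
    simp only [mem_Iic]
    omega

theorem exists_Iic_subset_st_subset_Iic_of_finite (hf : Injective f)
    (hfin : (range (st f)).Finite) (t : ℤ) : ∃ m M, Iic m ⊆ st f t ∧ st f t ⊆ Iic M := by
  obtain ⟨k, l, hkl, hst⟩ :=
    hfin.exists_lt_map_eq_of_forall_mem (f := fun k : ℕ => st f (t + k)) fun k => mem_range_self _
  have : NeZero (l - k) := ⟨by omega⟩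
  obtain ⟨m, M, hm, hM⟩ := exists_Iic_subset_st_subset_Iic_of_st_eq hf (a := t + k) (d := l - k)
    (by rw [hst]; congr 1; push_cast [hkl.le]; ring)
  exact exists_Iic_subset_st_subset_Iic_of_le (by omega) hm hM

theorem exists_forall_st_subset_of_finite (hf : Injective f) (hfin : (range (st f)).Finite) :
    ∃ B, ∀ t, Iic (-B) ⊆ st f t ∧ st f t ⊆ Iic B := by
  have hev : ∀ S ∈ range (st f), ∀ᶠ B in atTop, Iic (-B) ⊆ S ∧ S ⊆ Iic B := by
    rintro _ ⟨t, rfl⟩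
    obtain ⟨m, M, hm, hM⟩ := exists_Iic_subset_st_subset_Iic_of_finite hf hfin t
    filter_upwards [eventually_ge_atTop (-m), eventually_ge_atTop M] with B hBm hBM
    exact ⟨(Iic_subset_Iic.2 (by omega)).trans hm, hM.trans (Iic_subset_Iic.2 hBM)⟩
  obtain ⟨B, hB⟩ := ((eventually_all_finite hfin).2 hev).exists
  exact ⟨B, fun t => hB _ ⟨t, rfl⟩⟩

end States

theorem stmt_1 (f : ℤ → ℤ) (hf : Function.Bijective f) :
    ((∃ N : ℤ, ∀ i : ℤ, |f i - i| < N) ↔ (Set.range (st f)).Finite) ∧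
    ((∃ N : ℤ, ∀ i : ℤ, |f i - i| < N) → IsJugglingFunction f) := by
  have hbounded := exists_abs_sub_lt_iff hf
  refine ⟨hbounded.trans ⟨?_, exists_forall_st_subset_of_finite hf.1⟩, fun h => ?_⟩
  · rintro ⟨B, hB⟩
    exact (finite_setOf_Iic_subset_subset_Iic (-B) B).subset (range_subset_iff.2 hB)
  · obtain ⟨B, hB⟩ := hbounded.1 h
    have hst0 : f '' {i : ℤ | i ≤ 0} = st f 0 := by simp [st]
    exact ⟨hf, hst0 ▸ isJugglingState_of_Iic_subset_subset_Iic (hB 0).1 (hB 0).2⟩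
end

section
/- Let f be a juggling function and let a ≤ b be integers. Then st(f,a) and st(f,b) are juggling states, and Σ_{i=a+1}^{b} (f(i) − i) = (b−a)·av(f) + hght(st(f,b)) − hght(st(f,a)), where the height of a juggling state S is the (finite) sum hght(S) = Σ_{i ∈ S, i>0} i − Σ_{i ≤ 0, i ∉ S} i. -/
/-- The height of a juggling state: Σ_{i ∈ S, i > 0} i − Σ_{i ≤ 0, i ∉ S} i. -/
noncomputable def hght (S : Set ℤ) : ℤ :=
  (∑ᶠ i ∈ S ∩ {i : ℤ | 0 < i}, i) - ∑ᶠ i ∈ {i : ℤ | i ≤ 0} \ S, i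

/-!
Passing from time `t` to `t + 1` replaces the state `st f t` by `st f t ∪ {f (t + 1) - t}` shifted
down by one, and the new point is not already in the state because `f` is injective. Consider the
signed sums `Σ_{i ∈ S, i > 0} g i - Σ_{i ≤ 0, i ∉ S} g i`, which give the ball number for `g = 1`
and the height for `g = id`. Adding a new point `x` adds `g x`, and shifting down by one replaces
`g` by `g (· - 1)` and subtracts `g 0`. Both facts become finite bookkeeping once `S` is squeezed
between `Iic m` and `Iic M`. Hence the ball number of `st f t` is constant, equal to `av f`, and
each step changes the height by `f (t + 1) - (t + 1) - av f`; summing these changes gives the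
formula.
-/

open Set Filter

noncomputable def signedSum (g : ℤ → ℤ) (S : Set ℤ) : ℤ :=
  (∑ᶠ i ∈ S ∩ {i | 0 < i}, g i) - ∑ᶠ i ∈ {i | i ≤ 0} \ S, g i

lemma hght_eq_signedSum (S : Set ℤ) : hght S = signedSum id S := rfl

lemma signedSum_eq_of_window {S : Set ℤ} {m M : ℤ} (hm : m ≤ 0) (hM : 0 ≤ M)
    (hmS : Iic m ⊆ S) (hSM : S ⊆ Iic M) (g : ℤ → ℤ) :
    signedSum g S = ∑ᶠ i ∈ S ∩ Ioc m M, g i - ∑ᶠ i ∈ Ioc m 0, g i := by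
  have hpos : S ∩ {i | 0 < i} = S ∩ Ioc 0 M := by
    ext x
    simp only [mem_inter_iff, mem_Ioc]
    exact ⟨fun ⟨hxS, hx0⟩ => ⟨hxS, hx0, hSM hxS⟩, fun ⟨hxS, hx0, _⟩ => ⟨hxS, hx0⟩⟩
  have hneg : {i | i ≤ 0} \ S = Ioc m 0 \ S := by
    ext x
    simp only [Set.mem_sdiff, mem_Ioc]
    exact ⟨fun ⟨hx0, hxS⟩ => ⟨⟨lt_of_not_ge fun h => hxS (hmS h), hx0⟩, hxS⟩,
      fun ⟨⟨_, hx0⟩, hxS⟩ => ⟨hx0, hxS⟩⟩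
  have hsplit : S ∩ Ioc m M = Ioc m 0 ∩ S ∪ S ∩ Ioc 0 M := by
    rw [← Ioc_union_Ioc_eq_Ioc hm hM, inter_union_distrib_left, inter_comm]
  have hdisj : Disjoint (Ioc m 0 ∩ S) (S ∩ Ioc 0 M) :=
    (Ioc_disjoint_Ioc_of_le le_rfl).mono inter_subset_left inter_subset_right
  rw [signedSum, hpos, hneg, hsplit, finsum_mem_union hdisj ((finite_Ioc m 0).inter_of_left S)
    ((finite_Ioc 0 M).inter_of_right S), ← finsum_mem_inter_add_sdiff S (finite_Ioc m 0)]
  ring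

lemma finsum_mem_Ioc_sub_one_left (g : ℤ → ℤ) {a b : ℤ} (hab : a ≤ b) :
    ∑ᶠ i ∈ Ioc (a - 1) b, g i = ∑ᶠ i ∈ Ioc a b, g (i - 1) + g b := by
  have hIoc : Ioc (a - 1) b = insert b (Ioc (a - 1) (b - 1)) := by
    ext x
    simp only [mem_insert_iff, mem_Ioc]
    omega
  rw [hIoc, finsum_mem_insert g (by simp) (finite_Ioc _ _), ← image_sub_const_Ioc,
    finsum_mem_image sub_left_injective.injOn, add_comm]

lemma isJugglingState_Iic (c : ℤ) : IsJugglingState (Iic c) := by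
  refine (finite_Icc (min c 0) (max c 0)).subset fun x hx => ?_
  simp only [mem_symmDiff, mem_Iic, mem_ofPred_eq] at hx
  simp only [mem_Icc]
  omega

namespace IsJugglingState

variable {S T : Set ℤ}

lemma of_symmDiff_finite (hT : IsJugglingState T) (h : (symmDiff S T).Finite) :
    IsJugglingState S :=
  (h.union hT).subset (symmDiff_triangle S T _)

lemma image_sub_const (hS : IsJugglingState S) (c : ℤ) : IsJugglingState ((· - c) '' S) := by
  refine (isJugglingState_Iic (0 - c)).of_symmDiff_finite ?_
  rw [← image_sub_const_Iic, ← image_symmDiff (sub_left_injective (b := c))]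
  exact hS.image _

lemma finite_inter_pos (hS : IsJugglingState S) : (S ∩ {i | 0 < i}).Finite :=
  hS.subset fun _ hx => Or.inl ⟨hx.1, not_le.2 hx.2.out⟩

lemma finite_nonpos_diff (hS : IsJugglingState S) : ({i | i ≤ 0} \ S).Finite :=
  hS.subset fun _ hx => Or.inr hx

lemma signedSum_sub (hS : IsJugglingState S) (g h : ℤ → ℤ) :
    signedSum (g - h) S = signedSum g S - signedSum h S := by
  simp only [signedSum, Pi.sub_apply, finsum_mem_sub_distrib _ _ hS.finite_inter_pos,
    finsum_mem_sub_distrib _ _ hS.finite_nonpos_diff]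
  ring

lemma ballNumber_eq_signedSum (hS : IsJugglingState S) : ballNumber S = signedSum 1 S := by
  rw [ballNumber, signedSum, ← finsum_one, ← finsum_one, Nat.cast_finsum_mem hS.finite_inter_pos,
    Nat.cast_finsum_mem hS.finite_nonpos_diff, Nat.cast_one]
  rfl

lemma eventually_window (hS : IsJugglingState S) :
    ∀ᶠ n in atTop, Iic (-n) ⊆ S ∧ S ⊆ Iic n := by
  obtain ⟨u, hu⟩ := hS.bddAbove
  obtain ⟨l, hl⟩ := hS.bddBelow
  refine eventually_atTop.2 ⟨max (max u (1 - l)) 0, fun n hn => ⟨fun x (hx : x ≤ -n) => ?_, ?_⟩⟩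
  · by_contra hxS
    have : l ≤ x := hl (Or.inr ⟨(by omega : x ≤ 0), hxS⟩)
    omega
  · intro x hx
    rw [mem_Iic]
    by_contra! hxn
    have : x ≤ u := hu (Or.inl ⟨hx, fun h : x ≤ 0 => by omega⟩)
    omega

lemma signedSum_insert (hS : IsJugglingState S) {x : ℤ} (hx : x ∉ S) (g : ℤ → ℤ) :
    signedSum g (insert x S) = signedSum g S + g x := by
  obtain ⟨n, ⟨hnS, hSn⟩, hxn⟩ :=
    (hS.eventually_window.and (eventually_ge_atTop (|x| + 1))).exists
  have hxIoc : x ∈ Ioc (-n) n := ⟨by cases abs_cases x <;> omega, by cases abs_cases x <;> omega⟩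
  have hn : 0 ≤ n := by linarith [abs_nonneg x]
  rw [signedSum_eq_of_window (by omega) hn hnS hSn g,
    signedSum_eq_of_window (by omega) hn (hnS.trans (subset_insert x S))
      (insert_subset hxIoc.2 hSn) g,
    insert_inter_of_mem hxIoc, finsum_mem_insert g (fun h => hx h.1)
      ((finite_Ioc _ _).inter_of_right S)]
  ring

lemma insert (hS : IsJugglingState S) (x : ℤ) : IsJugglingState (insert x S) :=
  hS.of_symmDiff_finite <| (finite_singleton x).subset fun y hy => by
    simp only [mem_symmDiff, mem_insert_iff, mem_singleton_iff] at hy ⊢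
    tauto

lemma signedSum_image_sub_one (hS : IsJugglingState S) (g : ℤ → ℤ) :
    signedSum g ((· - 1) '' S) = signedSum (fun i => g (i - 1)) S - g 0 := by
  obtain ⟨n, ⟨hnS, hSn⟩, hn⟩ := (hS.eventually_window.and (eventually_ge_atTop 1)).exists
  have hnS' : Iic (-n - 1) ⊆ (· - 1) '' S := by
    rw [← image_sub_const_Iic]
    exact image_mono hnS
  have hSn' : (· - 1) '' S ⊆ Iic (n - 1) := by
    rw [← image_sub_const_Iic]
    exact image_mono hSn
  rw [signedSum_eq_of_window (by omega) (by omega) hnS' hSn' g,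
    signedSum_eq_of_window (by omega) (by omega) hnS hSn,
    ← image_sub_const_Ioc, ← image_inter sub_left_injective,
    finsum_mem_image sub_left_injective.injOn, finsum_mem_Ioc_sub_one_left g (by omega)]
  ring

end IsJugglingState

lemma st_eq_image (f : ℤ → ℤ) (t : ℤ) : st f t = (· - t) '' (f '' Iic t) := by
  rw [image_image]
  rfl

lemma st_zero (f : ℤ → ℤ) : st f 0 = f '' {i | i ≤ 0} := by
  simp only [st, sub_zero]

lemma st_add_one (f : ℤ → ℤ) (t : ℤ) :
    st f (t + 1) = (· - 1) '' insert (f (t + 1) - t) (st f t) := by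
  ext x
  simp only [st, mem_image, mem_insert_iff, mem_ofPred_eq]
  constructor
  · rintro ⟨i, hi, rfl⟩
    rcases hi.lt_or_eq with hi | rfl
    · exact ⟨f i - t, Or.inr ⟨i, by omega, rfl⟩, by ring⟩
    · exact ⟨_, Or.inl rfl, by ring⟩
  · rintro ⟨y, rfl | ⟨i, hi, rfl⟩, rfl⟩
    · exact ⟨t + 1, le_rfl, by ring⟩
    · exact ⟨i, by omega, by ring⟩

lemma apply_add_one_sub_notMem_st {f : ℤ → ℤ} (hf : Function.Injective f) (t : ℤ) : f (t + 1) - t ∉ st f t := by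
  rintro ⟨i, hi : i ≤ t, hfi⟩
  have := hf (sub_left_injective hfi)
  omega

namespace IsJugglingFunction

variable {f : ℤ → ℤ}

lemma isJugglingState_image_Iic (hf : IsJugglingFunction f) (t : ℤ) :
    IsJugglingState (f '' Iic t) :=
  hf.2.of_symmDiff_finite <| by
    rw [← image_symmDiff hf.1.injective]
    exact (isJugglingState_Iic t).image f

lemma isJugglingState_st (hf : IsJugglingFunction f) (t : ℤ) : IsJugglingState (st f t) := by
  rw [st_eq_image]
  exact (hf.isJugglingState_image_Iic t).image_sub_const t

lemma signedSum_st_add_one (hf : IsJugglingFunction f) (g : ℤ → ℤ) (t : ℤ) :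
    signedSum g (st f (t + 1))
      = signedSum (fun i => g (i - 1)) (st f t) + g (f (t + 1) - t - 1) - g 0 := by
  have hS := hf.isJugglingState_st t
  have hx := apply_add_one_sub_notMem_st hf.1.injective t
  rw [st_add_one, (hS.insert _).signedSum_image_sub_one, hS.signedSum_insert hx]

lemma ballNumber_st (hf : IsJugglingFunction f) (t : ℤ) : ballNumber (st f t) = av f := by
  have hperiodic : Function.Periodic (fun t => ballNumber (st f t)) 1 := fun t => by
    simp only [(hf.isJugglingState_st _).ballNumber_eq_signedSum, signedSum_st_add_one hf]
    exact add_sub_cancel_right _ _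
  simpa [av, st_zero] using hperiodic.int_mul_eq t

lemma hght_st_add_one (hf : IsJugglingFunction f) (t : ℤ) :
    hght (st f (t + 1)) = hght (st f t) - av f + (f (t + 1) - (t + 1)) := by
  have hS := hf.isJugglingState_st t
  have hshift : signedSum (fun i => id (i - 1)) (st f t) = hght (st f t) - av f := by
    rw [← hf.ballNumber_st t, hS.ballNumber_eq_signedSum, hght_eq_signedSum, ← hS.signedSum_sub]
    rfl
  rw [hght_eq_signedSum, signedSum_st_add_one hf, hshift, id, id]
  ring

end IsJugglingFunction

theorem stmt_2 (f : ℤ → ℤ) (hf : IsJugglingFunction f) (a b : ℤ) (hab : a ≤ b) :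
    IsJugglingState (st f a) ∧ IsJugglingState (st f b) ∧
    ∑ i ∈ Finset.Icc (a + 1) b, (f i - i)
      = (b - a) * av f + hght (st f b) - hght (st f a) := by
  refine ⟨hf.isJugglingState_st a, hf.isJugglingState_st b, ?_⟩
  induction b, hab using Int.leInduction with
  | base => simp
  | succ b hab ih =>
    rw [← Finset.insert_Icc_right_eq_Icc_add_one (by omega), Finset.sum_insert (by simp),
      ih, hf.hght_st_add_one]
    ring
end

section
/- Let S₁ and S₂ be juggling states, each with ball number k. Say that S₂ can follow S₁ if S₂ = {t} ∪ {s−1 : s ∈ S₁} for some integer t ∉ {s−1 : s ∈ S₁}. For a juggling state S with ball number k and j ∈ ℤ, set R_j(S) = k − #{x ∈ S : x > j}, and define r_{ij} = R_{j−i+1}(S_i) for i ∈ {1,2} and j ∈ ℤ. Then S₂ can follow S₁ if and only if both: (a) r_{1j} − r_{2j} ∈ {0,1} for all j ∈ ℤ, and (b) there is no j ∈ ℤ with r_{1j} = r_{2j}, r_{2j} = r_{2(j+1)}, and r_{1(j+1)} = r_{2(j+1)} + 1. -/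
/-- R_j(S) = k − #{x ∈ S : x > j}, for a k-ball juggling state S. -/
noncomputable def Rfun (k : ℤ) (S : Set ℤ) (j : ℤ) : ℤ :=
  k - (({x : ℤ | x ∈ S ∧ j < x}).ncard : ℤ)

open Filter

def CanFollow (S₁ S₂ : Set ℤ) : Prop :=
  ∃ t : ℤ, t ∉ (fun s => s - 1) '' S₁ ∧ S₂ = insert t ((fun s => s - 1) '' S₁)

theorem IsJugglingState.bddAbove {S : Set ℤ} (h : IsJugglingState S) : BddAbove S := by
  refine ((Set.Finite.bddAbove h).union (bddAbove_Iic (a := 0))).mono fun x hx => ?_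
  by_cases hx0 : x ≤ 0
  · exact Or.inr hx0
  · exact Or.inl (Set.mem_symmDiff.2 (Or.inl ⟨hx, hx0⟩))

theorem BddAbove.finite_inter_Ioi {S : Set ℤ} (hS : BddAbove S) (j : ℤ) :
    (S ∩ Set.Ioi j).Finite :=
  BddBelow.finite_of_bddAbove bddBelow_Ioi.inter_of_right (hS.mono Set.inter_subset_left)

open scoped Classical in
theorem Rfun_eq_Rfun_sub_one_add {S : Set ℤ} (hS : BddAbove S) (k m : ℤ) :
    Rfun k S m = Rfun k S (m - 1) + if m ∈ S then 1 else 0 := by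
  unfold Rfun
  split_ifs with hm
  · have : {x | x ∈ S ∧ m - 1 < x} = insert m {x | x ∈ S ∧ m < x} := by
      ext x
      simp only [Set.mem_ofPred_eq, Set.mem_insert_iff]
      constructor
      · rintro ⟨hx, hmx⟩
        rcases (show m ≤ x by omega).eq_or_lt with rfl | h
        exacts [Or.inl rfl, Or.inr ⟨hx, h⟩]
      · rintro (rfl | ⟨hx, hmx⟩)
        exacts [⟨hm, by omega⟩, ⟨hx, by omega⟩]
    rw [this, Set.ncard_insert_of_notMem (s := {x | x ∈ S ∧ m < x}) (by simp)
      (hS.finite_inter_Ioi m)]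
    push_cast
    ring
  · have : {x | x ∈ S ∧ m - 1 < x} = {x | x ∈ S ∧ m < x} := by
      ext x
      simp only [Set.mem_ofPred_eq, and_congr_right_iff]
      intro hx
      have : x ≠ m := fun h => hm (h ▸ hx)
      omega
    rw [this]
    ring

theorem eq_of_forall_Rfun_eq {A B : Set ℤ} (hA : BddAbove A) (hB : BddAbove B) {k : ℤ}
    (h : ∀ m, Rfun k A m = Rfun k B m) : A = B := by
  ext m
  have hAm := Rfun_eq_Rfun_sub_one_add hA k m
  have hBm := Rfun_eq_Rfun_sub_one_add hB k m
  rw [h, h] at hAm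
  split_ifs at hAm hBm <;> simp_all

theorem Rfun_image_sub_one (S : Set ℤ) (k m : ℤ) :
    Rfun k ((fun s => s - 1) '' S) m = Rfun k S (m + 1) := by
  have : {x | x ∈ (fun s => s - 1) '' S ∧ m < x} =
      (fun s => s - 1) '' {x | x ∈ S ∧ m + 1 < x} := by
    ext x
    simp only [Set.mem_ofPred_eq, Set.mem_image]
    constructor
    · rintro ⟨⟨s, hs, rfl⟩, hx⟩
      exact ⟨s, ⟨hs, by omega⟩, rfl⟩
    · rintro ⟨s, ⟨hs, hsm⟩, rfl⟩
      exact ⟨⟨s, hs, rfl⟩, by omega⟩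
  rw [Rfun, Rfun, this, Set.ncard_image_of_injective _ (sub_left_injective (b := 1))]

open scoped Classical in
theorem Rfun_insert {T : Set ℤ} (hT : BddAbove T) {t : ℤ} (ht : t ∉ T) (k m : ℤ) :
    Rfun k (insert t T) m = Rfun k T m - if m < t then 1 else 0 := by
  unfold Rfun
  split_ifs with hm
  · have : {x | x ∈ insert t T ∧ m < x} = insert t {x | x ∈ T ∧ m < x} := by
      ext x
      simp only [Set.mem_ofPred_eq, Set.mem_insert_iff]
      constructor
      · rintro ⟨rfl | hx, hmx⟩
        exacts [Or.inl rfl, Or.inr ⟨hx, hmx⟩]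
      · rintro (rfl | ⟨hx, hmx⟩)
        exacts [⟨Or.inl rfl, hm⟩, ⟨Or.inr hx, hmx⟩]
    rw [this, Set.ncard_insert_of_notMem (s := {x | x ∈ T ∧ m < x}) (fun h => ht h.1)
      (hT.finite_inter_Ioi m)]
    push_cast
    ring
  · have : {x | x ∈ insert t T ∧ m < x} = {x | x ∈ T ∧ m < x} := by
      ext x
      simp only [Set.mem_ofPred_eq, Set.mem_insert_iff, and_congr_left_iff, or_iff_right_iff_imp]
      rintro hmx rfl
      exact absurd hmx hm
    rw [this]
    ring

theorem canFollow_iff_exists_Rfun_sub_eq {S₁ S₂ : Set ℤ} (hS₁ : BddAbove S₁) (hS₂ : BddAbove S₂)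
    (k : ℤ) :
    CanFollow S₁ S₂ ↔ ∃ t, ∀ j, Rfun k S₁ j - Rfun k S₂ (j - 1) = if j ≤ t then 1 else 0 := by
  set T := (fun s => s - 1) '' S₁
  have hT : BddAbove T := Monotone.map_bddAbove (fun _ _ h => sub_le_sub_right h 1) hS₁
  have hRT : ∀ m, Rfun k T m = Rfun k S₁ (m + 1) := Rfun_image_sub_one S₁ k
  constructor
  · rintro ⟨t, ht, rfl⟩
    refine ⟨t, fun j => ?_⟩
    rw [Rfun_insert hT ht, hRT, sub_add_cancel]
    split_ifs <;> omega
  · rintro ⟨t, hd⟩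
    have hdT (m : ℤ) : Rfun k T m - Rfun k S₂ m = if m < t then 1 else 0 := by
      simpa only [hRT, add_sub_cancel_right, Int.add_one_le_iff] using hd (m + 1)
    have ht : t ∉ T := by
      have hTt := Rfun_eq_Rfun_sub_one_add hT k t
      have hS₂t := Rfun_eq_Rfun_sub_one_add hS₂ k t
      have hd₀ := hdT t
      have hd₁ := hdT (t - 1)
      split_ifs at hTt hS₂t hd₀ hd₁ <;> omega
    refine ⟨t, ht, eq_of_forall_Rfun_eq hS₂ (hT.insert t) (k := k) fun m => ?_⟩
    have := hdT m
    rw [Rfun_insert hT ht]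
    omega

theorem BddAbove.eventually_Rfun_eq {S : Set ℤ} (hS : BddAbove S) (k : ℤ) :
    ∀ᶠ m in atTop, Rfun k S m = k := by
  obtain ⟨M, hM⟩ := hS
  filter_upwards [eventually_ge_atTop M] with m hm
  have : {x | x ∈ S ∧ m < x} = ∅ :=
    Set.eq_empty_of_forall_notMem fun x ⟨hx, hmx⟩ => (hM hx).not_gt (hm.trans_lt hmx)
  simp [Rfun, this]

theorem IsJugglingState.eventually_Rfun_eq {S : Set ℤ} (h : IsJugglingState S) (k : ℤ) :
    ∀ᶠ m in atBot, Rfun k S m = k - ballNumber S + m := by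
  unfold Rfun ballNumber
  set P := S ∩ {i : ℤ | 0 < i}
  set Q := {i : ℤ | i ≤ 0} \ S
  have hP : P.Finite := h.subset fun x hx => Set.mem_symmDiff.2 (Or.inl ⟨hx.1, by simpa using hx.2⟩)
  have hQ : Q.Finite := h.subset fun x hx => Set.mem_symmDiff.2 (Or.inr hx)
  obtain ⟨N, hN⟩ := hQ.bddBelow
  filter_upwards [eventually_lt_atBot N, eventually_le_atBot 0] with m hmN hm0
  -- no hole of `S` lies at or below `m`, so `(m, 0]` splits into elements of `S` and holes
  have hunion : {x | x ∈ S ∧ m < x} ∪ Q = P ∪ Set.Ioc m 0 := by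
    ext x
    by_cases hxS : x ∈ S
    · simp only [P, Q, Set.mem_union, Set.mem_ofPred_eq, Set.mem_inter_iff, Set.mem_sdiff,
        Set.mem_Ioc, hxS, true_and, not_true_eq_false, and_false, or_false]
      omega
    · have hNx : x ≤ 0 → N ≤ x := fun hx0 => hN ⟨hx0, hxS⟩
      simp only [P, Q, Set.mem_union, Set.mem_ofPred_eq, Set.mem_inter_iff, Set.mem_sdiff,
        Set.mem_Ioc, hxS, false_and, not_false_eq_true, and_true, false_or, iff_and_self]
      omega
  have hcard := congrArg Set.ncard hunion
  rw [Set.ncard_union_eq (Set.disjoint_left.2 fun x hx hxQ => hxQ.2 hx.1)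
      (s := {x | x ∈ S ∧ m < x}) (h.bddAbove.finite_inter_Ioi m) hQ,
    Set.ncard_union_eq (Set.disjoint_left.2 fun x hx hxI => (hx.2.trans_le hxI.2).false) hP
      (Set.finite_Ioc m 0),
    ← Finset.coe_Ioc, Set.ncard_coe_finset, Int.card_Ioc] at hcard
  omega

theorem exists_eq_ite_le_of_antitone {f : ℤ → ℤ} (hf : Antitone f)
    (h01 : ∀ m, f m = 0 ∨ f m = 1) (hzero : ∃ m, f m = 0) (hone : ∃ m, f m = 1) :
    ∃ t, ∀ m, f m = if m ≤ t then 1 else 0 := by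
  obtain ⟨m₀, hm₀⟩ := hzero
  have hbdd : ∃ b, ∀ z, f z = 1 → z ≤ b := ⟨m₀, fun z hz => by
    by_contra! hlt
    have := hf hlt.le
    omega⟩
  obtain ⟨t, ht, hmax⟩ := Int.exists_greatest_of_bdd hbdd hone
  refine ⟨t, fun m => ?_⟩
  split_ifs with hm
  · have := hf hm
    rcases h01 m with h | h <;> omega
  · exact (h01 m).resolve_right fun h => hm (hmax m h)

theorem antitone_Rfun_sub {S₁ S₂ : Set ℤ} (hS₁ : BddAbove S₁) (hS₂ : BddAbove S₂) (k : ℤ)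
    (h01 : ∀ j, Rfun k S₁ j - Rfun k S₂ (j - 1) = 0 ∨ Rfun k S₁ j - Rfun k S₂ (j - 1) = 1)
    (hjump : ¬ ∃ j, Rfun k S₁ j = Rfun k S₂ (j - 1) ∧ Rfun k S₂ (j - 1) = Rfun k S₂ j ∧
      Rfun k S₁ (j + 1) = Rfun k S₂ j + 1) :
    Antitone fun j => Rfun k S₁ j - Rfun k S₂ (j - 1) := by
  refine antitone_int_of_succ_le fun j => ?_
  have hstep₁ := Rfun_eq_Rfun_sub_one_add hS₁ k (j + 1)
  have hstep₂ := Rfun_eq_Rfun_sub_one_add hS₂ k j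
  have hdj := h01 j
  have hdj₁ := h01 (j + 1)
  rw [add_sub_cancel_right] at hstep₁ hdj₁ ⊢
  by_contra! hlt
  refine hjump ⟨j, ?_, ?_, ?_⟩ <;> split_ifs at hstep₁ hstep₂ <;> omega

theorem stmt_3 (k : ℤ) (S₁ S₂ : Set ℤ)
    (h₁ : IsJugglingState S₁) (h₂ : IsJugglingState S₂)
    (hb₁ : ballNumber S₁ = k) (hb₂ : ballNumber S₂ = k) :
    -- S₂ can follow S₁ : S₂ = {t} ∪ {s − 1 : s ∈ S₁} for some t ∉ {s − 1 : s ∈ S₁}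
    (∃ t : ℤ, t ∉ (fun s => s - 1) '' S₁ ∧ S₂ = insert t ((fun s => s - 1) '' S₁)) ↔
      -- (a): r_{1j} − r_{2j} ∈ {0,1} for all j, where r_{ij} = R_{j−i+1}(S_i)
      ((∀ j : ℤ, Rfun k S₁ j - Rfun k S₂ (j - 1) = 0 ∨
          Rfun k S₁ j - Rfun k S₂ (j - 1) = 1) ∧
        -- (b): no j with r_{1j} = r_{2j} = r_{2(j+1)} = r_{1(j+1)} − 1
        ¬ ∃ j : ℤ, Rfun k S₁ j = Rfun k S₂ (j - 1) ∧
          Rfun k S₂ (j - 1) = Rfun k S₂ j ∧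
          Rfun k S₁ (j + 1) = Rfun k S₂ j + 1) := by
  have hS₁ := h₁.bddAbove
  have hS₂ := h₂.bddAbove
  change CanFollow S₁ S₂ ↔ _
  rw [canFollow_iff_exists_Rfun_sub_eq hS₁ hS₂ k]
  constructor
  · rintro ⟨t, hd⟩
    refine ⟨fun j => ?_, ?_⟩
    · rw [hd j]
      split_ifs <;> simp
    · rintro ⟨j, hj, -, hj₁⟩
      have hdj := hd j
      have hdj₁ := hd (j + 1)
      rw [add_sub_cancel_right] at hdj₁
      split_ifs at hdj hdj₁ <;> omega
  · rintro ⟨h01, hjump⟩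
    refine exists_eq_ite_le_of_antitone (antitone_Rfun_sub hS₁ hS₂ k h01 hjump) h01 ?_ ?_
    · obtain ⟨M₁, hM₁⟩ := eventually_atTop.1 (hS₁.eventually_Rfun_eq k)
      obtain ⟨M₂, hM₂⟩ := eventually_atTop.1 (hS₂.eventually_Rfun_eq k)
      exact ⟨max M₁ (M₂ + 1), by rw [hM₁ _ (le_max_left _ _), hM₂ _ (by omega), sub_self]⟩
    · obtain ⟨N₁, hN₁⟩ := eventually_atBot.1 (h₁.eventually_Rfun_eq k)
      obtain ⟨N₂, hN₂⟩ := eventually_atBot.1 (h₂.eventually_Rfun_eq k)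
      exact ⟨min N₁ N₂, by rw [hN₁ _ (min_le_left _ _), hN₂ _ (by omega), hb₁, hb₂]; ring⟩
end

section
/- Bound(k,n) is a lower order ideal of S̃_n^k in the affine Bruhat order: if f ∈ Bound(k,n) and g ∈ S̃_n^k satisfies g ≤ f in the affine Bruhat order, then g ∈ Bound(k,n). -/
/-- An (extended) affine permutation of period n: a bijection ℤ → ℤ with
f(i+n) = f(i)+n for all i. -/
def IsAffinePerm (n : ℕ) (f : ℤ → ℤ) : Prop :=
  Function.Bijective f ∧ ∀ i : ℤ, f (i + n) = f i + n

/-- f ∈ S̃_n^k : the affine permutation f has ball number (average) k,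
i.e. Σ_{i=1}^n (f(i) − i) = k·n. -/
def HasAv (n : ℕ) (k : ℤ) (f : ℤ → ℤ) : Prop :=
  ∑ i ∈ Finset.Icc (1 : ℤ) (n : ℤ), (f i - i) = k * n

/-- The length of an affine permutation: the number of pairs (i,j) with
1 ≤ i ≤ n, i < j and f(i) > f(j). -/
noncomputable def alen (n : ℕ) (f : ℤ → ℤ) : ℕ :=
  {p : ℤ × ℤ | 1 ≤ p.1 ∧ p.1 ≤ (n : ℤ) ∧ p.1 < p.2 ∧ f p.2 < f p.1}.ncard

/-- The affine transposition τ_{ab} (a < b, n ∤ b−a): exchanges a+rn and b+rn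
for all r ∈ ℤ and fixes everything else. -/
def affTrans (n : ℕ) (a b : ℤ) : ℤ → ℤ := fun i =>
  if (n : ℤ) ∣ (i - a) then b + (i - a)
  else if (n : ℤ) ∣ (i - b) then a + (i - b)
  else i

/-- One step of the affine Bruhat order: g < g·τ_{ab} whenever the length increases. -/
def affBruhatStep (n : ℕ) (g h : ℤ → ℤ) : Prop :=
  ∃ a b : ℤ, a < b ∧ ¬ ((n : ℤ) ∣ (b - a)) ∧
    h = g ∘ affTrans n a b ∧ alen n g < alen n h

/-- The affine Bruhat order: the partial order generated by the steps above. -/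
def affBruhatLE (n : ℕ) (g f : ℤ → ℤ) : Prop :=
  Relation.ReflTransGen (affBruhatStep n) g f

/-- Bounded affine permutation: i ≤ f(i) ≤ i + n for all i. -/
def IsBounded (n : ℕ) (f : ℤ → ℤ) : Prop := ∀ i : ℤ, i ≤ f i ∧ f i ≤ i + n

/-!
If `g < g ∘ τ_{ab}` is a Bruhat step with `a < b`, then `g a < g b`. Otherwise the map that fixes
the inversions of `g ∘ τ_{ab}` reversed by `τ_{ab}` and sends every other one to its image under
`τ_{ab}`, translated by a multiple of `n` back into the window `[1, n]`, injects the inversions of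
`g ∘ τ_{ab}` into those of `g`, so the length could not go up. Once `g a < g b`, boundedness of
`g ∘ τ_{ab}` at `a` and `b` reads `b ≤ g a < g b ≤ a + n`, which is boundedness of `g` on the
residue classes of `a` and `b`; on every other class `g` agrees with `g ∘ τ_{ab}`. Induction along
the chain of Bruhat steps finishes the proof.
-/

section
variable {n : ℕ}

theorem map_add_of_dvd {f : ℤ → ℤ} (hf : ∀ i, f (i + n) = f i + n) {d : ℤ}
    (hd : (n : ℤ) ∣ d) (x : ℤ) : f (x + d) = f x + d := by
  obtain ⟨m, rfl⟩ := hd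
  have hper : Function.Periodic (fun i => f i - i) (n : ℤ) := fun i => by
    simp only [hf, add_sub_add_right_eq_sub]
  have := hper.int_mul m x
  rw [Int.cast_id, mul_comm] at this
  linarith

theorem eq_of_dvd_sub_of_mem_Icc {x y : ℤ} (hx : x ∈ Set.Icc 1 (n : ℤ))
    (hy : y ∈ Set.Icc 1 (n : ℤ)) (h : (n : ℤ) ∣ x - y) : x = y := by
  have hxy : |x - y| < n := abs_sub_lt_iff.mpr ⟨by linarith [hx.2, hy.1], by linarith [hx.1, hy.2]⟩
  linarith [Int.eq_zero_of_abs_lt_dvd h hxy]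

theorem add_mul_ediv_mem_Icc (hn : 0 < n) (x : ℤ) :
    x + n * ((n - x) / n) ∈ Set.Icc 1 (n : ℤ) := by
  have hdef := Int.emod_def (n - x) n
  have h0 := Int.emod_nonneg (n - x) (by omega : (n : ℤ) ≠ 0)
  have h1 := Int.emod_lt_of_pos (n - x) (by omega : (0 : ℤ) < n)
  constructor <;> linarith

section Transposition

variable {a b x : ℤ}

theorem affTrans_of_dvd_sub_left (h : (n : ℤ) ∣ x - a) : affTrans n a b x = b + (x - a) :=
  if_pos h

theorem affTrans_of_dvd_sub_right (hnd : ¬ (n : ℤ) ∣ b - a) (h : (n : ℤ) ∣ x - b) :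
    affTrans n a b x = a + (x - b) := by
  have ha : ¬ (n : ℤ) ∣ x - a := fun ha => hnd (by simpa using dvd_sub ha h)
  simp only [affTrans, if_neg ha, if_pos h]

theorem affTrans_of_not_dvd (ha : ¬ (n : ℤ) ∣ x - a) (hb : ¬ (n : ℤ) ∣ x - b) :
    affTrans n a b x = x := by
  simp only [affTrans, if_neg ha, if_neg hb]

theorem affTrans_left : affTrans n a b a = b := by
  simp [affTrans_of_dvd_sub_left]

theorem affTrans_right (hnd : ¬ (n : ℤ) ∣ b - a) : affTrans n a b b = a := by
  simp [affTrans_of_dvd_sub_right hnd]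

theorem affTrans_involutive (hnd : ¬ (n : ℤ) ∣ b - a) : Function.Involutive (affTrans n a b) := by
  intro x
  by_cases ha : (n : ℤ) ∣ x - a
  · rw [affTrans_of_dvd_sub_left ha, affTrans_of_dvd_sub_right hnd (by simpa using ha)]
    ring
  by_cases hb : (n : ℤ) ∣ x - b
  · rw [affTrans_of_dvd_sub_right hnd hb, affTrans_of_dvd_sub_left (by simpa using hb)]
    ring
  rw [affTrans_of_not_dvd ha hb, affTrans_of_not_dvd ha hb]

theorem affTrans_add_self (x : ℤ) : affTrans n a b (x + n) = affTrans n a b x + n := by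
  simp only [affTrans, show ∀ c, x + n - c = x - c + n by intro c; ring, dvd_add_self_right]
  split_ifs <;> ring

theorem abs_affTrans_sub_le (hab : a < b) (hnd : ¬ (n : ℤ) ∣ b - a) (x : ℤ) :
    |affTrans n a b x - x| ≤ b - a := by
  rw [abs_le]
  by_cases ha : (n : ℤ) ∣ x - a
  · rw [affTrans_of_dvd_sub_left ha]; constructor <;> linarith
  by_cases hb : (n : ℤ) ∣ x - b
  · rw [affTrans_of_dvd_sub_right hnd hb]; constructor <;> linarith
  rw [affTrans_of_not_dvd ha hb]; constructor <;> linarith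

end Transposition

def inversionSet (n : ℕ) (f : ℤ → ℤ) : Set (ℤ × ℤ) :=
  {p | 1 ≤ p.1 ∧ p.1 ≤ (n : ℤ) ∧ p.1 < p.2 ∧ f p.2 < f p.1}

theorem alen_eq_ncard_inversionSet (f : ℤ → ℤ) : alen n f = (inversionSet n f).ncard := rfl

theorem inversionSet_finite_of_abs_sub_le {f : ℤ → ℤ} {C : ℤ} (hf : ∀ x, |f x - x| ≤ C) :
    (inversionSet n f).Finite := by
  refine ((Set.finite_Icc 1 (n : ℤ)).prod (Set.finite_Icc 1 (n + 2 * C))).subset ?_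
  rintro ⟨i, j⟩ ⟨hi1, hin, hij, hfji⟩
  have hi := abs_le.mp (hf i)
  have hj := abs_le.mp (hf j)
  exact ⟨⟨hi1, hin⟩, by linarith, by linarith⟩

section Inversions

variable {a b : ℤ} {g : ℤ → ℤ}

theorem comp_affTrans_le_of_not_dvd (hg : ∀ i, g (i + n) = g i + n) (hba : g b ≤ g a) {x : ℤ}
    (hx : ¬ (n : ℤ) ∣ x - b) : g (affTrans n a b x) ≤ g x := by
  by_cases ha : (n : ℤ) ∣ x - a
  · have hgx : g x = g a + (x - a) := by simpa using map_add_of_dvd hg ha a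
    rw [affTrans_of_dvd_sub_left ha, map_add_of_dvd hg ha, hgx]
    linarith
  · rw [affTrans_of_not_dvd ha hx]

theorem le_comp_affTrans_of_not_dvd (hg : ∀ i, g (i + n) = g i + n) (hnd : ¬ (n : ℤ) ∣ b - a)
    (hba : g b ≤ g a) {x : ℤ} (hx : ¬ (n : ℤ) ∣ x - a) : g x ≤ g (affTrans n a b x) := by
  by_cases hb : (n : ℤ) ∣ x - b
  · have hgx : g x = g b + (x - b) := by simpa using map_add_of_dvd hg hb b
    rw [affTrans_of_dvd_sub_right hnd hb, map_add_of_dvd hg hb, hgx]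
    linarith
  · rw [affTrans_of_not_dvd hx hb]

theorem mem_inversionSet_of_affTrans_gt (hg : ∀ i, g (i + n) = g i + n) (hab : a < b)
    (hnd : ¬ (n : ℤ) ∣ b - a) (hba : g b ≤ g a) {i j : ℤ}
    (hij : (i, j) ∈ inversionSet n (g ∘ affTrans n a b))
    (hτ : affTrans n a b j < affTrans n a b i) : (i, j) ∈ inversionSet n g := by
  obtain ⟨hi1, hin, hlt, hgτ⟩ := hij
  have hτi := abs_le.mp (abs_affTrans_sub_le hab hnd i)
  have hτj := abs_le.mp (abs_affTrans_sub_le hab hnd j)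
  have hib : ¬ (n : ℤ) ∣ i - b := fun h => by
    rw [affTrans_of_dvd_sub_right hnd h] at hτ
    linarith
  have hja : ¬ (n : ℤ) ∣ j - a := fun h => by
    rw [affTrans_of_dvd_sub_left h] at hτ
    linarith
  refine ⟨hi1, hin, hlt, ?_⟩
  calc g j ≤ g (affTrans n a b j) := le_comp_affTrans_of_not_dvd hg hnd hba hja
    _ < g (affTrans n a b i) := hgτ
    _ ≤ g i := comp_affTrans_le_of_not_dvd hg hba hib

theorem mem_inversionSet_of_affTrans_lt (hn : 0 < n) (hg : ∀ i, g (i + n) = g i + n) {i j : ℤ}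
    (hij : (i, j) ∈ inversionSet n (g ∘ affTrans n a b))
    (hτ : affTrans n a b i < affTrans n a b j) :
    (affTrans n a b i + n * ((n - affTrans n a b i) / n),
      affTrans n a b j + n * ((n - affTrans n a b i) / n)) ∈ inversionSet n g := by
  obtain ⟨-, -, -, hgτ⟩ := hij
  have hdvd := dvd_mul_right (n : ℤ) ((n - affTrans n a b i) / n)
  obtain ⟨h1, h2⟩ := add_mul_ediv_mem_Icc hn (affTrans n a b i)
  refine ⟨h1, h2, by linarith, ?_⟩
  simpa only [map_add_of_dvd hg hdvd, add_lt_add_iff_right, Function.comp_apply] using hgτ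

theorem alen_comp_affTrans_le (hn : 0 < n) (hab : a < b)
    (hnd : ¬ (n : ℤ) ∣ b - a) (hg : ∀ i, g (i + n) = g i + n)
    (hfin : (inversionSet n g).Finite) (hba : g b ≤ g a) :
    alen n (g ∘ affTrans n a b) ≤ alen n g := by
  rw [alen_eq_ncard_inversionSet, alen_eq_ncard_inversionSet]
  set τ := affTrans n a b
  have hτ : Function.Involutive τ := affTrans_involutive hnd
  have hττ : ∀ x, τ (τ x) = x := hτ
  set s : ℤ → ℤ := fun x => n * ((n - x) / n)
  have hs : ∀ x, (n : ℤ) ∣ s x := fun x => dvd_mul_right _ _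
  have hτs : ∀ x y, τ (x + s y) = τ x + s y := fun x y =>
    map_add_of_dvd affTrans_add_self (hs y) x
  let φ : ℤ × ℤ → ℤ × ℤ := fun p =>
    if τ p.1 < τ p.2 then (τ p.1 + s (τ p.1), τ p.2 + s (τ p.1)) else p
  have key : ∀ p ∈ inversionSet n (g ∘ τ), ∀ q ∈ inversionSet n (g ∘ τ),
      τ p.1 < τ p.2 → φ p = φ q → p = q := by
    rintro ⟨i, j⟩ ⟨hi1, hin, hij : i < j, -⟩ ⟨i', j'⟩ ⟨hi1', hin', -, -⟩ hp hφ
    simp only [φ, if_pos hp] at hφ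
    split_ifs at hφ with hq
    · obtain ⟨hφ1, hφ2⟩ := Prod.mk.inj hφ
      have hi : i + s (τ i) = i' + s (τ i') := by
        simpa only [hτs, hττ] using congrArg τ hφ1
      have hii' : i = i' := eq_of_dvd_sub_of_mem_Icc ⟨hi1, hin⟩ ⟨hi1', hin'⟩
        (by rw [show i - i' = s (τ i') - s (τ i) by linarith]; exact dvd_sub (hs _) (hs _))
      subst hii'
      exact Prod.ext rfl (hτ.injective (by linarith))
    · obtain ⟨rfl, rfl⟩ := Prod.mk.inj hφ
      simp only [hτs, hττ, add_lt_add_iff_right] at hq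
      exact absurd hij hq
  refine Set.ncard_le_ncard_of_injOn φ ?_ ?_ hfin
  · rintro ⟨i, j⟩ hp
    by_cases h : τ i < τ j
    · simpa only [φ, if_pos h] using mem_inversionSet_of_affTrans_lt hn hg hp h
    · simpa only [φ, if_neg h] using mem_inversionSet_of_affTrans_gt hg hab hnd hba hp
        (lt_of_le_of_ne (not_lt.mp h) (hτ.injective.ne (ne_of_gt hp.2.2.1)))
  · intro p hp q hq hφ
    by_cases h : τ p.1 < τ p.2
    · exact key p hp q hq h hφ
    by_cases h' : τ q.1 < τ q.2
    · exact (key q hq p hp h' hφ.symm).symm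
    simpa only [φ, if_neg h, if_neg h'] using hφ

end Inversions

theorem map_add_self_of_affBruhatStep {g h : ℤ → ℤ} (hg : ∀ i, g (i + n) = g i + n)
    (hs : affBruhatStep n g h) (i : ℤ) : h (i + n) = h i + n := by
  obtain ⟨a, b, -, -, rfl, -⟩ := hs
  simp only [Function.comp_apply, affTrans_add_self, hg]

theorem IsBounded.of_affBruhatStep (hn : 0 < n) {g h : ℤ → ℤ} (hg : ∀ i, g (i + n) = g i + n)
    (hs : affBruhatStep n g h) (hh : IsBounded n h) : IsBounded n g := by
  obtain ⟨a, b, hab, hnd, rfl, hlen⟩ := hs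
  have hττ : ∀ x, affTrans n a b (affTrans n a b x) = x := affTrans_involutive hnd
  have hfin : (inversionSet n g).Finite := by
    refine inversionSet_finite_of_abs_sub_le (C := n + (b - a)) fun x => ?_
    have hτx := abs_le.mp (abs_affTrans_sub_le hab hnd x)
    have hgx := hh (affTrans n a b x)
    simp only [Function.comp_apply, hττ] at hgx
    exact abs_le.mpr ⟨by linarith, by linarith⟩
  have hgab : g a < g b := lt_of_not_ge fun hba =>
    hlen.not_ge (alen_comp_affTrans_le hn hab hnd hg hfin hba)
  have ha := hh a
  have hb := hh b
  simp only [Function.comp_apply, affTrans_left, affTrans_right hnd] at ha hb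
  have of_class : ∀ r x, (n : ℤ) ∣ x - r → r ≤ g r → g r ≤ r + n → x ≤ g x ∧ g x ≤ x + n := by
    intro r x hr h1 h2
    have hgx : g x = g r + (x - r) := by simpa using map_add_of_dvd hg hr r
    constructor <;> linarith
  intro x
  by_cases hxa : (n : ℤ) ∣ x - a
  · exact of_class a x hxa (by linarith) (by linarith)
  by_cases hxb : (n : ℤ) ∣ x - b
  · exact of_class b x hxb (by linarith) (by linarith)
  simpa only [Function.comp_apply, affTrans_of_not_dvd hxa hxb] using hh x

theorem IsBounded.of_affBruhatLE (hn : 0 < n) {g f : ℤ → ℤ} (hg : ∀ i, g (i + n) = g i + n)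
    (hle : affBruhatLE n g f) (hf : IsBounded n f) : IsBounded n g := by
  induction hle using Relation.ReflTransGen.head_induction_on with
  | refl => exact hf
  | head hs _ ih =>
    exact IsBounded.of_affBruhatStep hn hg hs (ih (map_add_self_of_affBruhatStep hg hs))

end

theorem stmt_4_general (n : ℕ) (hn : 1 ≤ n)
    (f g : ℤ → ℤ)
    (hg : IsAffinePerm n g)
    (hfb : IsBounded n f)
    (hle : affBruhatLE n g f) :
    IsBounded n g :=
  IsBounded.of_affBruhatLE hn hg.2 hle hfb

theorem stmt_4 (n : ℕ) (k : ℤ) (hn : 1 ≤ n) (hk0 : 0 ≤ k) (hkn : k ≤ n)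
    (f g : ℤ → ℤ)
    (hf : IsAffinePerm n f) (hg : IsAffinePerm n g)
    (hfk : HasAv n k f) (hgk : HasAv n k g)
    (hfb : IsBounded n f)
    (hle : affBruhatLE n g f) :
    IsBounded n g :=
  stmt_4_general n hn f g hg hfb hle
end

section
/- Let u, w ∈ S_n with u ≤ w in Bruhat order. If w is Grassmannian, or if u is anti-Grassmannian, then u ≤_k w in the k-Bruhat order. -/
/-- The number of inversions of a permutation of Fin n (positions 0,…,n−1
correspond to 1,…,n). -/
def len (n : ℕ) (w : Equiv.Perm (Fin n)) : ℕ :=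
  ((Finset.univ : Finset (Fin n × Fin n)).filter fun p => p.1 < p.2 ∧ w p.2 < w p.1).card

/-- The Bruhat order on S_n: generated by u < u·(a b) when the length increases. -/
def bruhatLE (n : ℕ) (u w : Equiv.Perm (Fin n)) : Prop :=
  Relation.ReflTransGen
    (fun x y => (∃ a b : Fin n, y = x * Equiv.swap a b) ∧ len n x < len n y) u w

/-- A Bruhat cover: u < w and ℓ(w) = ℓ(u) + 1. -/
def bruhatCover (n : ℕ) (u w : Equiv.Perm (Fin n)) : Prop :=
  bruhatLE n u w ∧ u ≠ w ∧ len n w = len n u + 1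

/-- σ_k(w) = w([k]) = {w(1),…,w(k)} (0-based: image of {i | i < k}). -/
def sigmaSet (n k : ℕ) (w : Equiv.Perm (Fin n)) : Finset (Fin n) :=
  (Finset.univ.filter fun i : Fin n => (i : ℕ) < k).image w

/-- A k-cover: a Bruhat cover with u([k]) ≠ w([k]). -/
def kCover (n k : ℕ) (u w : Equiv.Perm (Fin n)) : Prop :=
  bruhatCover n u w ∧ sigmaSet n k u ≠ sigmaSet n k w

/-- The k-Bruhat order: generated by k-covers. -/
def kBruhatLE (n k : ℕ) (u w : Equiv.Perm (Fin n)) : Prop :=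
  Relation.ReflTransGen (kCover n k) u w

/-- Grassmannian permutation: increasing on the first k and on the last n−k positions. -/
def IsGrassmannian (n k : ℕ) (w : Equiv.Perm (Fin n)) : Prop :=
  ∀ i j : Fin n, i < j → ((j : ℕ) < k ∨ k ≤ (i : ℕ)) → w i < w j

/-- Anti-Grassmannian permutation: decreasing on the first k and on the last n−k positions. -/
def IsAntiGrassmannian (n k : ℕ) (w : Equiv.Perm (Fin n)) : Prop :=
  ∀ i j : Fin n, i < j → ((j : ℕ) < k ∨ k ≤ (i : ℕ)) → w j < w i

/-- Membership in the parabolic subgroup S_k × S_{n−k}: z maps [k] to [k]. -/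
def InParabolic (n k : ℕ) (z : Equiv.Perm (Fin n)) : Prop :=
  ∀ i : Fin n, ((i : ℕ) < k ↔ (z i : ℕ) < k)

open Finset Equiv

namespace SA

variable {n k : ℕ}


/-- number of i < r with u i ≥ m -/
def Dm (n : ℕ) (u : Equiv.Perm (Fin n)) (r m : ℕ) : ℕ :=
  ((Finset.univ : Finset (Fin n)).filter fun i : Fin n => (i : ℕ) < r ∧ m ≤ ((u i : ℕ))).card

def Mid (n : ℕ) (u : Equiv.Perm (Fin n)) (r1 r2 m : ℕ) : ℕ :=
  ((Finset.univ : Finset (Fin n)).filter fun i : Fin n => r1 ≤ (i : ℕ) ∧ (i : ℕ) < r2 ∧ m ≤ ((u i : ℕ))).card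

lemma Dm_split (u : Equiv.Perm (Fin n)) {r1 r2 : ℕ} (m : ℕ) (h : r1 ≤ r2) :
    Dm n u r2 m = Dm n u r1 m + Mid n u r1 r2 m := by
  rw [Dm, Dm, Mid, ← card_union_of_disjoint ?_]
  · congr 1
    rw [← filter_or]
    exact filter_congr fun i _ => by constructor <;> intro h' <;> omega
  · refine Finset.disjoint_left.mpr ?_
    intro i hi hj
    simp only [mem_filter] at hi hj
    omega

def Dom (n : ℕ) (u w : Equiv.Perm (Fin n)) : Prop := ∀ r m : ℕ, Dm n u r m ≤ Dm n w r m

lemma Dm_mul_swap (x : Equiv.Perm (Fin n)) (a b : Fin n) (hab : a < b) (hv : x a < x b)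
    (r m : ℕ) :
    Dm n (x * Equiv.swap a b) r m
      = Dm n x r m + (if (a : ℕ) < r ∧ r ≤ (b : ℕ) ∧ ((x a : ℕ)) < m ∧ m ≤ ((x b : ℕ)) then 1 else 0) := by
  have hne : a ≠ b := ne_of_lt hab
  have hya : (x * Equiv.swap a b) a = x b := by simp [Equiv.Perm.mul_apply]
  have hyb : (x * Equiv.swap a b) b = x a := by simp [Equiv.Perm.mul_apply]
  have hyo : ∀ i : Fin n, i ≠ a → i ≠ b → (x * Equiv.swap a b) i = x i := by
    intro i h1 h2
    simp [Equiv.Perm.mul_apply, Equiv.swap_apply_of_ne_of_ne h1 h2]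
  rw [Dm, Dm, Finset.card_filter, Finset.card_filter]
  have hmemb : b ∈ (Finset.univ : Finset (Fin n)) := mem_univ b
  have hmema : a ∈ (Finset.univ : Finset (Fin n)).erase b :=
    Finset.mem_erase.mpr ⟨hne, mem_univ a⟩
  rw [← Finset.add_sum_erase _ _ hmemb, ← Finset.add_sum_erase _ _ hmema]
  conv_rhs => rw [← Finset.add_sum_erase _ _ hmemb, ← Finset.add_sum_erase _ _ hmema]
  have hcong : ∀ i ∈ (((Finset.univ : Finset (Fin n)).erase b).erase a),
      (if (i : ℕ) < r ∧ m ≤ (((x * Equiv.swap a b) i : ℕ)) then 1 else 0)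
        = (if (i : ℕ) < r ∧ m ≤ ((x i : ℕ)) then (1:ℕ) else 0) := by
    intro i hi
    rw [Finset.mem_erase, Finset.mem_erase] at hi
    rw [hyo i hi.1 hi.2.1]
  rw [Finset.sum_congr rfl hcong, hya, hyb]
  have h1 : (a : ℕ) < (b : ℕ) := hab
  have h2 : ((x a : ℕ)) < ((x b : ℕ)) := hv
  split_ifs <;> omega


def InvS (n : ℕ) (z : Equiv.Perm (Fin n)) : Finset (Fin n × Fin n) :=
  (Finset.univ : Finset (Fin n × Fin n)).filter fun p => p.1 < p.2 ∧ z p.2 < z p.1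

lemma len_def (z : Equiv.Perm (Fin n)) : len n z = (InvS n z).card := rfl

def Fmap (x : Equiv.Perm (Fin n)) (a b : Fin n) : Fin n × Fin n → Fin n × Fin n :=
  fun p => (if p.1 = b ∧ x a < x p.2 then a else p.1,
            if p.2 = a ∧ x p.1 < x b then b else p.2)

def Gmap (x : Equiv.Perm (Fin n)) (a b : Fin n) : Fin n × Fin n → Fin n × Fin n :=
  fun q => (if q.1 = a ∧ x a < (x * Equiv.swap a b) q.2 then b else q.1,
            if q.2 = b ∧ (x * Equiv.swap a b) q.1 < x b then a else q.2)

section Swap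

variable {x : Equiv.Perm (Fin n)} {a b : Fin n}

lemma ya : (x * Equiv.swap a b) a = x b := by simp [Equiv.Perm.mul_apply]

lemma yb : (x * Equiv.swap a b) b = x a := by simp [Equiv.Perm.mul_apply]

lemma yo {i : Fin n} (h1 : i ≠ a) (h2 : i ≠ b) : (x * Equiv.swap a b) i = x i := by
  simp [Equiv.Perm.mul_apply, Equiv.swap_apply_of_ne_of_ne h1 h2]

lemma xne {i j : Fin n} (h : i ≠ j) : x i ≠ x j := fun e => h (x.injective e)

lemma Fmap_mem (hab : a < b) (hv : x a < x b) :
    ∀ p ∈ insert (a, b) (InvS n x), Fmap x a b p ∈ InvS n (x * Equiv.swap a b) := by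
  have hne : a ≠ b := ne_of_lt hab
  rintro ⟨i, j⟩ hp
  rw [Finset.mem_insert] at hp
  simp only [InvS, mem_filter, mem_univ, true_and] at hp ⊢
  rcases hp with heq | ⟨hij, hval⟩
  · obtain ⟨h1, h2⟩ : i = a ∧ j = b := by simpa [Prod.ext_iff] using heq
    rw [h1, h2]
    have e1 : Fmap x a b (a, b) = (a, b) := by simp [Fmap, hne, Ne.symm hne]
    rw [e1]
    exact ⟨hab, by rw [ya, yb]; exact hv⟩
  · by_cases hc1 : i = b ∧ x a < x j
    · by_cases hc2 : j = a ∧ x i < x b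
      · rw [hc1.1, hc2.1] at hij
        exact absurd hij (lt_asymm hab)
      · have e : Fmap x a b (i, j) = (a, j) := by simp [Fmap, hc1, hc2]
        rw [e]
        have hbj : b < j := hc1.1 ▸ hij
        have hja : j ≠ a := ne_of_gt (lt_trans hab hbj)
        refine ⟨lt_trans hab hbj, ?_⟩
        rw [ya, yo hja (ne_of_gt hbj)]
        exact hc1.1 ▸ hval
    · by_cases hc2 : j = a ∧ x i < x b
      · have e : Fmap x a b (i, j) = (i, b) := by simp [Fmap, hc1, hc2]
        rw [e]
        have hia : i < a := hc2.1 ▸ hij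
        refine ⟨lt_trans hia hab, ?_⟩
        rw [yb, yo (ne_of_lt hia) (ne_of_lt (lt_trans hia hab))]
        exact hc2.1 ▸ hval
      · have e : Fmap x a b (i, j) = (i, j) := by simp [Fmap, hc1, hc2]
        rw [e]
        refine ⟨hij, ?_⟩
        by_cases hia : i = a
        · by_cases hjb : j = b
          · rw [hia, hjb] at hval; exact absurd hval (lt_asymm hv)
          · have hja : j ≠ a := ne_of_gt (hia ▸ hij)
            rw [yo hja hjb, hia, ya]
            exact lt_trans (hia ▸ hval) hv
        · by_cases hib : i = b
          · have hja : j ≠ a := ne_of_gt (lt_trans hab (hib ▸ hij))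
            have hjb : j ≠ b := ne_of_gt (hib ▸ hij)
            have hxja : ¬ (x a < x j) := fun h => hc1 ⟨hib, h⟩
            rw [yo hja hjb, hib, yb]
            exact lt_of_le_of_ne (not_lt.mp hxja) (xne hja)
          · rw [yo hia hib]
            by_cases hja : j = a
            · have hxib : ¬ (x i < x b) := fun h => hc2 ⟨hja, h⟩
              rw [hja, ya]
              exact lt_of_le_of_ne (not_lt.mp hxib) (xne (Ne.symm hib))
            · by_cases hjb : j = b
              · rw [hjb, yb]
                exact lt_trans hv (hjb ▸ hval)
              · rw [yo hja hjb]; exact hval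

lemma Gmap_Fmap (hab : a < b) (hv : x a < x b) :
    ∀ p ∈ insert (a, b) (InvS n x), Gmap x a b (Fmap x a b p) = p := by
  have hne : a ≠ b := ne_of_lt hab
  rintro ⟨i, j⟩ hp
  rw [Finset.mem_insert] at hp
  simp only [InvS, mem_filter, mem_univ, true_and] at hp
  rcases hp with heq | ⟨hij, hval⟩
  · obtain ⟨h1, h2⟩ : i = a ∧ j = b := by simpa [Prod.ext_iff] using heq
    rw [h1, h2]
    have e1 : Fmap x a b (a, b) = (a, b) := by simp [Fmap, hne, Ne.symm hne]
    rw [e1]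
    have v1 : (x * Equiv.swap a b) b = x a := yb
    have v2 : (x * Equiv.swap a b) a = x b := ya
    simp [Gmap, v1, v2]
  · by_cases hc1 : i = b ∧ x a < x j
    · by_cases hc2 : j = a ∧ x i < x b
      · rw [hc1.1, hc2.1] at hij
        exact absurd hij (lt_asymm hab)
      · have e : Fmap x a b (i, j) = (a, j) := by simp [Fmap, hc1, hc2]
        rw [e]
        have hbj : b < j := hc1.1 ▸ hij
        have hja : j ≠ a := ne_of_gt (lt_trans hab hbj)
        have hjb : j ≠ b := ne_of_gt hbj
        have e2 : Gmap x a b (a, j) = (b, j) := by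
          simp [Gmap, yo hja hjb, hc1.2, hja]
        rw [e2, ← hc1.1]
    · by_cases hc2 : j = a ∧ x i < x b
      · have e : Fmap x a b (i, j) = (i, b) := by simp [Fmap, hc1, hc2]
        rw [e]
        have hia : i < a := hc2.1 ▸ hij
        have hina : i ≠ a := ne_of_lt hia
        have hib : i ≠ b := ne_of_lt (lt_trans hia hab)
        have e2 : Gmap x a b (i, b) = (i, a) := by
          simp [Gmap, yo hina hib, hc2.2, hina, yb]
        rw [e2, ← hc2.1]
      · have e : Fmap x a b (i, j) = (i, j) := by simp [Fmap, hc1, hc2]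
        rw [e]
        have d1 : ¬ (i = a ∧ x a < (x * Equiv.swap a b) j) := by
          rintro ⟨h1, hlt⟩
          by_cases hjb : j = b
          · rw [hjb, yb] at hlt; exact lt_irrefl _ hlt
          · rw [yo (ne_of_gt (h1 ▸ hij)) hjb] at hlt
            exact absurd (lt_trans hlt (h1 ▸ hval)) (lt_irrefl _)
        have d2 : ¬ (j = b ∧ (x * Equiv.swap a b) i < x b) := by
          rintro ⟨h2, hlt⟩
          by_cases hia : i = a
          · rw [hia, h2] at hval; exact absurd hval (lt_asymm hv)
          · rw [yo hia (ne_of_lt (h2 ▸ hij))] at hlt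
            exact absurd (lt_trans hlt (h2 ▸ hval)) (lt_irrefl _)
        simp only [Gmap, Prod.mk.injEq]
        rw [if_neg d1, if_neg d2]
        exact ⟨rfl, rfl⟩

lemma Gmap_spec (hab : a < b) (hv : x a < x b)
    (hni : ∀ j : Fin n, a < j → j < b → ¬(x a < x j ∧ x j < x b)) :
    ∀ q ∈ InvS n (x * Equiv.swap a b),
      Gmap x a b q ∈ insert (a, b) (InvS n x) ∧ Fmap x a b (Gmap x a b q) = q := by
  have hne : a ≠ b := ne_of_lt hab
  rintro ⟨i, j⟩ hq
  simp only [InvS, mem_filter, mem_univ, true_and] at hq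
  obtain ⟨hij, hval⟩ := hq
  by_cases d1 : i = a ∧ x a < (x * Equiv.swap a b) j
  · have hia := d1.1
    have hja : j ≠ a := ne_of_gt (hia ▸ hij)
    by_cases hjb : j = b
    · exfalso
      have := d1.2
      rw [hjb, yb] at this
      exact lt_irrefl _ this
    · have hyj : (x * Equiv.swap a b) j = x j := yo hja hjb
      have hxaj : x a < x j := by rw [← hyj]; exact d1.2
      have hxjb : x j < x b := by
        have h := hval; rw [hyj, hia, ya] at h; exact h
      have hbj : b < j := by
        rcases lt_trichotomy j b with h | h | h
        · exact absurd ⟨hxaj, hxjb⟩ (hni j (hia ▸ hij) h)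
        · exact absurd h hjb
        · exact h
      have eG : Gmap x a b (i, j) = (b, j) := by
        simp only [Gmap]
        rw [if_pos ⟨hia, d1.2⟩, if_neg (by rintro ⟨h, -⟩; exact hjb h)]
      have eF : Fmap x a b (b, j) = (a, j) := by
        simp [Fmap, hxaj, hja]
      refine ⟨?_, ?_⟩
      · rw [eG]; exact Finset.mem_insert_of_mem (by simp [InvS, hbj, hxjb])
      · rw [eG, eF, hia]
  · by_cases d2 : j = b ∧ (x * Equiv.swap a b) i < x b
    · have hjb := d2.1
      have hib : i ≠ b := ne_of_lt (hjb ▸ hij)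
      have hia : i ≠ a := by
        intro h
        have := d2.2; rw [h, ya] at this; exact lt_irrefl _ this
      have hyi : (x * Equiv.swap a b) i = x i := yo hia hib
      have hxib : x i < x b := by rw [← hyi]; exact d2.2
      have hxai : x a < x i := by
        have h := hval; rw [hyi, hjb, yb] at h; exact h
      have hialt : i < a := by
        rcases lt_trichotomy i a with h | h | h
        · exact h
        · exact absurd h hia
        · exact absurd ⟨hxai, hxib⟩ (hni i h (hjb ▸ hij))
      have eG : Gmap x a b (i, j) = (i, a) := by
        simp only [Gmap]
        rw [if_neg (by rintro ⟨h, -⟩; exact hia h), if_pos ⟨hjb, d2.2⟩]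
      have eF : Fmap x a b (i, a) = (i, b) := by
        simp [Fmap, hib, hxib]
      refine ⟨?_, ?_⟩
      · rw [eG]; exact Finset.mem_insert_of_mem (by simp [InvS, hialt, hxai])
      · rw [eG, eF, hjb]
    · have eG : Gmap x a b (i, j) = (i, j) := by
        simp only [Gmap]
        rw [if_neg d1, if_neg d2]
      rw [eG]
      by_cases hia : i = a
      · by_cases hjb : j = b
        · refine ⟨?_, ?_⟩
          · rw [hia, hjb]; exact Finset.mem_insert_self _ _
          · rw [hia, hjb]; simp [Fmap, hne, Ne.symm hne]
        · have hja : j ≠ a := ne_of_gt (hia ▸ hij)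
          have hxja : x j < x a := by
            have h2 : ¬ x a < (x * Equiv.swap a b) j := fun h => d1 ⟨hia, h⟩
            rw [yo hja hjb] at h2
            exact lt_of_le_of_ne (not_lt.mp h2) (xne hja)
          have hxji : x j < x i := by rw [hia]; exact hxja
          have hinb : i ≠ b := by rw [hia]; exact hne
          refine ⟨Finset.mem_insert_of_mem (by simp [InvS, hij, hxji]), ?_⟩
          simp [Fmap, hja, hinb]
      · by_cases hib : i = b
        · have hbj : b < j := hib ▸ hij
          have hja : j ≠ a := ne_of_gt (lt_trans hab hbj)
          have hjb : j ≠ b := ne_of_gt hbj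
          have hxja : x j < x a := by
            have h := hval; rw [yo hja hjb, hib, yb] at h; exact h
          have hxji : x j < x i := by rw [hib]; exact lt_trans hxja hv
          have hnlt : ¬ (x a < x j) := lt_asymm hxja
          refine ⟨Finset.mem_insert_of_mem (by simp [InvS, hij, hxji]), ?_⟩
          simp [Fmap, hnlt, hja]
        · by_cases hja : j = a
          · have hxbi : x b < x i := by
              have h := hval; rw [yo hia hib, hja, ya] at h; exact h
            have hxji : x j < x i := by rw [hja]; exact lt_trans hv hxbi
            have hnlt : ¬ (x i < x b) := lt_asymm hxbi
            refine ⟨Finset.mem_insert_of_mem (by simp [InvS, hij, hxji]), ?_⟩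
            simp [Fmap, hnlt, hib]
          · by_cases hjb : j = b
            · have hxbi : x b < x i := by
                have h2 : ¬ (x * Equiv.swap a b) i < x b := fun h => d2 ⟨hjb, h⟩
                rw [yo hia hib] at h2
                exact lt_of_le_of_ne (not_lt.mp h2) (xne (Ne.symm hib))
              have hxji : x j < x i := by rw [hjb]; exact hxbi
              refine ⟨Finset.mem_insert_of_mem (by simp [InvS, hij, hxji]), ?_⟩
              simp [Fmap, hib, hja]
            · have hxji : x j < x i := by
                have h := hval; rw [yo hia hib, yo hja hjb] at h; exact h
              refine ⟨Finset.mem_insert_of_mem (by simp [InvS, hij, hxji]), ?_⟩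
              simp [Fmap, hib, hja]

lemma ab_notMem_InvS (hv : x a < x b) : (a, b) ∉ InvS n x := by
  simp only [InvS, mem_filter, mem_univ, true_and]
  rintro ⟨-, h⟩
  exact lt_asymm hv h

lemma len_swap_lt (hab : a < b) (hv : x a < x b) :
    len n x < len n (x * Equiv.swap a b) := by
  have hinj : Set.InjOn (Fmap x a b) ↑(insert (a, b) (InvS n x)) := by
    intro p hp q hq h
    rw [← Gmap_Fmap hab hv p (Finset.mem_coe.mp hp),
        ← Gmap_Fmap hab hv q (Finset.mem_coe.mp hq), h]
  have hcard := Finset.card_le_card_of_injOn (Fmap x a b) (Fmap_mem hab hv) hinj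
  rw [Finset.card_insert_of_notMem (ab_notMem_InvS hv)] at hcard
  rw [len_def, len_def]
  omega

lemma len_swap_eq (hab : a < b) (hv : x a < x b)
    (hni : ∀ j : Fin n, a < j → j < b → ¬(x a < x j ∧ x j < x b)) :
    len n (x * Equiv.swap a b) = len n x + 1 := by
  have hcard : (insert (a, b) (InvS n x)).card = (InvS n (x * Equiv.swap a b)).card :=
    Finset.card_nbij' (Fmap x a b) (Gmap x a b) (Fmap_mem hab hv)
      (fun q hq => (Gmap_spec hab hv hni q hq).1) (Gmap_Fmap hab hv)
      (fun q hq => (Gmap_spec hab hv hni q hq).2)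
  rw [Finset.card_insert_of_notMem (ab_notMem_InvS hv)] at hcard
  rw [len_def, len_def, ← hcard]

end Swap


lemma dom_step_ord {x : Equiv.Perm (Fin n)} {a b : Fin n} (hab : a < b)
    (hl : len n x < len n (x * Equiv.swap a b)) : Dom n x (x * Equiv.swap a b) := by
  rcases lt_trichotomy (x a) (x b) with hv | hv | hv
  · intro r m
    rw [Dm_mul_swap x a b hab hv]
    split_ifs <;> omega
  · exact absurd (x.injective hv) (ne_of_lt hab)
  · exfalso
    set y := x * Equiv.swap a b with hy
    have hx : x = y * Equiv.swap a b := by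
      rw [hy, mul_assoc, Equiv.swap_mul_self, mul_one]
    have hvy : y a < y b := by
      have h1 : y a = x b := ya
      have h2 : y b = x a := yb
      rw [h1, h2]; exact hv
    have := len_swap_lt hab hvy
    rw [← hx] at this
    omega

lemma dom_step {x y : Equiv.Perm (Fin n)} (a b : Fin n) (hy : y = x * Equiv.swap a b)
    (hl : len n x < len n y) : Dom n x y := by
  rcases eq_or_ne a b with rfl | hne
  · exfalso
    rw [Equiv.swap_self] at hy
    have : y = x := by
      rw [hy]; ext i; rfl
    rw [this] at hl
    exact lt_irrefl _ hl
  · rcases hne.lt_or_gt with hab | hab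
    · subst hy; exact dom_step_ord hab hl
    · rw [Equiv.swap_comm] at hy
      subst hy; exact dom_step_ord hab hl

lemma dom_of_bruhatLE {u w : Equiv.Perm (Fin n)} (h : bruhatLE n u w) : Dom n u w := by
  induction h with
  | refl => exact fun r m => le_rfl
  | tail _ hstep ih =>
      obtain ⟨⟨s, t, hc⟩, hl⟩ := hstep
      exact fun r m => le_trans (ih r m) (dom_step s t hc hl r m)


lemma eq_of_agree {u w : Equiv.Perm (Fin n)} (hw : IsGrassmannian n k w) (hdom : Dom n u w)
    (hag : ∀ i : Fin n, (i : ℕ) < k → u i = w i) : u = w := by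
  by_contra hne
  have hex : ∃ i : Fin n, u i ≠ w i := by
    by_contra h
    push_neg at h
    exact hne (Equiv.ext h)
  set E := (Finset.univ : Finset (Fin n)).filter (fun i => u i ≠ w i) with hE
  have hEne : E.Nonempty := by
    obtain ⟨i, hi⟩ := hex
    exact ⟨i, Finset.mem_filter.mpr ⟨Finset.mem_univ _, hi⟩⟩
  set j := E.max' hEne with hj
  have hjmem : u j ≠ w j := (Finset.mem_filter.mp (E.max'_mem hEne)).2
  have hjk : k ≤ (j : ℕ) := by
    by_contra h
    exact hjmem (hag j (by omega))
  have hgt : ∀ i : Fin n, j < i → u i = w i := by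
    intro i hi
    by_contra h
    have hmem : i ∈ E := Finset.mem_filter.mpr ⟨Finset.mem_univ _, h⟩
    exact absurd (E.le_max' i hmem) (not_le.mpr hi)
  set S := (Finset.univ : Finset (Fin n)).filter (fun i : Fin n => k ≤ (i : ℕ) ∧ i ≤ j) with hS
  have hoff : ∀ i : Fin n, i ∉ S → u i = w i := by
    intro i hi
    rw [hS, Finset.mem_filter] at hi
    by_cases h1 : (i : ℕ) < k
    · exact hag i h1
    · have h2 : ¬ i ≤ j := by
        intro hc
        exact hi ⟨Finset.mem_univ _, le_of_not_gt h1, hc⟩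
      exact hgt i (lt_of_not_ge h2)
  have himg : S.image u = S.image w := by
    apply Finset.Subset.antisymm <;> intro v hv <;> rw [Finset.mem_image] at hv ⊢
    · obtain ⟨i, hiS, rfl⟩ := hv
      refine ⟨w.symm (u i), ?_, w.apply_symm_apply _⟩
      by_contra h
      have he : u (w.symm (u i)) = u i := by rw [hoff _ h, w.apply_symm_apply]
      exact h (by rw [u.injective he]; exact hiS)
    · obtain ⟨i, hiS, rfl⟩ := hv
      refine ⟨u.symm (w i), ?_, u.apply_symm_apply _⟩
      by_contra h
      have he : w (u.symm (w i)) = w i := by rw [← hoff _ h, u.apply_symm_apply]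
      exact h (by rw [w.injective he]; exact hiS)
  have hjS : j ∈ S := Finset.mem_filter.mpr ⟨Finset.mem_univ _, hjk, le_refl _⟩
  have hujwj : (u j : ℕ) < (w j : ℕ) := by
    have hmem : u j ∈ S.image w := himg ▸ Finset.mem_image_of_mem u hjS
    rw [Finset.mem_image] at hmem
    obtain ⟨q, hqS, hq⟩ := hmem
    rw [hS, Finset.mem_filter] at hqS
    rcases eq_or_lt_of_le hqS.2.2 with h | h
    · exact absurd (h ▸ hq).symm hjmem
    · have hlt := hw q j h (Or.inr hqS.2.1)
      rw [hq] at hlt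
      exact Fin.lt_def.mp hlt
  have hmem : w j ∈ S.image u := by rw [himg]; exact Finset.mem_image_of_mem w hjS
  rw [Finset.mem_image] at hmem
  obtain ⟨p, hpS, hp⟩ := hmem
  rw [hS, Finset.mem_filter] at hpS
  have hpj : p ≠ j := by
    intro h
    rw [h] at hp
    have : (u j : ℕ) = (w j : ℕ) := congrArg Fin.val hp
    omega
  have hplt : (p : ℕ) < (j : ℕ) := Fin.lt_def.mp (lt_of_le_of_ne hpS.2.2 hpj)
  have hcontra := hdom (j : ℕ) ((w j : ℕ))
  set Aw := ((Finset.univ : Finset (Fin n)).filter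
    fun i : Fin n => (i : ℕ) < (j : ℕ) ∧ ((w j : ℕ)) ≤ ((w i : ℕ))) with hAw
  set Au := ((Finset.univ : Finset (Fin n)).filter
    fun i : Fin n => (i : ℕ) < (j : ℕ) ∧ ((w j : ℕ)) ≤ ((u i : ℕ))) with hAu
  have hsub : insert p Aw ⊆ Au := by
    intro i hi
    rcases Finset.mem_insert.mp hi with h | hi
    · rw [h, hAu, Finset.mem_filter]
      exact ⟨Finset.mem_univ _, hplt, by rw [hp]⟩
    · rw [hAw, Finset.mem_filter] at hi
      obtain ⟨-, h1, h2⟩ := hi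
      have hik : (i : ℕ) < k := by
        by_contra h
        have := Fin.lt_def.mp (hw i j (Fin.lt_def.mpr h1) (Or.inr (le_of_not_gt h)))
        omega
      rw [hAu, Finset.mem_filter]
      refine ⟨Finset.mem_univ _, h1, ?_⟩
      rw [congrArg Fin.val (hag i hik)]
      exact h2
  have hpAw : p ∉ Aw := by
    rw [hAw, Finset.mem_filter]
    rintro ⟨-, -, h2⟩
    have := Fin.lt_def.mp (hw p j (Fin.lt_def.mpr hplt) (Or.inr hpS.2.1))
    omega
  have hcard : Aw.card + 1 ≤ Au.card := by
    have h := Finset.card_le_card hsub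
    rwa [Finset.card_insert_of_notMem hpAw] at h
  have e1 : Dm n u (j : ℕ) ((w j : ℕ)) = Au.card := rfl
  have e2 : Dm n w (j : ℕ) ((w j : ℕ)) = Aw.card := rfl
  omega


lemma grass_step {u w : Equiv.Perm (Fin n)} (hw : IsGrassmannian n k w) (hdom : Dom n u w)
    (hne : u ≠ w) :
    ∃ a b : Fin n, (a : ℕ) < k ∧ k ≤ (b : ℕ) ∧ u a < u b ∧
      (∀ j : Fin n, a < j → j < b → ¬(u a < u j ∧ u j < u b)) ∧
      (∀ r m : ℕ, (a : ℕ) < r → r ≤ (b : ℕ) → ((u a : ℕ)) < m → m ≤ ((u b : ℕ)) →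
        Dm n u r m < Dm n w r m) := by
  classical
  set A := (Finset.univ : Finset (Fin n)).filter (fun i : Fin n => (i : ℕ) < k ∧ u i ≠ w i) with hA
  have hAne : A.Nonempty := by
    by_contra h
    rw [Finset.not_nonempty_iff_eq_empty] at h
    refine hne (eq_of_agree hw hdom ?_)
    intro i hik
    by_contra hneq
    have hmem : i ∈ A := Finset.mem_filter.mpr ⟨Finset.mem_univ _, hik, hneq⟩
    rw [h] at hmem
    exact absurd hmem (Finset.notMem_empty i)
  set a := A.max' hAne with ha
  have haA : (a : ℕ) < k ∧ u a ≠ w a := (Finset.mem_filter.mp (A.max'_mem hAne)).2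
  have hak : (a : ℕ) < k := haA.1
  have hane : u a ≠ w a := haA.2
  have hamax : ∀ i : Fin n, a < i → (i : ℕ) < k → u i = w i := by
    intro i h1 h2
    by_contra h
    have hmem : i ∈ A := Finset.mem_filter.mpr ⟨Finset.mem_univ _, h2, h⟩
    exact absurd (A.le_max' i hmem) (not_le.mpr h1)
  have hwa_block : ∀ i : Fin n, i ≤ a → (w i : ℕ) ≤ (w a : ℕ) := by
    intro i hi
    rcases eq_or_lt_of_le hi with h | h
    · exact le_of_eq (congrArg (fun t => ((w t : ℕ))) h)
    · exact le_of_lt (Fin.lt_def.mp (hw i a h (Or.inl hak)))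
  have huawa : (u a : ℕ) < (w a : ℕ) := by
    rcases lt_trichotomy ((u a : ℕ)) ((w a : ℕ)) with h | h | h
    · exact h
    · exact absurd (Fin.val_inj.mp h) hane
    · exfalso
      have hd := hdom k ((u a : ℕ))
      set Bw := ((Finset.univ : Finset (Fin n)).filter
        fun i : Fin n => (i : ℕ) < k ∧ ((u a : ℕ)) ≤ ((w i : ℕ))) with hBw
      set Bu := ((Finset.univ : Finset (Fin n)).filter
        fun i : Fin n => (i : ℕ) < k ∧ ((u a : ℕ)) ≤ ((u i : ℕ))) with hBu
      have hsub : insert a Bw ⊆ Bu := by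
        intro i hi
        rcases Finset.mem_insert.mp hi with h' | hi
        · rw [h', hBu, Finset.mem_filter]
          exact ⟨Finset.mem_univ _, hak, le_refl _⟩
        · rw [hBw, Finset.mem_filter] at hi
          obtain ⟨-, h1, h2⟩ := hi
          have hai : a < i := by
            by_contra hcon
            have := hwa_block i (le_of_not_gt hcon)
            omega
          rw [hBu, Finset.mem_filter]
          refine ⟨Finset.mem_univ _, h1, ?_⟩
          rw [congrArg Fin.val (hamax i hai h1)]
          exact h2
      have haBw : a ∉ Bw := by
        rw [hBw, Finset.mem_filter]
        rintro ⟨-, -, h2⟩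
        omega
      have hcard : Bw.card + 1 ≤ Bu.card := by
        have h' := Finset.card_le_card hsub
        rwa [Finset.card_insert_of_notMem haBw] at h'
      have e1 : Dm n u k ((u a : ℕ)) = Bu.card := rfl
      have e2 : Dm n w k ((u a : ℕ)) = Bw.card := rfl
      omega
  -- the position of the value w a in u
  set p := u.symm (w a) with hp
  have hup : u p = w a := u.apply_symm_apply _
  have hpa : p ≠ a := fun h => hane (h ▸ hup)
  have hnpa : ¬ p < a := by
    intro hlt
    have hd := hdom ((p : ℕ) + 1) ((w a : ℕ))
    have h1 : 0 < Dm n u ((p : ℕ) + 1) ((w a : ℕ)) := by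
      apply Finset.card_pos.mpr
      refine ⟨p, Finset.mem_filter.mpr ⟨Finset.mem_univ _, by omega, by rw [hup]⟩⟩
    have h2 : Dm n w ((p : ℕ) + 1) ((w a : ℕ)) = 0 := by
      unfold Dm
      rw [Finset.card_eq_zero, Finset.filter_eq_empty_iff]
      intro i _
      rintro ⟨h1', h2'⟩
      have hia : i < a := Fin.lt_def.mpr (by have := Fin.lt_def.mp hlt; omega)
      have := Fin.lt_def.mp (hw i a hia (Or.inl hak))
      omega
    omega
  have hap : a < p := lt_of_le_of_ne (not_lt.mp hnpa) (Ne.symm hpa)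
  have hpk : k ≤ (p : ℕ) := by
    by_contra h
    have heq := hamax p hap (by omega)
    exact hpa (w.injective (by rw [← heq]; exact hup))
  -- b : the minimal candidate
  set Cand := ((Finset.univ : Finset (Fin n)).filter
    fun i : Fin n => a < i ∧ u a < u i ∧ (u i : ℕ) ≤ (w a : ℕ)) with hCand
  have hCne : Cand.Nonempty := by
    refine ⟨p, Finset.mem_filter.mpr ⟨Finset.mem_univ _, hap, ?_, by rw [hup]⟩⟩
    rw [hup]
    exact Fin.lt_def.mpr huawa
  set b := Cand.min' hCne with hb
  have hbC : a < b ∧ u a < u b ∧ (u b : ℕ) ≤ (w a : ℕ) :=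
    (Finset.mem_filter.mp (Cand.min'_mem hCne)).2
  have hminC : ∀ i ∈ Cand, b ≤ i := fun i hi => Cand.min'_le i hi
  have hvab : u a < u b := hbC.2.1
  have hub_wa : (u b : ℕ) ≤ (w a : ℕ) := hbC.2.2
  have hkb : k ≤ (b : ℕ) := by
    by_contra h
    have heq := congrArg Fin.val (hamax b hbC.1 (by omega))
    have hlt := Fin.lt_def.mp (hw a b hbC.1 (Or.inl (by omega)))
    omega
  have hnomid : ∀ j : Fin n, a < j → j < b → ¬(u a < u j ∧ u j < u b) := by
    rintro j h1 h2 ⟨m1, m2⟩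
    have hmem : j ∈ Cand := by
      refine Finset.mem_filter.mpr ⟨Finset.mem_univ _, h1, m1, ?_⟩
      have := Fin.lt_def.mp m2
      omega
    exact absurd (hminC j hmem) (not_le.mpr h2)
  -- strict dominance on the prefix part
  have claimK : ∀ r' m : ℕ, (a : ℕ) < r' → r' ≤ k → (u a : ℕ) < m → m ≤ (w a : ℕ) →
      Dm n u r' m < Dm n w r' m := by
    intro r' m hr1 hr2 hm1 hm2
    have hsplit_u := Dm_split u m (show (a : ℕ) + 1 ≤ r' by omega)
    have hsplit_w := Dm_split w m (show (a : ℕ) + 1 ≤ r' by omega)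
    have hmid : Mid n u ((a : ℕ) + 1) r' m = Mid n w ((a : ℕ) + 1) r' m := by
      unfold Mid
      apply congrArg Finset.card
      apply Finset.filter_congr
      intro i _
      constructor
      · rintro ⟨h1, h2, h3⟩
        refine ⟨h1, h2, ?_⟩
        rw [← congrArg Fin.val (hamax i (Fin.lt_def.mpr (by omega)) (by omega))]
        exact h3
      · rintro ⟨h1, h2, h3⟩
        refine ⟨h1, h2, ?_⟩
        rw [congrArg Fin.val (hamax i (Fin.lt_def.mpr (by omega)) (by omega))]
        exact h3
    have su2 := Dm_split u m (show (a : ℕ) ≤ (a : ℕ) + 1 by omega)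
    have sw2 := Dm_split w m (show (a : ℕ) ≤ (a : ℕ) + 1 by omega)
    have e1 : Mid n u (a : ℕ) ((a : ℕ) + 1) m = 0 := by
      unfold Mid
      rw [Finset.card_eq_zero, Finset.filter_eq_empty_iff]
      intro i _
      rintro ⟨h1', h2', h3'⟩
      have : i = a := Fin.val_inj.mp (by omega)
      rw [this] at h3'
      omega
    have e2 : 0 < Mid n w (a : ℕ) ((a : ℕ) + 1) m := by
      apply Finset.card_pos.mpr
      exact ⟨a, Finset.mem_filter.mpr ⟨Finset.mem_univ _, le_refl _, by omega, hm2⟩⟩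
    have hd := hdom (a : ℕ) m
    omega
  refine ⟨a, b, hak, hkb, hvab, hnomid, ?_⟩
  intro r m hr1 hr2 hm1 hm2
  have hmwa : m ≤ (w a : ℕ) := le_trans hm2 hub_wa
  by_cases hrk : r ≤ k
  · exact claimK r m hr1 hrk hm1 hmwa
  · push_neg at hrk
    have hbase := claimK k m (by omega) (le_refl _) hm1 hmwa
    have hsu := Dm_split u m (show k ≤ r by omega)
    have hsw := Dm_split w m (show k ≤ r by omega)
    set Yu := ((Finset.univ : Finset (Fin n)).filter
      fun i : Fin n => k ≤ (i : ℕ) ∧ (i : ℕ) < r ∧ ((w a : ℕ)) < ((u i : ℕ))) with hYu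
    set Yw := ((Finset.univ : Finset (Fin n)).filter
      fun i : Fin n => k ≤ (i : ℕ) ∧ (i : ℕ) < r ∧ ((w a : ℕ)) < ((w i : ℕ))) with hYw
    have hXu : Mid n u k r m = Yu.card := by
      unfold Mid
      rw [hYu]
      apply congrArg Finset.card
      apply Finset.filter_congr
      intro i _
      constructor
      · rintro ⟨h1, h2, h3⟩
        refine ⟨h1, h2, ?_⟩
        by_contra hcon
        have hmem : i ∈ Cand := by
          refine Finset.mem_filter.mpr ⟨Finset.mem_univ _, ?_, ?_, by omega⟩
          · exact Fin.lt_def.mpr (by omega)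
          · exact Fin.lt_def.mpr (by omega)
        have := Fin.le_def.mp (hminC i hmem)
        omega
      · rintro ⟨h1, h2, h3⟩
        exact ⟨h1, h2, by omega⟩
    have hYY : Yu.card ≤ Yw.card := by
      have hd := hdom r ((w a : ℕ) + 1)
      have hsuc := Dm_split u ((w a : ℕ) + 1) (show k ≤ r by omega)
      have hswc := Dm_split w ((w a : ℕ) + 1) (show k ≤ r by omega)
      have hYu' : Mid n u k r ((w a : ℕ) + 1) = Yu.card := by
        unfold Mid
        rw [hYu]
        apply congrArg Finset.card
        apply Finset.filter_congr
        intro i _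
        constructor <;> rintro ⟨h1, h2, h3⟩ <;> exact ⟨h1, h2, by omega⟩
      have hYw' : Mid n w k r ((w a : ℕ) + 1) = Yw.card := by
        unfold Mid
        rw [hYw]
        apply congrArg Finset.card
        apply Finset.filter_congr
        intro i _
        constructor <;> rintro ⟨h1, h2, h3⟩ <;> exact ⟨h1, h2, by omega⟩
      have hC : Dm n w k ((w a : ℕ) + 1) ≤ Dm n u k ((w a : ℕ) + 1) := by
        refine Finset.card_le_card ?_
        intro i hi
        rw [Finset.mem_filter] at hi ⊢
        obtain ⟨-, h1, h2⟩ := hi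
        have hai : a < i := by
          by_contra hcon
          have := hwa_block i (le_of_not_gt hcon)
          omega
        refine ⟨Finset.mem_univ _, h1, ?_⟩
        rw [congrArg Fin.val (hamax i hai h1)]
        exact h2
      omega
    have hYX : Yw.card ≤ Mid n w k r m := by
      unfold Mid
      refine Finset.card_le_card ?_
      intro i hi
      rw [hYw, Finset.mem_filter] at hi
      rw [Finset.mem_filter]
      obtain ⟨-, h1, h2, h3⟩ := hi
      exact ⟨Finset.mem_univ _, h1, h2, by omega⟩
    omega


def Msr (n : ℕ) (u w : Equiv.Perm (Fin n)) : ℕ :=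
  ∑ p ∈ (Finset.range (n + 1)) ×ˢ (Finset.range (n + 1)), (Dm n w p.1 p.2 - Dm n u p.1 p.2)

lemma sigma_ne_of_straddle (u : Equiv.Perm (Fin n)) (a b : Fin n)
    (hak : (a : ℕ) < k) (hkb : k ≤ (b : ℕ)) :
    sigmaSet n k u ≠ sigmaSet n k (u * Equiv.swap a b) := by
  intro hEq
  have h1 : u b ∈ sigmaSet n k (u * Equiv.swap a b) := by
    rw [sigmaSet, Finset.mem_image]
    exact ⟨a, Finset.mem_filter.mpr ⟨Finset.mem_univ _, hak⟩, ya⟩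
  rw [← hEq, sigmaSet, Finset.mem_image] at h1
  obtain ⟨i, hi, hib⟩ := h1
  have : i = b := u.injective hib
  rw [this] at hi
  have := (Finset.mem_filter.mp hi).2
  omega

lemma grass_main {w : Equiv.Perm (Fin n)} (hw : IsGrassmannian n k w) :
    ∀ N : ℕ, ∀ u : Equiv.Perm (Fin n), Msr n u w ≤ N → Dom n u w → kBruhatLE n k u w := by
  intro N
  induction N with
  | zero =>
      intro u hM hdom
      by_cases h : u = w
      · rw [h];exact Relation.ReflTransGen.refl
      · exfalso
        obtain ⟨a, b, hak, hkb, hvab, hnomid, hstrict⟩ := grass_step hw hdom h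
        have hmem : ((a : ℕ) + 1, ((u b : ℕ))) ∈
            (Finset.range (n + 1)) ×ˢ (Finset.range (n + 1)) := by
          rw [Finset.mem_product, Finset.mem_range, Finset.mem_range]
          exact ⟨by omega, by have := (u b).isLt; omega⟩
        have hpos : 0 < Msr n u w := by
          apply Finset.sum_pos' (fun i _ => Nat.zero_le _)
          refine ⟨_, hmem, ?_⟩
          have hst := hstrict ((a : ℕ) + 1) ((u b : ℕ)) (by omega) (by omega)
            (Fin.lt_def.mp hvab) (le_refl _)
          dsimp only
          omega
        omega
  | succ N ih =>
      intro u hM hdom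
      by_cases h : u = w
      · rw [h];exact Relation.ReflTransGen.refl
      · obtain ⟨a, b, hak, hkb, hvab, hnomid, hstrict⟩ := grass_step hw hdom h
        have habf : a < b := Fin.lt_def.mpr (by omega)
        set u' := u * Equiv.swap a b with hu'
        have hlen : len n u' = len n u + 1 := len_swap_eq habf hvab hnomid
        have hdm : ∀ r m : ℕ, Dm n u' r m
            = Dm n u r m + (if (a : ℕ) < r ∧ r ≤ (b : ℕ) ∧ ((u a : ℕ)) < m ∧ m ≤ ((u b : ℕ))
              then 1 else 0) := Dm_mul_swap u a b habf hvab
        have hdom' : Dom n u' w := by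
          intro r m
          rw [hdm r m]
          split_ifs with hcond
          · have := hstrict r m hcond.1 hcond.2.1 hcond.2.2.1 hcond.2.2.2
            omega
          · exact hdom r m
        have hcov : kCover n k u u' := by
          refine ⟨⟨Relation.ReflTransGen.single ⟨⟨a, b, rfl⟩, by omega⟩, ?_, hlen⟩, ?_⟩
          · intro he
            rw [← he] at hlen
            omega
          · exact sigma_ne_of_straddle u a b (by omega) (by omega)
        have hMlt : Msr n u' w < Msr n u w := by
          apply Finset.sum_lt_sum
          · intro p hp
            have := hdm p.1 p.2
            have := hdom' p.1 p.2
            omega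
          · refine ⟨((a : ℕ) + 1, ((u b : ℕ))), ?_, ?_⟩
            · rw [Finset.mem_product, Finset.mem_range, Finset.mem_range]
              exact ⟨by omega, by have := (u b).isLt; omega⟩
            · have h1 := hdm ((a : ℕ) + 1) ((u b : ℕ))
              rw [if_pos ⟨by omega, by omega, Fin.lt_def.mp hvab, le_refl _⟩] at h1
              have h2 := hstrict ((a : ℕ) + 1) ((u b : ℕ)) (by omega) (by omega)
                (Fin.lt_def.mp hvab) (le_refl _)
              dsimp only
              omega
        exact Relation.ReflTransGen.head hcov (ih u' (by omega) hdom')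

theorem grass_case {u w : Equiv.Perm (Fin n)} (hw : IsGrassmannian n k w)
    (huw : bruhatLE n u w) : kBruhatLE n k u w :=
  grass_main hw (Msr n u w) u (le_refl _) (dom_of_bruhatLE huw)


def Tn (n : ℕ) : ℕ :=
  ((Finset.univ : Finset (Fin n × Fin n)).filter fun p => p.1 < p.2).card

lemma len_rev_add (x : Equiv.Perm (Fin n)) : len n (Fin.revPerm * x) + len n x = Tn n := by
  have h1 : InvS n (Fin.revPerm * x)
      = (Finset.univ : Finset (Fin n × Fin n)).filter (fun p => p.1 < p.2 ∧ x p.1 < x p.2) := by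
    unfold InvS
    apply Finset.filter_congr
    intro p _
    constructor
    · rintro ⟨ha, hb⟩
      exact ⟨ha, Fin.rev_lt_rev.mp hb⟩
    · rintro ⟨ha, hb⟩
      exact ⟨ha, Fin.rev_lt_rev.mpr hb⟩
  have h2 : (((Finset.univ : Finset (Fin n × Fin n)).filter
        fun p => p.1 < p.2 ∧ x p.1 < x p.2) ∪ (InvS n x))
      = (Finset.univ : Finset (Fin n × Fin n)).filter fun p => p.1 < p.2 := by
    rw [InvS, ← Finset.filter_or]
    apply Finset.filter_congr
    intro p _
    constructor
    · rintro (⟨hh, -⟩ | ⟨hh, -⟩) <;> exact hh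
    · intro hh
      rcases lt_trichotomy (x p.1) (x p.2) with hv | hv | hv
      · exact Or.inl ⟨hh, hv⟩
      · exact absurd (x.injective hv) (ne_of_lt hh)
      · exact Or.inr ⟨hh, hv⟩
  have hdisj : Disjoint ((Finset.univ : Finset (Fin n × Fin n)).filter
      fun p => p.1 < p.2 ∧ x p.1 < x p.2) (InvS n x) := by
    rw [InvS]
    refine Finset.disjoint_left.mpr ?_
    intro p hp hq
    rw [Finset.mem_filter] at hp hq
    exact absurd hq.2.2 (lt_asymm hp.2.2)
  rw [len_def, len_def, h1, Tn, ← h2, Finset.card_union_of_disjoint hdisj]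

lemma revPerm_mul_revPerm_mul (x : Equiv.Perm (Fin n)) :
    Fin.revPerm * (Fin.revPerm * x) = x := by
  have h : (Fin.revPerm * Fin.revPerm : Equiv.Perm (Fin n)) = 1 := by
    apply Equiv.ext
    intro i
    simp [Equiv.Perm.mul_apply]
  rw [← mul_assoc, h, one_mul]

lemma bruhat_rev {u w : Equiv.Perm (Fin n)} (h : bruhatLE n u w) :
    bruhatLE n (Fin.revPerm * w) (Fin.revPerm * u) := by
  induction h with
  | refl => exact Relation.ReflTransGen.refl
  | @tail b c _ hstep ih =>
      obtain ⟨⟨s, t, hc⟩, hl⟩ := hstep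
      refine Relation.ReflTransGen.head ⟨⟨s, t, ?_⟩, ?_⟩ ih
      · rw [hc, mul_assoc, mul_assoc, Equiv.swap_mul_self, mul_one]
      · have e1 := len_rev_add b
        have e2 := len_rev_add c
        omega

lemma sigma_rev (x : Equiv.Perm (Fin n)) :
    sigmaSet n k (Fin.revPerm * x) = (sigmaSet n k x).image Fin.revPerm := by
  rw [sigmaSet, sigmaSet, Finset.image_image]
  rfl

lemma kcover_rev {u w : Equiv.Perm (Fin n)} (h : kCover n k u w) :
    kCover n k (Fin.revPerm * w) (Fin.revPerm * u) := by
  obtain ⟨⟨hle, hne, hlen⟩, hsig⟩ := h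
  refine ⟨⟨bruhat_rev hle, ?_, ?_⟩, ?_⟩
  · intro he
    exact hne (mul_left_cancel he).symm
  · have e1 := len_rev_add u
    have e2 := len_rev_add w
    omega
  · intro he
    rw [sigma_rev, sigma_rev] at he
    exact hsig (Finset.image_injective (Equiv.injective _) he).symm

lemma kbruhat_rev {u w : Equiv.Perm (Fin n)} (h : kBruhatLE n k u w) :
    kBruhatLE n k (Fin.revPerm * w) (Fin.revPerm * u) := by
  induction h with
  | refl => exact Relation.ReflTransGen.refl
  | tail _ hstep ih => exact Relation.ReflTransGen.head (kcover_rev hstep) ih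

lemma anti_grass {u : Equiv.Perm (Fin n)} (hu : IsAntiGrassmannian n k u) :
    IsGrassmannian n k (Fin.revPerm * u) := by
  intro i j hij hcond
  exact Fin.rev_lt_rev.mpr (hu i j hij hcond)

end SA

theorem stmt_5 (n k : ℕ) (hk : k ≤ n) (u w : Equiv.Perm (Fin n))
    (huw : bruhatLE n u w)
    (h : IsGrassmannian n k w ∨ IsAntiGrassmannian n k u) :
    kBruhatLE n k u w := by
  rcases h with hg | ha
  · exact SA.grass_case hg huw
  · have h1 : bruhatLE n (Fin.revPerm * w) (Fin.revPerm * u) := SA.bruhat_rev huw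
    have h2 : kBruhatLE n k (Fin.revPerm * w) (Fin.revPerm * u) :=
      SA.grass_case (SA.anti_grass ha) h1
    have h3 := SA.kbruhat_rev h2
    rwa [SA.revPerm_mul_revPerm_mul, SA.revPerm_mul_revPerm_mul] at h3
end

section
/- Let u ≤ w and x ≤ y in Bruhat order on S_n, and suppose there is z ∈ S_k × S_{n−k} such that x = uz and y = wz and both factorizations are length-additive, i.e. ℓ(uz) = ℓ(u) + ℓ(z) and ℓ(wz) = ℓ(w) + ℓ(z). Then u ≤_k w if and only if x ≤_k y. -/
open Finset Equiv

variable {n k : ℕ}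

def invSet (n : ℕ) (w : Perm (Fin n)) : Finset (Fin n × Fin n) :=
  univ.filter fun p => p.1 < p.2 ∧ w p.2 < w p.1

lemma len_eq_card_invSet (w : Perm (Fin n)) : len n w = #(invSet n w) := rfl

@[simp] lemma mem_invSet {w : Perm (Fin n)} {p : Fin n × Fin n} :
    p ∈ invSet n w ↔ p.1 < p.2 ∧ w p.2 < w p.1 := by simp [invSet]

@[simp] lemma invSet_one : invSet n 1 = ∅ := by ext; simpa using le_of_lt

def sortPair (p : Fin n × Fin n) : Fin n × Fin n := if p.1 < p.2 then p else p.swap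

lemma card_invSet_mul (v z : Perm (Fin n)) :
    #(invSet n (v * z)) = #((invSet n v \ invSet n z⁻¹) ∪ (invSet n z⁻¹ \ invSet n v)) := by
  refine card_nbij' (fun p => sortPair (z p.1, z p.2)) (fun p => sortPair (z⁻¹ p.1, z⁻¹ p.2))
    ?_ ?_ ?_ ?_ <;>
  · rintro ⟨i, j⟩ h
    simp only [coe_union, coe_sdiff, Set.mem_union, Set.mem_sdiff, mem_coe, mem_invSet,
      Perm.mul_apply, sortPair, Perm.coe_inv, Prod.swap_prod_mk] at h ⊢
    split_ifs <;> grind [Equiv.apply_eq_iff_eq]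

lemma len_inv (w : Perm (Fin n)) : len n w⁻¹ = len n w := by
  simpa [len_eq_card_invSet] using (card_invSet_mul 1 w).symm

lemma len_mul_add_two_mul_card_inter (v z : Perm (Fin n)) :
    len n (v * z) + 2 * #(invSet n v ∩ invSet n z⁻¹) = len n v + len n z := by
  have hmul := card_invSet_mul v z
  rw [card_union_of_disjoint disjoint_sdiff_sdiff] at hmul
  have hv := card_sdiff_add_card_inter (invSet n v) (invSet n z⁻¹)
  have hz := card_sdiff_add_card_inter (invSet n z⁻¹) (invSet n v)
  rw [inter_comm] at hz
  rw [← len_inv z, len_eq_card_invSet, len_eq_card_invSet, len_eq_card_invSet]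
  omega

lemma len_mul_eq_add_iff (v z : Perm (Fin n)) :
    len n (v * z) = len n v + len n z ↔ Disjoint (invSet n v) (invSet n z⁻¹) := by
  rw [disjoint_iff_inter_eq_empty, ← card_eq_zero]
  have := len_mul_add_two_mul_card_inter v z
  omega

lemma len_mul_inv_add_eq_iff (v z : Perm (Fin n)) :
    len n (v * z⁻¹) + len n z = len n v ↔ invSet n z ⊆ invSet n v := by
  have key := len_mul_add_two_mul_card_inter v z⁻¹
  rw [inv_inv, len_inv] at key
  rw [← inter_eq_right]
  constructor
  · intro h
    exact eq_of_subset_of_card_le inter_subset_right (by rw [← len_eq_card_invSet]; omega)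
  · intro h
    rw [h, ← len_eq_card_invSet] at key
    omega

lemma mem_invSet_swap {a b : Fin n} (hab : a < b) {p : Fin n × Fin n} :
    p ∈ invSet n (swap a b) ↔ p.1 < p.2 ∧ (p.1 = a ∧ p.2 ≤ b ∨ p.2 = b ∧ a ≤ p.1) := by
  rw [mem_invSet, swap_apply_def, swap_apply_def]
  split_ifs <;> grind

lemma invSet_swap {a b : Fin n} (hab : a < b) :
    invSet n (swap a b) = {a} ×ˢ Ioc a b ∪ Ioo a b ×ˢ {b} := by
  ext ⟨p, q⟩
  simp only [mem_invSet_swap hab, mem_union, mem_product, mem_singleton, mem_Ioc, mem_Ioo]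
  grind

lemma len_swap {a b : Fin n} (hab : a < b) : len n (swap a b) = 2 * #(Ioo a b) + 1 := by
  have hdisj : Disjoint ({a} ×ˢ Ioc a b) (Ioo a b ×ˢ {b}) :=
    disjoint_left.2 fun p h h' => by
      simp only [mem_product, mem_singleton, mem_Ioo] at h h'
      exact h'.1.1.ne' h.1
  rw [len_eq_card_invSet, invSet_swap hab, card_union_of_disjoint hdisj, card_product,
    card_product, ← Ioo_insert_right hab, card_insert_of_notMem (by simp)]
  simp only [card_singleton]
  ring

lemma card_inter_invSet_swap_add_card_between_le {a b : Fin n} (hab : a < b)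
    (v : Perm (Fin n)) (hv : v a < v b) :
    #(invSet n v ∩ invSet n (swap a b)) + #{c ∈ Ioo a b | v a < v c ∧ v c < v b} ≤
      #(Ioo a b) := by
  set L := {c ∈ Ioo a b | v c < v a}
  set R := {c ∈ Ioo a b | v b < v c}
  have hsub : invSet n v ∩ invSet n (swap a b) ⊆ {a} ×ˢ L ∪ R ×ˢ {b} := by
    rintro ⟨p, q⟩ h
    simp only [mem_inter, mem_invSet_swap hab, mem_invSet] at h
    simp only [L, R, mem_union, mem_product, mem_singleton, mem_filter, mem_Ioo]
    grind
  have hLRM : #L + #R + #{c ∈ Ioo a b | v a < v c ∧ v c < v b} ≤ #(Ioo a b) := by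
    simp only [L, R, card_filter, ← sum_add_distrib]
    refine (sum_le_card_nsmul _ _ 1 fun c _ => ?_).trans (by simp)
    split_ifs <;> grind
  have := (card_le_card hsub).trans (card_union_le _ _)
  simp only [card_product, card_singleton, one_mul, mul_one] at this
  omega

lemma len_add_two_mul_card_between_lt {a b : Fin n} (hab : a < b) (v : Perm (Fin n))
    (hv : v a < v b) :
    len n v + 2 * #{c ∈ Ioo a b | v a < v c ∧ v c < v b} < len n (v * swap a b) := by
  have key := len_mul_add_two_mul_card_inter v (swap a b)
  rw [swap_inv, len_swap hab] at key
  have := card_inter_invSet_swap_add_card_between_le hab v hv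
  omega

lemma lt_and_not_between_of_len_mul_swap {a b : Fin n} (hab : a < b) {v : Perm (Fin n)}
    (hlen : len n (v * swap a b) = len n v + 1) :
    v a < v b ∧ ∀ c ∈ Ioo a b, ¬(v a < v c ∧ v c < v b) := by
  have hv : v a < v b := by
    by_contra! hba
    have hv' : (v * swap a b) a < (v * swap a b) b := by
      simpa using lt_of_le_of_ne hba (v.injective.ne hab.ne')
    have := len_add_two_mul_card_between_lt hab _ hv'
    rw [mul_swap_mul_self] at this
    omega
  have := len_add_two_mul_card_between_lt hab v hv
  refine ⟨hv, fun c hc hbetween => ?_⟩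
  have : #{c ∈ Ioo a b | v a < v c ∧ v c < v b} = 0 := by omega
  exact (filter_eq_empty_iff.1 (card_eq_zero.1 this)) hc hbetween

lemma len_le_len_of_bruhatLE {v w : Perm (Fin n)} (h : bruhatLE n v w) : len n v ≤ len n w := by
  induction h with
  | refl => rfl
  | tail _ hstep ih => exact ih.trans hstep.2.le

lemma eq_of_bruhatLE_of_len_le {v w : Perm (Fin n)} (h : bruhatLE n v w)
    (hlen : len n w ≤ len n v) : v = w := by
  rcases Relation.ReflTransGen.cases_head h with rfl | ⟨m, hstep, hm⟩
  · rfl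
  · exact absurd (hstep.2.trans_le (len_le_len_of_bruhatLE hm)) hlen.not_gt

lemma exists_swap_of_bruhatCover {v w : Perm (Fin n)} (h : bruhatCover n v w) :
    ∃ a b, a < b ∧ w = v * swap a b := by
  obtain ⟨hle, hne, hlen⟩ := h
  rcases Relation.ReflTransGen.cases_head hle with rfl | ⟨m, ⟨⟨a, b, rfl⟩, hlt⟩, hm⟩
  · exact absurd rfl hne
  obtain rfl : v * swap a b = w := eq_of_bruhatLE_of_len_le hm (by omega)
  rcases lt_trichotomy a b with hab | rfl | hba
  · exact ⟨a, b, hab, rfl⟩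
  · simp [← Perm.one_def] at hlt
  · exact ⟨b, a, hba, by rw [swap_comm]⟩

lemma InParabolic.inv {z : Perm (Fin n)} (hz : InParabolic n k z) : InParabolic n k z⁻¹ :=
  fun i => by simpa using (hz (z⁻¹ i)).symm

lemma inParabolic_swap {a b : Fin n} (hab : ((a : ℕ) < k ↔ (b : ℕ) < k)) :
    InParabolic n k (swap a b) := by
  intro i
  rw [swap_apply_def]
  split_ifs <;> grind

lemma sigmaSet_mul_of_inParabolic (v : Perm (Fin n)) {z : Perm (Fin n)}
    (hz : InParabolic n k z) : sigmaSet n k (v * z) = sigmaSet n k v := by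
  have himage : (univ.filter fun i : Fin n => (i : ℕ) < k).image z =
      univ.filter fun i : Fin n => (i : ℕ) < k := by
    refine eq_of_subset_of_card_le (fun i hi => ?_) (card_image_of_injective _ z.injective).ge
    obtain ⟨j, hj, rfl⟩ := mem_image.1 hi
    simpa [hz j] using hj
  rw [sigmaSet, sigmaSet, Perm.coe_mul, ← image_image, himage]

lemma exists_swap_of_kCover {v w : Perm (Fin n)} (h : kCover n k v w) :
    ∃ a b : Fin n, a < b ∧ (a : ℕ) < k ∧ k ≤ (b : ℕ) ∧ w = v * swap a b ∧ v a < v b ∧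
      ∀ c ∈ Ioo a b, ¬(v a < v c ∧ v c < v b) := by
  obtain ⟨hcover, hsigma⟩ := h
  obtain ⟨a, b, hab, rfl⟩ := exists_swap_of_bruhatCover hcover
  have hcross : (a : ℕ) < k ∧ k ≤ (b : ℕ) := by
    by_contra hsame
    refine hsigma (sigmaSet_mul_of_inParabolic v (inParabolic_swap ?_)).symm
    have : (a : ℕ) < b := hab
    omega
  exact ⟨a, b, hab, hcross.1, hcross.2, rfl, lt_and_not_between_of_len_mul_swap hab hcover.2.2⟩

def blockPairs (n k : ℕ) : Finset (Fin n × Fin n) :=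
  univ.filter fun p => ((p.1 : ℕ) < k ↔ (p.2 : ℕ) < k)

lemma invSet_subset_blockPairs {z : Perm (Fin n)} (hz : InParabolic n k z) :
    invSet n z ⊆ blockPairs n k := by
  rintro ⟨p, q⟩ h
  simp only [mem_invSet, blockPairs, mem_filter, mem_univ, true_and] at h ⊢
  have := hz p
  have := hz q
  grind

lemma invSet_inter_blockPairs_subset_of_kCover {v w : Perm (Fin n)} (h : kCover n k v w) :
    invSet n w ∩ blockPairs n k ⊆ invSet n v := by
  obtain ⟨a, b, hab, ha, hb, rfl, hv, hbetween⟩ := exists_swap_of_kCover h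
  -- A same-block pair meeting `{a, b}` has its other end strictly between `a` and `b`, where
  -- `hbetween` applies.
  rintro ⟨p, q⟩ hpq
  simp only [mem_inter, mem_invSet, blockPairs, mem_filter, mem_univ, true_and,
    Perm.mul_apply, swap_apply_def] at hpq ⊢
  have hp := hbetween p
  have hq := hbetween q
  simp only [mem_Ioo] at hp hq
  split_ifs at hpq <;> grind [Equiv.apply_eq_iff_eq]

lemma invSet_inter_blockPairs_subset_of_kBruhatLE {v w : Perm (Fin n)}
    (h : kBruhatLE n k v w) : invSet n w ∩ blockPairs n k ⊆ invSet n v := by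
  induction h with
  | refl => exact inter_subset_left
  | tail _ hcover ih =>
    exact fun p hp => ih (mem_inter.2
      ⟨invSet_inter_blockPairs_subset_of_kCover hcover hp, (mem_inter.1 hp).2⟩)

lemma kCover_mul_right {v w t : Perm (Fin n)} (ht : InParabolic n k t) (h : kCover n k v w)
    (hlen : len n (w * t) = len n (v * t) + 1) : kCover n k (v * t) (w * t) := by
  obtain ⟨a, b, -, -, -, rfl, -⟩ := exists_swap_of_kCover h
  have hswap : v * swap a b * t = v * t * swap (t⁻¹ a) (t⁻¹ b) := by
    rw [swap_apply_apply t⁻¹ a b]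
    group
  refine ⟨⟨.single ⟨⟨_, _, hswap⟩, by omega⟩, fun heq => by rw [heq] at hlen; omega, hlen⟩, ?_⟩
  rw [sigmaSet_mul_of_inParabolic _ ht, sigmaSet_mul_of_inParabolic _ ht]
  exact h.2

lemma kBruhatLE_mul_right {u w t : Perm (Fin n)} (ht : InParabolic n k t) (d : ℤ)
    (hshift : ∀ v, kBruhatLE n k u v → kBruhatLE n k v w → (len n (v * t) : ℤ) = len n v + d)
    (h : kBruhatLE n k u w) : kBruhatLE n k (u * t) (w * t) := by
  induction h with
  | refl => exact .refl
  | @tail v w huv hcover ih =>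
    refine (ih fun v' huv' hv'v => hshift v' huv' (hv'v.tail hcover)).tail
      (kCover_mul_right ht hcover ?_)
    have hv := hshift v huv (.single hcover)
    have hw := hshift w (huv.tail hcover) .refl
    have := hcover.1.2.2
    omega

lemma kBruhatLE_mul_of_disjoint {u w z : Perm (Fin n)} (hz : InParabolic n k z)
    (hu : Disjoint (invSet n u) (invSet n z⁻¹)) (h : kBruhatLE n k u w) :
    kBruhatLE n k (u * z) (w * z) := by
  refine kBruhatLE_mul_right hz (len n z) (fun v huv _ => ?_) h
  have hv : Disjoint (invSet n v) (invSet n z⁻¹) := disjoint_left.2 fun p hpv hpz =>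
    disjoint_left.1 hu (invSet_inter_blockPairs_subset_of_kBruhatLE huv
      (mem_inter.2 ⟨hpv, invSet_subset_blockPairs hz.inv hpz⟩)) hpz
  exact_mod_cast (len_mul_eq_add_iff v z).2 hv

lemma kBruhatLE_mul_inv_of_subset {x y z : Perm (Fin n)} (hz : InParabolic n k z)
    (hy : invSet n z ⊆ invSet n y) (h : kBruhatLE n k x y) :
    kBruhatLE n k (x * z⁻¹) (y * z⁻¹) := by
  refine kBruhatLE_mul_right hz.inv (-len n z) (fun v _ hvy => ?_) h
  have hv : invSet n z ⊆ invSet n v := fun p hp => invSet_inter_blockPairs_subset_of_kBruhatLE hvy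
    (mem_inter.2 ⟨hy hp, invSet_subset_blockPairs hz hp⟩)
  have := (len_mul_inv_add_eq_iff v z).2 hv
  omega

theorem stmt_6_general (n k : ℕ) (u w x y z : Equiv.Perm (Fin n))
    (hz : InParabolic n k z)
    (hx : x = u * z) (hy : y = w * z)
    (hadd₁ : len n (u * z) = len n u + len n z)
    (hadd₂ : len n (w * z) = len n w + len n z) :
    kBruhatLE n k u w ↔ kBruhatLE n k x y := by
  subst hx hy
  have hu := (len_mul_eq_add_iff u z).1 hadd₁
  have hwz : invSet n z ⊆ invSet n (w * z) :=
    (len_mul_inv_add_eq_iff (w * z) z).1 (by rw [mul_inv_cancel_right]; omega)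
  refine ⟨kBruhatLE_mul_of_disjoint hz hu, fun h => ?_⟩
  simpa using kBruhatLE_mul_inv_of_subset hz hwz h

theorem stmt_6 (n k : ℕ) (hk : k ≤ n) (u w x y z : Equiv.Perm (Fin n))
    (hz : InParabolic n k z)
    (hx : x = u * z) (hy : y = w * z)
    (huw : bruhatLE n u w) (hxy : bruhatLE n x y)
    (hadd₁ : len n (u * z) = len n u + len n z)
    (hadd₂ : len n (w * z) = len n w + len n z) :
    kBruhatLE n k u w ↔ kBruhatLE n k x y :=
  stmt_6_general n k u w x y z hz hx hy hadd₁ hadd₂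
end

section
/- Let ∼ be the equivalence relation on the set of pairs {(u,w) ∈ S_n × S_n : u ≤_k w} generated by the relations (u,w) ∼ (uz, wz) for z ∈ S_k × S_{n−k} such that both products uz and wz are length-additive. Then every ∼-equivalence class contains exactly one pair (x,y) with y Grassmannian, and exactly one pair (x′,y′) with x′ anti-Grassmannian. -/
/-- The generating relation on pairs: (u,w) ∼ (uz,wz) for z ∈ S_k × S_{n−k} with
both products length-additive. -/
def pairMove (n k : ℕ) (p q : Equiv.Perm (Fin n) × Equiv.Perm (Fin n)) : Prop :=
  ∃ z : Equiv.Perm (Fin n), InParabolic n k z ∧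
    q = (p.1 * z, p.2 * z) ∧
    len n (p.1 * z) = len n p.1 + len n z ∧
    len n (p.2 * z) = len n p.2 + len n z

open Finset Equiv

namespace KBruhat

variable {n : ℕ}

def inversions (w : Perm (Fin n)) : Finset (Fin n × Fin n) :=
  univ.filter fun p => p.1 < p.2 ∧ w p.2 < w p.1

lemma mem_inversions {w : Perm (Fin n)} {p : Fin n × Fin n} :
    p ∈ inversions w ↔ p.1 < p.2 ∧ w p.2 < w p.1 := by
  simp [inversions]

lemma len_eq_sum (w : Perm (Fin n)) :
    len n w = ∑ p : Fin n × Fin n, if p.1 < p.2 ∧ w p.2 < w p.1 then 1 else 0 := by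
  rw [len, card_filter]

lemma len_mul_add_two_mul_card_sdiff (x z : Perm (Fin n)) :
    len n (x * z) + 2 * #(inversions z \ inversions (x * z)) = len n x + len n z := by
  have hsdiff : #(inversions z \ inversions (x * z)) = ∑ p : Fin n × Fin n,
      if p.1 < p.2 ∧ z p.2 < z p.1 ∧ x (z p.1) < x (z p.2) then 1 else 0 := by
    rw [← card_filter]
    congr 1
    ext p
    simp only [mem_sdiff, mem_inversions, mem_filter, mem_univ, true_and, Perm.mul_apply]
    constructor
    · rintro ⟨⟨h1, h2⟩, h3⟩
      refine ⟨h1, h2, (not_lt.mp (h3 ⟨h1, ·⟩)).lt_of_ne ?_⟩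
      exact fun h => h1.ne (z.injective (x.injective h))
    · rintro ⟨h1, h2, h3⟩
      exact ⟨⟨h1, h2⟩, fun h => h3.not_gt h.2⟩
  -- reindex the inversions of `x` along `z × z`, then fold the pairs with `p.2 < p.1` back
  have hx : len n x = ∑ p : Fin n × Fin n,
      ((if p.1 < p.2 ∧ z p.1 < z p.2 ∧ x (z p.2) < x (z p.1) then 1 else 0) +
        (if p.1 < p.2 ∧ z p.2 < z p.1 ∧ x (z p.1) < x (z p.2) then 1 else 0)) := by
    rw [len_eq_sum, ← (z.prodCongr z).sum_comp, sum_add_distrib,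
      ← (Equiv.prodComm _ _).sum_comp (g := fun p : Fin n × Fin n =>
        if p.1 < p.2 ∧ z p.2 < z p.1 ∧ x (z p.1) < x (z p.2) then 1 else 0),
      ← sum_add_distrib]
    refine sum_congr rfl fun p _ => ?_
    simp only [prodCongr_apply, Prod.map, prodComm_apply, Prod.fst_swap, Prod.snd_swap]
    rcases lt_trichotomy p.1 p.2 with h | h | h
    · simp [h, h.not_gt]
    · simp [h]
    · simp [h, h.not_gt]
  rw [hsdiff, hx, len_eq_sum, len_eq_sum, mul_sum, ← sum_add_distrib, ← sum_add_distrib]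
  refine sum_congr rfl fun p _ => ?_
  simp only [Perm.mul_apply]
  by_cases h : p.1 < p.2
  · have hz : z p.1 ≠ z p.2 := z.injective.ne h.ne
    rcases hz.lt_or_gt with hz | hz <;> rcases (x.injective.ne hz.ne).lt_or_gt with hx | hx <;>
      simp [h, hz, hz.not_gt, hx, hx.not_gt]
  · simp [h]

lemma len_mul_eq_add_of_subset {x z : Perm (Fin n)} (h : inversions z ⊆ inversions (x * z)) :
    len n (x * z) = len n x + len n z := by
  have := len_mul_add_two_mul_card_sdiff x z
  rwa [sdiff_eq_empty_iff_subset.mpr h, card_empty, mul_zero, add_zero] at this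

lemma mem_inversions_swap {a b : Fin n} (hab : a < b) {p : Fin n × Fin n}
    (hp : p ∈ inversions (swap a b)) :
    p = (a, b) ∨ (p.1 = a ∧ a < p.2 ∧ p.2 < b) ∨ (p.2 = b ∧ a < p.1 ∧ p.1 < b) := by
  obtain ⟨p1, p2⟩ := p
  rw [mem_inversions] at hp
  simp only [swap_apply_def, Prod.mk.injEq] at hp ⊢
  split_ifs at hp <;> grind

lemma len_mul_swap_add_card_sdiff (u : Perm (Fin n)) (a b : Fin n) :
    len n (u * swap a b) + #(inversions (swap a b) \ inversions (u * swap a b)) =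
      len n u + #(inversions (swap a b) \ inversions u) := by
  have h1 := len_mul_add_two_mul_card_sdiff u (swap a b)
  have h2 := len_mul_add_two_mul_card_sdiff (u * swap a b) (swap a b)
  rw [mul_assoc, swap_mul_self, mul_one] at h2
  omega

lemma sdiff_inversions_mul_swap_subset {u : Perm (Fin n)} {a b : Fin n} (hab : a < b)
    (hu : u a < u b) :
    inversions (swap a b) \ inversions (u * swap a b) ⊆ inversions (swap a b) \ inversions u := by
  intro p hp
  rw [mem_sdiff] at hp ⊢
  refine ⟨hp.1, fun hpu => hp.2 ?_⟩
  rw [mem_inversions] at hpu ⊢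
  rcases mem_inversions_swap hab hp.1 with rfl | ⟨h1, h2, h3⟩ | ⟨h1, h2, h3⟩
  · exact absurd hu hpu.2.not_gt
  · obtain ⟨p1, p2⟩ := p
    simp only at h1 h2 h3 hpu ⊢
    subst h1
    rw [Perm.mul_apply, Perm.mul_apply, swap_apply_left, swap_apply_of_ne_of_ne h2.ne' h3.ne]
    exact ⟨hpu.1, hpu.2.trans hu⟩
  · obtain ⟨p1, p2⟩ := p
    simp only at h1 h2 h3 hpu ⊢
    subst h1
    rw [Perm.mul_apply, Perm.mul_apply, swap_apply_right, swap_apply_of_ne_of_ne h2.ne' h3.ne]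
    exact ⟨hpu.1, hu.trans hpu.2⟩

lemma len_mul_swap_eq_add_card {u : Perm (Fin n)} {a b : Fin n} (hab : a < b) (hu : u a < u b) :
    len n (u * swap a b) =
      len n u + #((inversions (swap a b) ∩ inversions (u * swap a b)) \ inversions u) := by
  have := len_mul_swap_add_card_sdiff u a b
  have := card_sdiff_add_card_eq_card (sdiff_inversions_mul_swap_subset hab hu)
  have hset : (inversions (swap a b) \ inversions u) \
      (inversions (swap a b) \ inversions (u * swap a b)) =
      (inversions (swap a b) ∩ inversions (u * swap a b)) \ inversions u := by
    ext p
    simp only [mem_sdiff, mem_inter]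
    tauto
  rw [← hset]
  omega

lemma mk_mem_inversions_inter_sdiff {u : Perm (Fin n)} {a b c : Fin n} (hac : a < c)
    (hcb : c ≤ b) (hu : u a < u c) (hu' : u c ≤ u b) :
    (a, c) ∈ (inversions (swap a b) ∩ inversions (u * swap a b)) \ inversions u := by
  simp only [mem_sdiff, mem_inter, mem_inversions, Perm.mul_apply, swap_apply_left, not_and,
    not_lt]
  rcases hcb.lt_or_eq with hcb | rfl
  · rw [swap_apply_of_ne_of_ne hac.ne' hcb.ne]
    exact ⟨⟨⟨hac, hcb⟩, hac, hu'.lt_of_ne (u.injective.ne hcb.ne)⟩, fun _ => hu.le⟩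
  · simp [hac, hu, hu.le]

lemma len_lt_len_mul_swap {u : Perm (Fin n)} {a b : Fin n} (hab : a < b) (hu : u a < u b) :
    len n u < len n (u * swap a b) := by
  rw [len_mul_swap_eq_add_card hab hu, lt_add_iff_pos_right, card_pos]
  exact ⟨_, mk_mem_inversions_inter_sdiff hab le_rfl hu le_rfl⟩

lemma len_mul_swap_lt_len {u : Perm (Fin n)} {a b : Fin n} (hab : a < b) (hu : u b < u a) :
    len n (u * swap a b) < len n u := by
  simpa [mul_assoc] using len_lt_len_mul_swap (u := u * swap a b) hab (by simpa using hu)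

lemma len_add_one_lt_len_mul_swap {u : Perm (Fin n)} {a b c : Fin n} (hac : a < c) (hcb : c < b)
    (huac : u a < u c) (hucb : u c < u b) :
    len n u + 1 < len n (u * swap a b) := by
  rw [len_mul_swap_eq_add_card (hac.trans hcb) (huac.trans hucb), add_lt_add_iff_left,
    one_lt_card]
  exact ⟨_, mk_mem_inversions_inter_sdiff (hac.trans hcb) le_rfl (huac.trans hucb) le_rfl,
    _, mk_mem_inversions_inter_sdiff hac hcb.le huac hucb.le, by simp [hcb.ne']⟩

lemma len_le_of_bruhatLE {u w : Perm (Fin n)} (h : bruhatLE n u w) : len n u ≤ len n w := by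
  induction h with
  | refl => exact le_rfl
  | tail _ step ih => exact ih.trans step.2.le

lemma exists_swap_of_bruhatCover {u w : Perm (Fin n)} (h : bruhatCover n u w) :
    ∃ a b : Fin n, a < b ∧ w = u * swap a b := by
  obtain ⟨hle, hne, hlen⟩ := h
  rcases hle.cases_tail with rfl | ⟨m, hm, ⟨a, b, rfl⟩, hlt⟩
  · exact absurd rfl hne
  obtain rfl : u = m := by
    rcases hm.cases_tail with rfl | ⟨m', hm', -, hlt'⟩
    · rfl
    · have := len_le_of_bruhatLE hm'
      omega
  rcases lt_trichotomy a b with hab | rfl | hab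
  · exact ⟨a, b, hab, rfl⟩
  · simp [swap_self, ← Perm.one_def] at hlt
  · exact ⟨b, a, hab, by rw [swap_comm]⟩

def parabolic (n k : ℕ) : Subgroup (Perm (Fin n)) where
  carrier := {z | InParabolic n k z}
  mul_mem' ha hb i := (hb i).trans (ha _)
  one_mem' _ := Iff.rfl
  inv_mem' {z} hz i := by simpa using (hz (z⁻¹ i)).symm

variable {k : ℕ}

lemma swap_mem_parabolic {a b : Fin n} (h : (a : ℕ) < k ↔ (b : ℕ) < k) :
    swap a b ∈ parabolic n k := by
  intro i
  rcases eq_or_ne i a with rfl | hia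
  · simpa using h
  rcases eq_or_ne i b with rfl | hib
  · simpa using h.symm
  · rw [swap_apply_of_ne_of_ne hia hib]

lemma image_filter_lt_of_mem_parabolic {z : Perm (Fin n)} (hz : z ∈ parabolic n k) :
    (univ.filter fun i : Fin n => (i : ℕ) < k).image z =
      univ.filter fun i : Fin n => (i : ℕ) < k := by
  ext j
  simp only [mem_image, mem_filter, mem_univ, true_and]
  refine ⟨fun ⟨i, hi, hij⟩ => hij ▸ (hz i).mp hi, fun hj => ⟨z⁻¹ j, ?_, by simp⟩⟩
  simpa using (hz (z⁻¹ j)).mpr (by simpa using hj)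

lemma sigmaSet_mul_of_mem_parabolic (v : Perm (Fin n)) {z : Perm (Fin n)}
    (hz : z ∈ parabolic n k) : sigmaSet n k (v * z) = sigmaSet n k v := by
  rw [sigmaSet, sigmaSet, Perm.coe_mul, ← image_image, image_filter_lt_of_mem_parabolic hz]

lemma exists_swap_of_kCover {u w : Perm (Fin n)} (h : kCover n k u w) :
    ∃ a b : Fin n, (a : ℕ) < k ∧ k ≤ (b : ℕ) ∧ w = u * swap a b ∧ u a < u b ∧
      ∀ c, a < c → c < b → ¬ (u a < u c ∧ u c < u b) := by
  obtain ⟨hcov, hsig⟩ := h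
  obtain ⟨a, b, hab, rfl⟩ := exists_swap_of_bruhatCover hcov
  have hlen := hcov.2.2
  have hblk : ¬ ((a : ℕ) < k ↔ (b : ℕ) < k) := fun h =>
    hsig (sigmaSet_mul_of_mem_parabolic u (swap_mem_parabolic h)).symm
  have hu : u a < u b := by
    refine (u.injective.ne hab.ne).lt_of_le (le_of_not_gt fun hba => ?_)
    have := len_mul_swap_lt_len hab hba
    omega
  refine ⟨a, b, by grind, by grind, rfl, hu, fun c hac hcb ⟨h1, h2⟩ => ?_⟩
  have := len_add_one_lt_len_mul_swap hac hcb h1 h2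
  omega

lemma lt_of_kCover {u w : Perm (Fin n)} (h : kCover n k u w) {i j : Fin n} (hij : i < j)
    (hblk : (j : ℕ) < k ∨ k ≤ (i : ℕ)) (hw : w j < w i) : u j < u i := by
  obtain ⟨a, b, hak, hbk, rfl, hu, hmid⟩ := exists_swap_of_kCover h
  simp only [Perm.mul_apply, swap_apply_def] at hw
  have hinj : ∀ x y, u x = u y → x = y := fun _ _ h => u.injective h
  -- only `i = a` and `j = b` need `hmid`: then `j`, resp. `i`, lies strictly between `a` and `b`
  split_ifs at hw <;> grind

lemma lt_of_kBruhatLE {u w : Perm (Fin n)} (h : kBruhatLE n k u w) {i j : Fin n} (hij : i < j)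
    (hblk : (j : ℕ) < k ∨ k ≤ (i : ℕ)) (hw : w j < w i) : u j < u i := by
  induction h with
  | refl => exact hw
  | tail _ hcov ih => exact ih (lt_of_kCover hcov hij hblk hw)

lemma blocks_of_mem_inversions {z : Perm (Fin n)} (hz : z ∈ parabolic n k) {p : Fin n × Fin n}
    (hp : p ∈ inversions z) :
    ((p.2 : ℕ) < k ∨ k ≤ (p.1 : ℕ)) ∧ ((z p.1 : ℕ) < k ∨ k ≤ (z p.2 : ℕ)) := by
  rw [mem_inversions, Fin.lt_def, Fin.lt_def] at hp
  have h1 := hz p.1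
  have h2 := hz p.2
  omega

lemma exists_mem_parabolic_isGrassmannian (v : Perm (Fin n)) :
    ∃ z ∈ parabolic n k, IsGrassmannian n k (v * z) := by
  classical
  obtain ⟨z, hz, hmin⟩ := exists_min_image (univ.filter (· ∈ parabolic n k))
    (fun z => len n (v * z)) ⟨1, by simp [one_mem]⟩
  rw [mem_filter] at hz
  refine ⟨z, hz.2, fun i j hij hblk => (v * z).injective.ne hij.ne |>.lt_of_le ?_⟩
  refine le_of_not_gt fun hji => ?_
  have hs : z * swap i j ∈ parabolic n k :=
    mul_mem hz.2 (swap_mem_parabolic (by rw [Fin.lt_def] at hij; omega))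
  have := hmin _ (mem_filter.mpr ⟨mem_univ _, hs⟩)
  rw [← mul_assoc] at this
  exact (len_mul_swap_lt_len hij hji).not_ge this

lemma eq_one_of_isGrassmannian_mul {y z : Perm (Fin n)} (hy : IsGrassmannian n k y)
    (hyz : IsGrassmannian n k (y * z)) (hz : z ∈ parabolic n k) : z = 1 := by
  refine (Perm.monotone_iff z).mp (StrictMono.monotone fun i j hij => ?_)
  have hi := hz i
  have hj := hz j
  by_cases hblk : (j : ℕ) < k ∨ k ≤ (i : ℕ)
  · refine (z.injective.ne hij.ne).lt_of_le (le_of_not_gt fun hji => ?_)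
    exact (hyz i j hij hblk).not_gt (hy _ _ hji (by rw [Fin.lt_def] at hij; omega))
  · rw [Fin.lt_def]
    omega

lemma isAntiGrassmannian_iff {y : Perm (Fin n)} :
    IsAntiGrassmannian n k y ↔ IsGrassmannian n k (Fin.revPerm * y) := by
  simp [IsAntiGrassmannian, IsGrassmannian, Fin.rev_lt_rev]

lemma exists_eq_mul_of_eqvGen {p q : Perm (Fin n) × Perm (Fin n)}
    (h : Relation.EqvGen (pairMove n k) p q) :
    ∃ z ∈ parabolic n k, q = (p.1 * z, p.2 * z) := by
  induction h with
  | rel _ _ h =>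
    obtain ⟨z, hz, rfl, -⟩ := h
    exact ⟨z, hz, rfl⟩
  | refl => exact ⟨1, one_mem _, by simp⟩
  | symm _ _ _ ih =>
    obtain ⟨z, hz, rfl⟩ := ih
    exact ⟨z⁻¹, inv_mem hz, by simp⟩
  | trans _ _ _ _ _ ih₁ ih₂ =>
    obtain ⟨z, hz, rfl⟩ := ih₁
    obtain ⟨z', hz', rfl⟩ := ih₂
    exact ⟨z * z', mul_mem hz hz', by simp [mul_assoc]⟩

lemma eq_of_isGrassmannian_mul {v z z' : Perm (Fin n)} (hz : z ∈ parabolic n k)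
    (hz' : z' ∈ parabolic n k) (h : IsGrassmannian n k (v * z))
    (h' : IsGrassmannian n k (v * z')) : z = z' :=
  inv_mul_eq_one.mp <| eq_one_of_isGrassmannian_mul h (by simpa [mul_assoc] using h')
    (mul_mem (inv_mem hz) hz')

variable {u w : Perm (Fin n)}

theorem existsUnique_isGrassmannian (huw : kBruhatLE n k u w) :
    ∃! p : Perm (Fin n) × Perm (Fin n),
      Relation.EqvGen (pairMove n k) (u, w) p ∧ IsGrassmannian n k p.2 := by
  obtain ⟨z, hz, hwz⟩ := exists_mem_parabolic_isGrassmannian (k := k) w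
  have hw : inversions z⁻¹ ⊆ inversions w := fun p hp => by
    have hblk := (blocks_of_mem_inversions (inv_mem hz) hp).2
    rw [mem_inversions] at hp ⊢
    simpa using And.intro hp.1 (hwz _ _ hp.2 hblk)
  have hu : inversions z⁻¹ ⊆ inversions u := fun p hp => by
    have hblk := (blocks_of_mem_inversions (inv_mem hz) hp).1
    have hpw := mem_inversions.mp (hw hp)
    exact mem_inversions.mpr ⟨hpw.1, lt_of_kBruhatLE huw hpw.1 hblk hpw.2⟩
  have hmove : pairMove n k (u * z, w * z) (u, w) :=
    ⟨z⁻¹, inv_mem hz, by simp, len_mul_eq_add_of_subset (by simpa using hu),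
      len_mul_eq_add_of_subset (by simpa using hw)⟩
  refine ⟨(u * z, w * z), ⟨.symm _ _ (.rel _ _ hmove), hwz⟩, ?_⟩
  rintro q ⟨hq, hq₂⟩
  obtain ⟨z', hz', rfl⟩ := exists_eq_mul_of_eqvGen hq
  rw [eq_of_isGrassmannian_mul hz' hz hq₂ hwz]

theorem existsUnique_isAntiGrassmannian (huw : kBruhatLE n k u w) :
    ∃! p : Perm (Fin n) × Perm (Fin n),
      Relation.EqvGen (pairMove n k) (u, w) p ∧ IsAntiGrassmannian n k p.1 := by
  obtain ⟨z, hz, huz⟩ := exists_mem_parabolic_isGrassmannian (k := k) (Fin.revPerm * u)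
  rw [mul_assoc, ← isAntiGrassmannian_iff] at huz
  have hu : inversions z ⊆ inversions (u * z) := fun p hp => by
    have hblk := (blocks_of_mem_inversions hz hp).1
    rw [mem_inversions] at hp ⊢
    exact ⟨hp.1, huz _ _ hp.1 hblk⟩
  have hw : inversions z ⊆ inversions (w * z) := fun p hp => by
    have hblk := (blocks_of_mem_inversions hz hp).2
    have hpu := mem_inversions.mp (hu hp)
    rw [mem_inversions] at hp ⊢
    refine ⟨hp.1, ((w * z).injective.ne hp.1.ne').lt_of_le (le_of_not_gt fun h => ?_)⟩
    exact hpu.2.not_gt (lt_of_kBruhatLE huw hp.2 hblk h)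
  refine ⟨(u * z, w * z), ⟨.rel _ _ ⟨z, hz, rfl, len_mul_eq_add_of_subset hu,
    len_mul_eq_add_of_subset hw⟩, huz⟩, ?_⟩
  rintro q ⟨hq, hq₁⟩
  obtain ⟨z', hz', rfl⟩ := exists_eq_mul_of_eqvGen hq
  rw [isAntiGrassmannian_iff, ← mul_assoc] at hq₁ huz
  rw [eq_of_isGrassmannian_mul hz' hz hq₁ huz]

end KBruhat

theorem stmt_7_general (n k : ℕ) (u w : Equiv.Perm (Fin n))
    (huw : kBruhatLE n k u w) :
    (∃! p : Equiv.Perm (Fin n) × Equiv.Perm (Fin n),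
        Relation.EqvGen (pairMove n k) (u, w) p ∧ IsGrassmannian n k p.2) ∧
    (∃! p : Equiv.Perm (Fin n) × Equiv.Perm (Fin n),
        Relation.EqvGen (pairMove n k) (u, w) p ∧ IsAntiGrassmannian n k p.1) :=
  ⟨KBruhat.existsUnique_isGrassmannian huw, KBruhat.existsUnique_isAntiGrassmannian huw⟩

theorem stmt_7 (n k : ℕ) (hk : k ≤ n) (u w : Equiv.Perm (Fin n))
    (huw : kBruhatLE n k u w) :
    (∃! p : Equiv.Perm (Fin n) × Equiv.Perm (Fin n),
        Relation.EqvGen (pairMove n k) (u, w) p ∧ IsGrassmannian n k p.2) ∧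
    (∃! p : Equiv.Perm (Fin n) × Equiv.Perm (Fin n),
        Relation.EqvGen (pairMove n k) (u, w) p ∧ IsAntiGrassmannian n k p.1) :=
  stmt_7_general n k u w huw
end

section
/- Let V ⊆ ℂ^n be a k-dimensional linear subspace and set r_{ij} = r_{ij}(V) for i, j ∈ ℤ. Then this array is a cyclic rank matrix of type (k,n); that is: (C1') r_{ij} = j−i+1 for all j < i; (C2') r_{ij} = k for all j ≥ i+n−1; (C3) r_{ij} − r_{(i+1)j} ∈ {0,1} and r_{ij} − r_{i(j−1)} ∈ {0,1} for all i, j ∈ ℤ; (C4) if r_{(i+1)(j−1)} = r_{(i+1)j} = r_{i(j−1)} then r_{ij} = r_{(i+1)(j−1)}; (C5) r_{(i+n)(j+n)} = r_{ij} for all i, j ∈ ℤ. -/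
open scoped Classical in
/-- The coordinate projection Proj_S : ℂ^n → ℂ^n, sending e_m to e_m for m ∈ S
and to 0 otherwise. -/
noncomputable def coordProj (n : ℕ) (S : Set (Fin n)) : (Fin n → ℂ) →ₗ[ℂ] (Fin n → ℂ) where
  toFun v := fun m => if m ∈ S then v m else 0
  map_add' u v := by funext m; by_cases h : m ∈ S <;> simp [h]
  map_smul' c v := by funext m; by_cases h : m ∈ S <;> simp [h]

/-- The cyclic interval C(i,j) ⊆ [n] (0-based: m ∈ Fin n corresponds to m+1 ∈ [n]):
those m with m ≡ t (mod n) for some i ≤ t ≤ j. -/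
def cycSet (n : ℕ) (i j : ℤ) : Set (Fin n) :=
  {m | ∃ t : ℤ, i ≤ t ∧ t ≤ j ∧ (n : ℤ) ∣ ((m : ℤ) + 1 - t)}

/-- The cyclic rank matrix entry r_{ij}(V): for i ≤ j the rank of the projection of V
to the cyclically consecutive coordinates C(i,j); for i > j it is j − i + 1. -/
noncomputable def cycRank (n : ℕ) (V : Submodule ℂ (Fin n → ℂ)) (i j : ℤ) : ℤ :=
  if i ≤ j then (Module.finrank ℂ (V.map (coordProj n (cycSet n i j))) : ℤ)
  else j - i + 1

/-!
Write `ρ(S) = dim Proj_S(V)` and `K(S) ⊆ V` for the vectors of `V` vanishing on `S`, so that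
`ρ(S) = dim V - dim K(S)` and `K(S ∪ T) = K(S) ∩ K(T)`. Adding one coordinate to `S` raises `ρ`
by at most one; this gives (C3), as `C(i,j)` is `C(i+1,j)` or `C(i,j-1)` plus one residue class.
For (C4): if `D ⊆ A, B` and `ρ(D) = ρ(A) = ρ(B)`, the kernels agree, `K(D) = K(A) = K(B)`, hence
`K(A ∪ B) = K(D)`; take `A = C(i+1,j)`, `B = C(i,j-1)`, `D = C(i+1,j-1)`, so `A ∪ B = C(i,j)`.
The remaining properties are bookkeeping about cyclic intervals.
-/

open Module

section

variable {n : ℕ}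

open scoped Classical in
@[simp]
lemma coordProj_apply (S : Set (Fin n)) (v : Fin n → ℂ) (m : Fin n) :
    coordProj n S v m = if m ∈ S then v m else 0 := rfl

lemma coordProj_eq_zero_iff {S : Set (Fin n)} {v : Fin n → ℂ} :
    coordProj n S v = 0 ↔ ∀ m ∈ S, v m = 0 := by
  simp [funext_iff]

noncomputable def projRank (V : Submodule ℂ (Fin n → ℂ)) (S : Set (Fin n)) : ℕ :=
  finrank ℂ (V.map (coordProj n S))

noncomputable def vanishingOn (V : Submodule ℂ (Fin n → ℂ)) (S : Set (Fin n)) : Submodule ℂ V :=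
  LinearMap.ker ((coordProj n S).domRestrict V)

section projRank

variable (V : Submodule ℂ (Fin n → ℂ)) {S T : Set (Fin n)}

lemma mem_vanishingOn {v : V} : v ∈ vanishingOn V S ↔ ∀ m ∈ S, (v : Fin n → ℂ) m = 0 := by
  rw [vanishingOn, LinearMap.mem_ker, LinearMap.domRestrict_apply, coordProj_eq_zero_iff]

lemma vanishingOn_anti (h : S ⊆ T) : vanishingOn V T ≤ vanishingOn V S := fun _ hv ↦
  (mem_vanishingOn V).2 fun m hm ↦ (mem_vanishingOn V).1 hv m (h hm)

lemma vanishingOn_union : vanishingOn V (S ∪ T) = vanishingOn V S ⊓ vanishingOn V T := by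
  ext v
  simp only [Submodule.mem_inf, mem_vanishingOn, Set.mem_union, or_imp, forall_and]

lemma projRank_add_finrank_vanishingOn (S : Set (Fin n)) :
    projRank V S + finrank ℂ (vanishingOn V S) = finrank ℂ V := by
  rw [projRank, vanishingOn, ← LinearMap.range_domRestrict]
  exact LinearMap.finrank_range_add_finrank_ker _

lemma projRank_empty : projRank V ∅ = 0 := by
  have : coordProj n ∅ = 0 := by ext; simp
  simp [projRank, this]

lemma projRank_univ : projRank V Set.univ = finrank ℂ V := by
  have : coordProj n Set.univ = LinearMap.id := by ext; simp
  rw [projRank, this, Submodule.map_id]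

lemma projRank_singleton_le_one (a : Fin n) : projRank V {a} ≤ 1 := by
  have hle : V.map (coordProj n {a}) ≤ ℂ ∙ Pi.single a 1 := by
    rintro _ ⟨v, -, rfl⟩
    refine Submodule.mem_span_singleton.2 ⟨v a, funext fun m ↦ ?_⟩
    by_cases hm : m = a <;> simp [hm]
  calc projRank V {a} ≤ finrank ℂ (ℂ ∙ (Pi.single a 1 : Fin n → ℂ)) := Submodule.finrank_mono hle
    _ = 1 := finrank_span_singleton (by simp)

lemma projRank_le_one_of_subsingleton (hS : S.Subsingleton) : projRank V S ≤ 1 := by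
  rcases hS.eq_empty_or_singleton with rfl | ⟨a, rfl⟩
  · simp [projRank_empty]
  · exact projRank_singleton_le_one V a

lemma projRank_mono (h : S ⊆ T) : projRank V S ≤ projRank V T := by
  have := Submodule.finrank_mono (vanishingOn_anti V h)
  have := projRank_add_finrank_vanishingOn V S
  have := projRank_add_finrank_vanishingOn V T
  omega

lemma projRank_union_le : projRank V (S ∪ T) ≤ projRank V S + projRank V T := by
  have := Submodule.finrank_sup_add_finrank_inf_eq (vanishingOn V S) (vanishingOn V T)
  have := Submodule.finrank_le (vanishingOn V S ⊔ vanishingOn V T)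
  have := projRank_add_finrank_vanishingOn V S
  have := projRank_add_finrank_vanishingOn V T
  have := projRank_add_finrank_vanishingOn V (S ∪ T)
  rw [vanishingOn_union] at *
  omega

lemma vanishingOn_eq_of_projRank_eq (h : S ⊆ T) (hr : projRank V S = projRank V T) :
    vanishingOn V T = vanishingOn V S := by
  refine Submodule.eq_of_le_of_finrank_eq (vanishingOn_anti V h) ?_
  have := projRank_add_finrank_vanishingOn V S
  have := projRank_add_finrank_vanishingOn V T
  omega

lemma projRank_union_eq {A B D : Set (Fin n)} (hDA : D ⊆ A) (hDB : D ⊆ B)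
    (hA : projRank V D = projRank V A) (hB : projRank V D = projRank V B) :
    projRank V (A ∪ B) = projRank V D := by
  have hvan : vanishingOn V (A ∪ B) = vanishingOn V D := by
    rw [vanishingOn_union, vanishingOn_eq_of_projRank_eq V hDA hA,
      vanishingOn_eq_of_projRank_eq V hDB hB, inf_idem]
  have := projRank_add_finrank_vanishingOn V (A ∪ B)
  have := projRank_add_finrank_vanishingOn V D
  rw [hvan] at *
  omega

end projRank

section cycSet

variable {i j : ℤ}

lemma cycSet_mono {i' j' : ℤ} (hi : i ≤ i') (hj : j' ≤ j) : cycSet n i' j' ⊆ cycSet n i j :=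
  fun _ ⟨t, h₁, h₂, hdvd⟩ ↦ ⟨t, hi.trans h₁, h₂.trans hj, hdvd⟩

lemma cycSet_eq_empty (h : j < i) : cycSet n i j = ∅ :=
  Set.eq_empty_of_forall_notMem fun _ ⟨_, h₁, h₂, _⟩ ↦ by omega

lemma cycSet_self_subsingleton (i : ℤ) : (cycSet n i i).Subsingleton := by
  rintro m ⟨t, h₁, h₂, hm⟩ m' ⟨t', h₁', h₂', hm'⟩
  obtain rfl : t = i := le_antisymm h₂ h₁
  obtain rfl : t' = t := le_antisymm h₂' h₁'
  have hdvd : (n : ℤ) ∣ (m : ℤ) - m' := by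
    simpa using dvd_sub hm hm'
  have := Int.eq_zero_of_abs_lt_dvd hdvd (abs_lt.2 ⟨by omega, by omega⟩)
  exact Fin.ext (by omega)

lemma cycSet_eq_univ (h : i + n - 1 ≤ j) : cycSet n i j = Set.univ := by
  refine Set.eq_univ_of_forall fun m ↦ ?_
  have hn : (0 : ℤ) < n := by exact_mod_cast m.pos
  have := Int.emod_nonneg ((m : ℤ) + 1 - i) hn.ne'
  have := Int.emod_lt_of_pos ((m : ℤ) + 1 - i) hn
  refine ⟨i + ((m : ℤ) + 1 - i) % n, by omega, by omega, ?_⟩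
  simpa [sub_add_eq_sub_sub] using Int.dvd_self_sub_of_emod_eq (a := (m : ℤ) + 1 - i) (b := n) rfl

lemma cycSet_add_period (i j : ℤ) : cycSet n (i + n) (j + n) = cycSet n i j := by
  ext m
  constructor
  · rintro ⟨t, h₁, h₂, hdvd⟩
    refine ⟨t - n, by omega, by omega, ?_⟩
    rwa [sub_sub_eq_add_sub, add_sub_right_comm, dvd_add_self_right]
  · rintro ⟨t, h₁, h₂, hdvd⟩
    refine ⟨t + n, by omega, by omega, ?_⟩
    rwa [← sub_sub, dvd_sub_self_right]

lemma cycSet_union_cycSet {l : ℤ} (hil : i ≤ l + 1) (hlj : l ≤ j) :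
    cycSet n i l ∪ cycSet n (l + 1) j = cycSet n i j := by
  refine subset_antisymm (Set.union_subset (cycSet_mono le_rfl hlj) (cycSet_mono hil le_rfl)) ?_
  rintro m ⟨t, h₁, h₂, hdvd⟩
  rcases le_or_gt t l with htl | htl
  · exact Or.inl ⟨t, h₁, htl, hdvd⟩
  · exact Or.inr ⟨t, htl, h₂, hdvd⟩

lemma cycSet_eq_union (h : i < j) : cycSet n i j = cycSet n (i + 1) j ∪ cycSet n i (j - 1) := by
  refine subset_antisymm ?_ (Set.union_subset (cycSet_mono (by omega) le_rfl)
    (cycSet_mono le_rfl (by omega)))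
  rintro m ⟨t, h₁, h₂, hdvd⟩
  rcases h₁.eq_or_lt with hit | hit
  · exact Or.inr ⟨t, hit.le, by omega, hdvd⟩
  · exact Or.inl ⟨t, hit, h₂, hdvd⟩

end cycSet

section cycRank

variable (V : Submodule ℂ (Fin n → ℂ)) {i j : ℤ}

lemma cycRank_of_lt (h : j < i) : cycRank n V i j = j - i + 1 :=
  if_neg (not_le.2 h)

lemma cycRank_eq_projRank (h : i ≤ j + 1) : cycRank n V i j = projRank V (cycSet n i j) := by
  rcases h.lt_or_eq with h | rfl
  · exact if_pos (by omega)
  · rw [cycRank_of_lt V (by omega), cycSet_eq_empty (by omega), projRank_empty]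
    omega

lemma cycRank_eq_finrank (h : i + n - 1 ≤ j) : cycRank n V i j = finrank ℂ V := by
  rw [cycRank_eq_projRank V (by omega), cycSet_eq_univ h, projRank_univ]

lemma cycRank_sub_cycRank_succ_left (i j : ℤ) :
    cycRank n V i j - cycRank n V (i + 1) j = 0 ∨ cycRank n V i j - cycRank n V (i + 1) j = 1 := by
  rcases lt_or_ge j i with hji | hij
  · rw [cycRank_of_lt V hji, cycRank_of_lt V (by omega)]
    omega
  · have hle : projRank V (cycSet n i j) ≤
        projRank V (cycSet n i i) + projRank V (cycSet n (i + 1) j) :=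
      cycSet_union_cycSet (i := i) (l := i) (by omega) hij ▸ projRank_union_le V
    have hself := projRank_le_one_of_subsingleton V (cycSet_self_subsingleton (n := n) i)
    have hmono : projRank V (cycSet n (i + 1) j) ≤ projRank V (cycSet n i j) :=
      projRank_mono V (cycSet_mono (by omega) le_rfl)
    rw [cycRank_eq_projRank V (by omega), cycRank_eq_projRank V (by omega)]
    omega

lemma cycRank_sub_cycRank_pred_right (i j : ℤ) :
    cycRank n V i j - cycRank n V i (j - 1) = 0 ∨ cycRank n V i j - cycRank n V i (j - 1) = 1 := by
  rcases lt_or_ge j i with hji | hij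
  · rw [cycRank_of_lt V hji, cycRank_of_lt V (by omega)]
    omega
  · have hsplit : cycSet n i (j - 1) ∪ cycSet n j j = cycSet n i j := by
      simpa using cycSet_union_cycSet (n := n) (l := j - 1) (by omega) (by omega)
    have hle : projRank V (cycSet n i j) ≤
        projRank V (cycSet n i (j - 1)) + projRank V (cycSet n j j) :=
      hsplit ▸ projRank_union_le V
    have hself := projRank_le_one_of_subsingleton V (cycSet_self_subsingleton (n := n) j)
    have hmono : projRank V (cycSet n i (j - 1)) ≤ projRank V (cycSet n i j) :=
      projRank_mono V (cycSet_mono le_rfl (by omega))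
    rw [cycRank_eq_projRank V (by omega), cycRank_eq_projRank V (by omega)]
    omega

lemma cycRank_eq_of_eq_of_eq (h₁ : cycRank n V (i + 1) (j - 1) = cycRank n V (i + 1) j)
    (h₂ : cycRank n V (i + 1) j = cycRank n V i (j - 1)) :
    cycRank n V i j = cycRank n V (i + 1) (j - 1) := by
  rcases lt_or_ge i j with hij | hji
  · rw [cycRank_eq_projRank V (by omega), cycRank_eq_projRank V (by omega)] at h₁ ⊢
    rw [cycRank_eq_projRank V (by omega), cycRank_eq_projRank V (by omega)] at h₂
    rw [cycSet_eq_union hij]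
    exact_mod_cast projRank_union_eq V (cycSet_mono le_rfl (by omega))
      (cycSet_mono (by omega) le_rfl) (by omega) (by omega)
  · rw [cycRank_of_lt V (by omega), cycRank_of_lt V (by omega)] at h₁
    omega

lemma cycRank_add_period (i j : ℤ) : cycRank n V (i + n) (j + n) = cycRank n V i j := by
  rcases lt_or_ge j i with hji | hij
  · rw [cycRank_of_lt V hji, cycRank_of_lt V (by omega)]
    ring
  · rw [cycRank_eq_projRank V (by omega), cycRank_eq_projRank V (by omega), cycSet_add_period]

end cycRank

end

theorem stmt_9_general (n k : ℕ)
    (V : Submodule ℂ (Fin n → ℂ)) (hV : Module.finrank ℂ V = k) :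
    -- (C1')
    (∀ i j : ℤ, j < i → cycRank n V i j = j - i + 1) ∧
    -- (C2')
    (∀ i j : ℤ, i + n - 1 ≤ j → cycRank n V i j = k) ∧
    -- (C3)
    (∀ i j : ℤ,
      (cycRank n V i j - cycRank n V (i + 1) j = 0 ∨
        cycRank n V i j - cycRank n V (i + 1) j = 1) ∧
      (cycRank n V i j - cycRank n V i (j - 1) = 0 ∨
        cycRank n V i j - cycRank n V i (j - 1) = 1)) ∧
    -- (C4)
    (∀ i j : ℤ, cycRank n V (i + 1) (j - 1) = cycRank n V (i + 1) j →
      cycRank n V (i + 1) j = cycRank n V i (j - 1) →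
      cycRank n V i j = cycRank n V (i + 1) (j - 1)) ∧
    -- (C5)
    (∀ i j : ℤ, cycRank n V (i + n) (j + n) = cycRank n V i j) :=
  ⟨fun _ _ ↦ cycRank_of_lt V,
    fun _ _ h ↦ hV ▸ cycRank_eq_finrank V h,
    fun i j ↦ ⟨cycRank_sub_cycRank_succ_left V i j, cycRank_sub_cycRank_pred_right V i j⟩,
    fun _ _ ↦ cycRank_eq_of_eq_of_eq V,
    cycRank_add_period V⟩

theorem stmt_9 (n k : ℕ) (hn : 1 ≤ n) (hk : k ≤ n)
    (V : Submodule ℂ (Fin n → ℂ)) (hV : Module.finrank ℂ V = k) :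
    -- (C1')
    (∀ i j : ℤ, j < i → cycRank n V i j = j - i + 1) ∧
    -- (C2')
    (∀ i j : ℤ, i + n - 1 ≤ j → cycRank n V i j = k) ∧
    -- (C3)
    (∀ i j : ℤ,
      (cycRank n V i j - cycRank n V (i + 1) j = 0 ∨
        cycRank n V i j - cycRank n V (i + 1) j = 1) ∧
      (cycRank n V i j - cycRank n V i (j - 1) = 0 ∨
        cycRank n V i j - cycRank n V i (j - 1) = 1)) ∧
    -- (C4)
    (∀ i j : ℤ, cycRank n V (i + 1) (j - 1) = cycRank n V (i + 1) j →
      cycRank n V (i + 1) j = cycRank n V i (j - 1) →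
      cycRank n V i j = cycRank n V (i + 1) (j - 1)) ∧
    -- (C5)
    (∀ i j : ℤ, cycRank n V (i + n) (j + n) = cycRank n V i j) :=
  stmt_9_general n k V hV
end

section
/- Let u, w ∈ S_n and suppose z ∈ S_k × S_{n−k} is such that both products uz and wz are length-additive. Then {G_k : G_• ∈ X̊_u ∩ X̊^w} = {G_k : G_• ∈ X̊_{uz} ∩ X̊^{wz}}; that is, the open Richardson varieties X̊_u^w and X̊_{uz}^{wz} have the same image under the projection sending a complete flag in ℂ^n to its k-th subspace. -/
/-- A complete flag in ℂ^n: an increasing chain of subspaces with dim G_i = i. -/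
def IsCompleteFlag (n : ℕ) (G : Fin (n + 1) → Submodule ℂ (Fin n → ℂ)) : Prop :=
  Monotone G ∧ ∀ i : Fin (n + 1), Module.finrank ℂ (G i) = (i : ℕ)

/-- Membership in the open Schubert cell X̊_w: for all i, j ∈ [n],
dim Proj_{[j]}(G_i) = |w([i]) ∩ [j]|  (0-based indexing; the flag index i ∈ [n]
corresponds to `Fin.succ` of i−1). -/
def InOpenSchubertCell (n : ℕ) (w : Equiv.Perm (Fin n))
    (G : Fin (n + 1) → Submodule ℂ (Fin n → ℂ)) : Prop :=
  ∀ i j : Fin n,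
    Module.finrank ℂ ((G i.succ).map (coordProj n {m : Fin n | (m : ℕ) ≤ (j : ℕ)})) =
      ({m : Fin n | (m : ℕ) ≤ (i : ℕ) ∧ ((w m : ℕ)) ≤ (j : ℕ)}).ncard

/-- Membership in the open opposite Schubert cell X̊^w: for all i, j ∈ [n],
dim Proj_{[n−j+1,n]}(G_i) = |w([i]) ∩ [n−j+1,n]|. -/
def InOpenOppSchubertCell (n : ℕ) (w : Equiv.Perm (Fin n))
    (G : Fin (n + 1) → Submodule ℂ (Fin n → ℂ)) : Prop :=
  ∀ i j : Fin n,
    Module.finrank ℂ ((G i.succ).map (coordProj n {m : Fin n | n ≤ (m : ℕ) + (j : ℕ) + 1})) =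
      ({m : Fin n | (m : ℕ) ≤ (i : ℕ) ∧ n ≤ ((w m : ℕ)) + (j : ℕ) + 1}).ncard

open Module

namespace Submodule

variable {K M N : Type*} [Field K] [AddCommGroup M] [Module K M] [AddCommGroup N] [Module K N]

theorem map_inf_comap_map {A C : Submodule K M} (hAC : A ≤ C) (f : M →ₗ[K] N) :
    (C ⊓ comap f (A.map f)).map f = A.map f :=
  le_antisymm (map_le_iff_le_comap.2 inf_le_right) (map_mono (le_inf hAC (le_comap_map f A)))

variable [FiniteDimensional K M]

theorem finrank_map_add_finrank_inf_ker (f : M →ₗ[K] N) (X : Submodule K M) :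
    finrank K (X.map f) + finrank K ↥(X ⊓ LinearMap.ker f) = finrank K X := by
  have h := LinearMap.finrank_range_add_finrank_ker (f.comp X.subtype)
  rw [LinearMap.range_comp, range_subtype, LinearMap.ker_comp] at h
  rwa [← (comapSubtypeEquivOfLe (inf_le_left : X ⊓ LinearMap.ker f ≤ X)).finrank_eq, comap_inf,
    comap_subtype_self, top_inf_eq]

theorem finrank_map_add_finrank_le {A C : Submodule K M} (hAC : A ≤ C) (f : M →ₗ[K] N) :
    finrank K (C.map f) + finrank K A ≤ finrank K (A.map f) + finrank K C := by
  have hA := finrank_map_add_finrank_inf_ker f A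
  have hC := finrank_map_add_finrank_inf_ker f C
  have hker := finrank_mono (inf_le_inf_right (LinearMap.ker f) hAC)
  omega

theorem finrank_inf_comap_map_add {A C : Submodule K M} (hAC : A ≤ C) (f : M →ₗ[K] N) :
    finrank K ↥(C ⊓ comap f (A.map f)) + finrank K (C.map f) =
      finrank K C + finrank K (A.map f) := by
  have hker : C ⊓ comap f (A.map f) ⊓ LinearMap.ker f = C ⊓ LinearMap.ker f := by
    refine le_antisymm (inf_le_inf_right _ inf_le_left) fun x ⟨hxC, hxk⟩ => ⟨⟨hxC, ?_⟩, hxk⟩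
    show f x ∈ A.map f
    rw [LinearMap.mem_ker.mp hxk]
    exact zero_mem _
  have h := finrank_map_add_finrank_inf_ker f (C ⊓ comap f (A.map f))
  rw [hker, map_inf_comap_map hAC] at h
  have hC := finrank_map_add_finrank_inf_ker f C
  omega

theorem map_eq_of_le_of_finrank_map_le {A V : Submodule K M} (hAV : A ≤ V) (f : M →ₗ[K] N)
    (h : finrank K (V.map f) ≤ finrank K (A.map f)) : V.map f = A.map f :=
  (eq_of_le_of_finrank_le (map_mono hAV) h).symm

end Submodule

section Jumps

open Submodule

variable {K M : Type*} [Field K] [AddCommGroup M] [Module K M]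
  {P : ℕ → M →ₗ[K] M}

theorem map_eq_map_of_le_of_map_eq (hP : ∀ {j j' : ℕ}, j ≤ j' → P j ∘ₗ P j' = P j)
    {A V : Submodule K M} {j j' : ℕ} (hj : j ≤ j')
    (h : V.map (P j') = A.map (P j')) : V.map (P j) = A.map (P j) := by
  rw [← hP hj, map_comp, map_comp, h]

variable [FiniteDimensional K M]

theorem exists_between_with_late_jump (hP : ∀ {j j' : ℕ}, j ≤ j' → P j ∘ₗ P j' = P j)
    {A C : Submodule K M} (hAC : A ≤ C)
    (hdim : finrank K C = finrank K A + 2) {s t : ℕ} (hst : s < t)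
    (hC : ∀ j, finrank K (C.map (P j)) =
      finrank K (A.map (P j)) + (if s ≤ j then 1 else 0) + (if t ≤ j then 1 else 0)) :
    ∃ V : Submodule K M, A ≤ V ∧ V ≤ C ∧ finrank K V = finrank K A + 1 ∧
      ∀ j, finrank K (V.map (P j)) = finrank K (A.map (P j)) + if t ≤ j then 1 else 0 := by
  -- `P (t - 1)` sees only the first jump, so it kills a line of `C / A`
  set V := C ⊓ comap (P (t - 1)) (A.map (P (t - 1)))
  have hAV : A ≤ V := le_inf hAC (le_comap_map _ _)
  have hVC : V ≤ C := inf_le_left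
  have hdimV : finrank K V = finrank K A + 1 := by
    have h : finrank K V + finrank K (C.map (P (t - 1))) =
        finrank K C + finrank K (A.map (P (t - 1))) := finrank_inf_comap_map_add hAC _
    have hCt := hC (t - 1)
    rw [if_pos (by omega), if_neg (by omega)] at hCt
    omega
  refine ⟨V, hAV, hVC, hdimV, fun j => ?_⟩
  split_ifs with hj
  · have hAV' := finrank_map_add_finrank_le hAV (P j)
    have hVC' := finrank_map_add_finrank_le hVC (P j)
    have hCj := hC j
    rw [if_pos (by omega), if_pos hj] at hCj
    omega
  · rw [map_eq_map_of_le_of_map_eq hP (by omega : j ≤ t - 1) (map_inf_comap_map hAC _),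
      Nat.add_zero]

theorem finrank_map_eq_early_jump_of_ne (hP : ∀ {j j' : ℕ}, j ≤ j' → P j ∘ₗ P j' = P j)
    {A B C V : Submodule K M} (hAB : A ≤ B) (hBC : B ≤ C)
    (hAV : A ≤ V) (hVC : V ≤ C) (hB : finrank K B = finrank K A + 1)
    (hCdim : finrank K C = finrank K A + 2) (hV : finrank K V = finrank K A + 1) (hVB : V ≠ B)
    {s t : ℕ} (hst : s < t)
    (hC : ∀ j, finrank K (C.map (P j)) =
      finrank K (A.map (P j)) + (if s ≤ j then 1 else 0) + (if t ≤ j then 1 else 0))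
    (hBj : ∀ j, finrank K (B.map (P j)) = finrank K (A.map (P j)) + if t ≤ j then 1 else 0)
    (j : ℕ) : finrank K (V.map (P j)) = finrank K (A.map (P j)) + if s ≤ j then 1 else 0 := by
  -- `B` and `V` both lie in `W`, a hyperplane of `C`, so `V = B` unless `V` jumps at `s`.
  have hjump : V.map (P s) ≠ A.map (P s) := by
    intro hVs
    set W := C ⊓ comap (P s) (A.map (P s))
    have hW : finrank K W + finrank K (C.map (P s)) =
        finrank K C + finrank K (A.map (P s)) := finrank_inf_comap_map_add (hAB.trans hBC) _
    have hCs := hC s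
    have hBs := hBj s
    rw [if_pos le_rfl, if_neg (by omega)] at hCs
    rw [if_neg (by omega)] at hBs
    have hVW : V ≤ W := le_inf hVC (map_le_iff_le_comap.1 hVs.le)
    have hBW : B ≤ W :=
      le_inf hBC (map_le_iff_le_comap.1 (map_eq_of_le_of_finrank_map_le hAB _ hBs.le).le)
    exact hVB ((eq_of_le_of_finrank_le hVW (by omega)).trans
      (eq_of_le_of_finrank_le hBW (by omega)).symm)
  have hAV' := finrank_map_add_finrank_le hAV (P j)
  have hAVj := finrank_mono (map_mono hAV : A.map (P j) ≤ V.map (P j))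
  split_ifs with hj
  · by_contra hne
    exact hjump (map_eq_map_of_le_of_map_eq hP hj
      (map_eq_of_le_of_finrank_map_le hAV _ (by omega)))
  · have hVCj := finrank_mono (map_mono hVC : V.map (P j) ≤ C.map (P j))
    have hCj := hC j
    rw [if_neg hj, if_neg (by omega)] at hCj
    omega

end Jumps

theorem exists_between_swapping_jumps {K M : Type*} [Field K] [AddCommGroup M] [Module K M]
    [FiniteDimensional K M] {P Q : ℕ → M →ₗ[K] M}
    (hP : ∀ {j j' : ℕ}, j ≤ j' → P j ∘ₗ P j' = P j)
    (hQ : ∀ {j j' : ℕ}, j ≤ j' → Q j ∘ₗ Q j' = Q j)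
    {A B C : Submodule K M} (hAB : A ≤ B) (hBC : B ≤ C)
    (hB : finrank K B = finrank K A + 1) (hC : finrank K C = finrank K A + 2)
    {sP tP sQ tQ : ℕ} (hsP : sP < tP) (hsQ : sQ < tQ)
    (hCP : ∀ j, finrank K (C.map (P j)) =
      finrank K (A.map (P j)) + (if sP ≤ j then 1 else 0) + (if tP ≤ j then 1 else 0))
    (hBP : ∀ j, finrank K (B.map (P j)) = finrank K (A.map (P j)) + if sP ≤ j then 1 else 0)
    (hCQ : ∀ j, finrank K (C.map (Q j)) =
      finrank K (A.map (Q j)) + (if sQ ≤ j then 1 else 0) + (if tQ ≤ j then 1 else 0))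
    (hBQ : ∀ j, finrank K (B.map (Q j)) = finrank K (A.map (Q j)) + if tQ ≤ j then 1 else 0) :
    ∃ V : Submodule K M, A ≤ V ∧ V ≤ C ∧ finrank K V = finrank K A + 1 ∧
      (∀ j, finrank K (V.map (P j)) = finrank K (A.map (P j)) + if tP ≤ j then 1 else 0) ∧
      (∀ j, finrank K (V.map (Q j)) = finrank K (A.map (Q j)) + if sQ ≤ j then 1 else 0) := by
  obtain ⟨V, hAV, hVC, hV, hVP⟩ := exists_between_with_late_jump hP (hAB.trans hBC) hC hsP hCP
  have hVB : V ≠ B := by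
    rintro rfl
    have h₁ := hVP (tP - 1)
    have h₂ := hBP (tP - 1)
    rw [if_neg (by omega)] at h₁
    rw [if_pos (by omega)] at h₂
    omega
  exact ⟨V, hAV, hVC, hV, hVP,
    finrank_map_eq_early_jump_of_ne hQ hAB hBC hAV hVC hB hC hV hVB hsQ hCQ hBQ⟩

def adjSwap (n i : ℕ) (hi : i + 1 < n) : Equiv.Perm (Fin n) :=
  Equiv.swap ⟨i, by omega⟩ ⟨i + 1, hi⟩

section AdjSwap

variable {n i : ℕ} {hi : i + 1 < n}

theorem adjSwap_apply_left : adjSwap n i hi ⟨i, by omega⟩ = ⟨i + 1, hi⟩ :=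
  Equiv.swap_apply_left _ _

theorem adjSwap_apply_right : adjSwap n i hi ⟨i + 1, hi⟩ = ⟨i, by omega⟩ :=
  Equiv.swap_apply_right _ _

theorem adjSwap_mul_self : adjSwap n i hi * adjSwap n i hi = 1 :=
  Equiv.swap_mul_self _ _

theorem adjSwap_adjSwap (m : Fin n) :
    adjSwap n i hi (adjSwap n i hi m) = m :=
  Equiv.swap_apply_self _ _ _

theorem val_adjSwap (m : Fin n) :
    (adjSwap n i hi m : ℕ) = if (m : ℕ) = i then i + 1 else if (m : ℕ) = i + 1 then i else m := by
  unfold adjSwap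
  rw [Equiv.swap_apply_def]
  simp only [Fin.ext_iff]
  split_ifs <;> rfl

theorem adjSwap_lt_adjSwap {a b : Fin n} (hab : a < b)
    (hne : (a, b) ≠ (⟨i, by omega⟩, ⟨i + 1, hi⟩)) : adjSwap n i hi a < adjSwap n i hi b := by
  simp only [ne_eq, Prod.mk.injEq, Fin.ext_iff] at hne
  rw [Fin.lt_def] at hab ⊢
  rw [val_adjSwap, val_adjSwap]
  split_ifs <;> omega

theorem adjSwap_lt_iff {a : ℕ} (ha : a ≠ i + 1) (m : Fin n) :
    (adjSwap n i hi m : ℕ) < a ↔ (m : ℕ) < a := by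
  rw [val_adjSwap]
  split_ifs <;> omega

theorem ncard_val_lt_succ (p : Fin n → Prop) [DecidablePred p] {a : ℕ} (ha : a < n) :
    {m : Fin n | (m : ℕ) < a + 1 ∧ p m}.ncard =
      {m : Fin n | (m : ℕ) < a ∧ p m}.ncard + if p ⟨a, ha⟩ then 1 else 0 := by
  split_ifs with h
  · rw [← Set.ncard_insert_of_notMem (a := (⟨a, ha⟩ : Fin n)) (by simp)]
    congr 1
    ext m
    simp only [Set.mem_ofPred_eq, Set.mem_insert_iff, Fin.ext_iff]
    grind
  · congr 1
    ext m
    simp only [Set.mem_ofPred_eq]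
    grind

theorem ncard_adjSwap_of_ne (p : Fin n → Prop) {a : ℕ} (ha : a ≠ i + 1) :
    {m : Fin n | (m : ℕ) < a ∧ p (adjSwap n i hi m)}.ncard =
      {m : Fin n | (m : ℕ) < a ∧ p m}.ncard := by
  symm
  rw [← Set.ncard_preimage_of_injective_subset_range (adjSwap n i hi).injective (by simp)]
  congr 1
  ext m
  simp only [Set.mem_ofPred_eq, Set.mem_preimage, adjSwap_lt_iff ha]

theorem ncard_adjSwap_succ (p : Fin n → Prop) [DecidablePred p] :
    {m : Fin n | (m : ℕ) < i + 1 ∧ p (adjSwap n i hi m)}.ncard =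
      {m : Fin n | (m : ℕ) < i ∧ p m}.ncard + if p ⟨i + 1, hi⟩ then 1 else 0 := by
  rw [ncard_val_lt_succ _ (by omega), adjSwap_apply_left,
    ncard_adjSwap_of_ne p (by omega : i ≠ i + 1)]

end AdjSwap

theorem coordProj_comp_coordProj {n : ℕ} {S T : Set (Fin n)} (h : S ⊆ T) :
    coordProj n S ∘ₗ coordProj n T = coordProj n S := by
  ext v m
  simp only [LinearMap.comp_apply, coordProj, LinearMap.coe_mk, AddHom.coe_mk]
  split_ifs with hS hT <;> first | rfl | exact absurd (h hS) hT

theorem coordProj_le_comp_coordProj_le {n : ℕ} (φ : Fin n → ℕ) {j j' : ℕ} (hj : j ≤ j') :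
    coordProj n {m | φ m ≤ j} ∘ₗ coordProj n {m | φ m ≤ j'} = coordProj n {m | φ m ≤ j} :=
  coordProj_comp_coordProj fun _ hm => le_trans hm hj

/-- For `φ m = m` this is the condition defining `X̊_v`, for `φ m = n - 1 - m` the one defining
`X̊^v`; treating both at once lets one argument serve for the two cells. -/
def HasRankProfile {n : ℕ} (φ : Fin n → ℕ) (v : Equiv.Perm (Fin n))
    (G : Fin (n + 1) → Submodule ℂ (Fin n → ℂ)) : Prop :=
  ∀ (a : Fin (n + 1)) (j : ℕ), finrank ℂ ((G a).map (coordProj n {m | φ m ≤ j})) =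
    {m : Fin n | (m : ℕ) < a ∧ φ (v m) ≤ j}.ncard

section RankProfile

variable {n : ℕ} {φ : Fin n → ℕ} {v : Equiv.Perm (Fin n)}
  {G : Fin (n + 1) → Submodule ℂ (Fin n → ℂ)}

theorem HasRankProfile.finrank_succ (h : HasRankProfile φ v G) {a : ℕ} (ha : a < n) (j : ℕ) :
    finrank ℂ ((G ⟨a + 1, by omega⟩).map (coordProj n {m | φ m ≤ j})) =
      finrank ℂ ((G ⟨a, by omega⟩).map (coordProj n {m | φ m ≤ j})) +
        if φ (v ⟨a, ha⟩) ≤ j then 1 else 0 := by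
  rw [h, h, ncard_val_lt_succ _ ha]

theorem hasRankProfile_iff (hφ : ∀ m, φ m < n) (hG : IsCompleteFlag n G) :
    HasRankProfile φ v G ↔ ∀ i j : Fin n,
      finrank ℂ ((G i.succ).map (coordProj n {m | φ m ≤ j})) =
        {m : Fin n | (m : ℕ) ≤ i ∧ φ (v m) ≤ j}.ncard := by
  refine ⟨fun h i j => by simpa only [Fin.val_succ, Nat.lt_succ_iff] using h i.succ j,
    fun h a j => ?_⟩
  cases a using Fin.cases with
  | zero =>
    have hbot : G 0 = ⊥ := Submodule.finrank_eq_zero.mp (hG.2 0)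
    simp [hbot]
  | succ i =>
    -- coordinate orders are bounded by `n - 1`, so only `j < n` carries information
    have hj : ∀ m, φ m ≤ j ↔ φ m ≤ min j (n - 1) := fun m => by have := hφ m; omega
    have hS : {m | φ m ≤ j} = {m | φ m ≤ min j (n - 1)} := Set.ext hj
    rw [hS]
    simpa only [Fin.val_succ, Nat.lt_succ_iff, ← hj] using
      h i ⟨min j (n - 1), by have := i.isLt; omega⟩

end RankProfile

theorem inOpenSchubertCell_iff {n : ℕ} {u : Equiv.Perm (Fin n)}
    {G : Fin (n + 1) → Submodule ℂ (Fin n → ℂ)} (hG : IsCompleteFlag n G) :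
    InOpenSchubertCell n u G ↔ HasRankProfile (fun m => m) u G :=
  (hasRankProfile_iff (fun m => m.isLt) hG).symm

theorem inOpenOppSchubertCell_iff {n : ℕ} {w : Equiv.Perm (Fin n)}
    {G : Fin (n + 1) → Submodule ℂ (Fin n → ℂ)} (hG : IsCompleteFlag n G) :
    InOpenOppSchubertCell n w G ↔ HasRankProfile (fun m => n - 1 - m) w G := by
  have key : ∀ m j : Fin n, n ≤ (m : ℕ) + j + 1 ↔ n - 1 - m ≤ (j : ℕ) := fun m j => by omega
  have hS : ∀ j : Fin n, {m : Fin n | n ≤ (m : ℕ) + j + 1} = {m : Fin n | n - 1 - m ≤ (j : ℕ)} :=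
    fun j => Set.ext fun m => key m j
  rw [hasRankProfile_iff (fun m => by omega) hG]
  refine forall₂_congr fun i j => ?_
  rw [hS j]
  simp only [key]

section FlagStep

variable {n i : ℕ} {G : Fin (n + 1) → Submodule ℂ (Fin n → ℂ)}
  {V : Submodule ℂ (Fin n → ℂ)}

theorem IsCompleteFlag.update (hG : IsCompleteFlag n G) (hi : i + 1 < n)
    (hAV : G ⟨i, by omega⟩ ≤ V) (hVC : V ≤ G ⟨i + 2, by omega⟩) (hV : finrank ℂ V = i + 1) :
    IsCompleteFlag n (Function.update G ⟨i + 1, by omega⟩ V) := by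
  refine ⟨Fin.monotone_iff_le_succ.2 fun b => ?_, fun c => ?_⟩
  · simp only [Function.update_apply, Fin.ext_iff, Fin.val_castSucc, Fin.val_succ]
    split_ifs with h₁ h₂ h₂
    · omega
    · convert hVC using 2
      ext
      simp only [Fin.val_succ]
      omega
    · convert hAV using 2
      ext
      simp only [Fin.val_castSucc]
      omega
    · exact hG.1 Fin.castSucc_lt_succ.le
  · by_cases hc : c = ⟨i + 1, by omega⟩
    · rw [hc, Function.update_self, hV]
    · rw [Function.update_of_ne hc]
      exact hG.2 c

theorem HasRankProfile.update_mul_adjSwap {hi : i + 1 < n} {φ : Fin n → ℕ}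
    {v : Equiv.Perm (Fin n)} (h : HasRankProfile φ v G)
    (hV : ∀ j, finrank ℂ (V.map (coordProj n {m | φ m ≤ j})) =
      {m : Fin n | (m : ℕ) < i + 1 ∧ φ (v (adjSwap n i hi m)) ≤ j}.ncard) :
    HasRankProfile φ (v * adjSwap n i hi) (Function.update G ⟨i + 1, by omega⟩ V) := by
  intro a j
  by_cases ha : a = ⟨i + 1, by omega⟩
  · subst ha
    rw [Function.update_self]
    exact hV j
  · rw [Function.update_of_ne ha, h a j]
    exact (ncard_adjSwap_of_ne _ fun h' => ha (Fin.ext h')).symm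

end FlagStep

theorem exists_flag_hasRankProfile_mul_adjSwap {n i : ℕ} (hi : i + 1 < n) {φ ψ : Fin n → ℕ}
    {v w : Equiv.Perm (Fin n)} (hφ : φ (v ⟨i, by omega⟩) < φ (v ⟨i + 1, hi⟩))
    (hψ : ψ (w ⟨i + 1, hi⟩) < ψ (w ⟨i, by omega⟩)) {G : Fin (n + 1) → Submodule ℂ (Fin n → ℂ)}
    (hG : IsCompleteFlag n G) (hv : HasRankProfile φ v G) (hw : HasRankProfile ψ w G) :
    ∃ G' : Fin (n + 1) → Submodule ℂ (Fin n → ℂ), IsCompleteFlag n G' ∧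
      HasRankProfile φ (v * adjSwap n i hi) G' ∧ HasRankProfile ψ (w * adjSwap n i hi) G' ∧
      ∀ a : Fin (n + 1), (a : ℕ) ≠ i + 1 → G' a = G a := by
  have hAB : G ⟨i, by omega⟩ ≤ G ⟨i + 1, by omega⟩ := hG.1 (Fin.mk_le_mk.2 (by omega))
  have hBC : G ⟨i + 1, by omega⟩ ≤ G ⟨i + 2, by omega⟩ := hG.1 (Fin.mk_le_mk.2 (by omega))
  have hB : finrank ℂ (G ⟨i + 1, by omega⟩) = finrank ℂ (G ⟨i, by omega⟩) + 1 := by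
    rw [hG.2, hG.2]
  have hC : finrank ℂ (G ⟨i + 2, by omega⟩) = finrank ℂ (G ⟨i, by omega⟩) + 2 := by
    rw [hG.2, hG.2]
  obtain ⟨V, hAV, hVC, hV, hVφ, hVψ⟩ := exists_between_swapping_jumps
    (coordProj_le_comp_coordProj_le φ) (coordProj_le_comp_coordProj_le ψ) hAB hBC hB hC hφ hψ
    (fun j => by rw [hv.finrank_succ (a := i + 1) hi, hv.finrank_succ (a := i)])
    (fun j => hv.finrank_succ (a := i) _ j)
    (fun j => by rw [hw.finrank_succ (a := i + 1) hi, hw.finrank_succ (a := i), add_right_comm])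
    (fun j => hw.finrank_succ (a := i) _ j)
  refine ⟨Function.update G ⟨i + 1, by omega⟩ V, hG.update hi hAV hVC (by rw [hV, hG.2]),
    hv.update_mul_adjSwap fun j => ?_, hw.update_mul_adjSwap fun j => ?_,
    fun a ha => Function.update_of_ne (fun h => ha (congrArg Fin.val h)) _ _⟩
  · rw [hVφ, hv]
    exact (ncard_adjSwap_succ fun m => φ (v m) ≤ j).symm
  · rw [hVψ, hw]
    exact (ncard_adjSwap_succ fun m => ψ (w m) ≤ j).symm

section Length

variable {n : ℕ}

def inversions (w : Equiv.Perm (Fin n)) : Finset (Fin n × Fin n) :=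
  Finset.univ.filter fun p => p.1 < p.2 ∧ w p.2 < w p.1

theorem len_eq_card_inversions (w : Equiv.Perm (Fin n)) : len n w = (inversions w).card := rfl

theorem mem_inversions {w : Equiv.Perm (Fin n)} {p : Fin n × Fin n} :
    p ∈ inversions w ↔ p.1 < p.2 ∧ w p.2 < w p.1 := by
  simp [inversions]

theorem len_mul_le (u z : Equiv.Perm (Fin n)) : len n (u * z) ≤ len n u + len n z := by
  rw [len_eq_card_inversions, len_eq_card_inversions, len_eq_card_inversions,
    ← Finset.card_filter_add_card_filter_not (p := fun p => z p.2 < z p.1)]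
  have hz : ((inversions (u * z)).filter fun p => z p.2 < z p.1).card ≤ (inversions z).card :=
    Finset.card_le_card fun p hp => by
      rw [Finset.mem_filter, mem_inversions] at hp
      exact mem_inversions.2 ⟨hp.1.1, hp.2⟩
  -- an inversion of `u z` that is not one of `z` is carried by `z` to an inversion of `u`
  have hu : ((inversions (u * z)).filter fun p => ¬ z p.2 < z p.1).card ≤ (inversions u).card := by
    refine Finset.card_le_card_of_injOn (Prod.map z z) (fun p hp => ?_) fun p _ q _ h =>
      Prod.ext (z.injective (congrArg Prod.fst h)) (z.injective (congrArg Prod.snd h))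
    rw [Finset.mem_coe, Finset.mem_filter, mem_inversions] at hp
    exact mem_inversions.2
      ⟨lt_of_le_of_ne (not_lt.1 hp.2) (z.injective.ne hp.1.1.ne), hp.1.2⟩
  omega

theorem len_mul_adjSwap {i : ℕ} (hi : i + 1 < n) {u : Equiv.Perm (Fin n)}
    (hu : u ⟨i, by omega⟩ < u ⟨i + 1, hi⟩) : len n (u * adjSwap n i hi) = len n u + 1 := by
  set s := adjSwap n i hi
  set x₀ : Fin n × Fin n := (⟨i, by omega⟩, ⟨i + 1, hi⟩)
  have hx₀ : x₀ ∈ inversions (u * s) :=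
    mem_inversions.2 ⟨Fin.mk_lt_mk.2 (by omega), by
      simpa only [Equiv.Perm.mul_apply, x₀, s, adjSwap_apply_left, adjSwap_apply_right] using hu⟩
  rw [len_eq_card_inversions, len_eq_card_inversions, ← Finset.card_erase_add_one hx₀]
  congr 1
  -- `s × s` matches the inversions of `u s` other than `x₀` with those of `u`
  refine Finset.card_nbij' (Prod.map s s) (Prod.map s s) (fun p hp => ?_) (fun p hp => ?_)
    (fun p _ => Prod.ext (adjSwap_adjSwap _) (adjSwap_adjSwap _))
    (fun p _ => Prod.ext (adjSwap_adjSwap _) (adjSwap_adjSwap _))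
  · rw [Finset.mem_coe, Finset.mem_erase, mem_inversions] at hp
    exact mem_inversions.2 ⟨adjSwap_lt_adjSwap hp.2.1 hp.1, hp.2.2⟩
  · rw [Finset.mem_coe, mem_inversions] at hp
    have hne : p ≠ x₀ := by
      rintro rfl
      exact absurd hu (not_lt.2 hp.2.le)
    refine Finset.mem_coe.2 (Finset.mem_erase.2 ⟨fun h => ?_, mem_inversions.2 ⟨?_, ?_⟩⟩)
    · have h₁ : s p.1 = ⟨i, by omega⟩ := congrArg Prod.fst h
      have h₂ : s p.2 = ⟨i + 1, hi⟩ := congrArg Prod.snd h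
      have hlt := hp.1
      rw [← adjSwap_adjSwap (hi := hi) p.1, ← adjSwap_adjSwap (hi := hi) p.2] at hlt
      rw [h₁, h₂, adjSwap_apply_left, adjSwap_apply_right, Fin.mk_lt_mk] at hlt
      omega
    · exact adjSwap_lt_adjSwap hp.1 hne
    · simpa only [Prod.map_fst, Prod.map_snd, Equiv.Perm.mul_apply, s, adjSwap_adjSwap] using hp.2

theorem exists_descent_of_ne_one {z : Equiv.Perm (Fin n)} (hz : z ≠ 1) :
    ∃ i, ∃ hi : i + 1 < n, z ⟨i + 1, hi⟩ < z ⟨i, by omega⟩ := by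
  contrapose! hz
  cases n with
  | zero => exact Subsingleton.elim _ _
  | succ n =>
    have hmono : StrictMono z := Fin.strictMono_iff_lt_succ.2 fun b =>
      lt_of_le_of_ne (hz b (by omega)) (z.injective.ne (Fin.ne_of_val_ne (by simp)))
    exact Equiv.ext fun m => hmono.apply_eq

theorem lt_and_len_mul_of_len_mul_adjSwap {i : ℕ} {hi : i + 1 < n}
    {v z : Equiv.Perm (Fin n)} (hz : z ⟨i, by omega⟩ < z ⟨i + 1, hi⟩)
    (h : len n (v * (z * adjSwap n i hi)) = len n v + len n (z * adjSwap n i hi)) :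
    (v * z) ⟨i, by omega⟩ < (v * z) ⟨i + 1, hi⟩ ∧ len n (v * z) = len n v + len n z := by
  have hzs := len_mul_adjSwap hi hz
  have hle := len_mul_le v z
  rw [← mul_assoc] at h
  rcases lt_or_gt_of_ne ((v * z).injective.ne (Fin.ne_of_val_ne (by omega :
      i ≠ i + 1) : (⟨i, by omega⟩ : Fin n) ≠ ⟨i + 1, hi⟩)) with hlt | hgt
  · have := len_mul_adjSwap hi hlt
    exact ⟨hlt, by omega⟩
  · -- otherwise `v z = (v z s_i) s_i` would be longer than `v` and `z` together
    have hgt' : (v * z * adjSwap n i hi) ⟨i, by omega⟩ < (v * z * adjSwap n i hi) ⟨i + 1, hi⟩ := by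
      simpa only [Equiv.Perm.mul_apply, adjSwap_apply_left, adjSwap_apply_right] using hgt
    have := len_mul_adjSwap hi hgt'
    rw [mul_assoc (v * z), adjSwap_mul_self, mul_one] at this
    omega

end Length

def richardsonImage {n : ℕ} (u w : Equiv.Perm (Fin n)) (a : Fin (n + 1)) :
    Set (Submodule ℂ (Fin n → ℂ)) :=
  {V | ∃ G : Fin (n + 1) → Submodule ℂ (Fin n → ℂ), IsCompleteFlag n G ∧
    InOpenSchubertCell n u G ∧ InOpenOppSchubertCell n w G ∧ G a = V}

theorem richardsonImage_mul_adjSwap {n i : ℕ} (hi : i + 1 < n) {u w : Equiv.Perm (Fin n)}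
    (hu : u ⟨i, by omega⟩ < u ⟨i + 1, hi⟩) (hw : w ⟨i, by omega⟩ < w ⟨i + 1, hi⟩)
    {a : Fin (n + 1)} (ha : (a : ℕ) ≠ i + 1) :
    richardsonImage (u * adjSwap n i hi) (w * adjSwap n i hi) a = richardsonImage u w a := by
  have hss : ∀ x : Equiv.Perm (Fin n), x * adjSwap n i hi * adjSwap n i hi = x := fun x => by
    rw [mul_assoc, adjSwap_mul_self, mul_one]
  rw [Fin.lt_def] at hu hw
  apply Set.Subset.antisymm
  · rintro _ ⟨G, hG, hGu, hGw, rfl⟩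
    rw [inOpenSchubertCell_iff hG] at hGu
    rw [inOpenOppSchubertCell_iff hG] at hGw
    obtain ⟨G', hG', hGw', hGu', hG'a⟩ := exists_flag_hasRankProfile_mul_adjSwap hi
      (by simp only [Equiv.Perm.mul_apply, adjSwap_apply_left, adjSwap_apply_right]; omega)
      (by simpa only [Equiv.Perm.mul_apply, adjSwap_apply_left, adjSwap_apply_right] using hu)
      hG hGw hGu
    rw [hss] at hGu' hGw'
    exact ⟨G', hG', (inOpenSchubertCell_iff hG').2 hGu', (inOpenOppSchubertCell_iff hG').2 hGw',
      hG'a a ha⟩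
  · rintro _ ⟨G, hG, hGu, hGw, rfl⟩
    rw [inOpenSchubertCell_iff hG] at hGu
    rw [inOpenOppSchubertCell_iff hG] at hGw
    obtain ⟨G', hG', hGu', hGw', hG'a⟩ := exists_flag_hasRankProfile_mul_adjSwap hi hu
      (by have := (w ⟨i + 1, hi⟩).isLt; omega) hG hGu hGw
    exact ⟨G', hG', (inOpenSchubertCell_iff hG').2 hGu', (inOpenOppSchubertCell_iff hG').2 hGw',
      hG'a a ha⟩

theorem richardsonImage_mul_of_inParabolic {n : ℕ} {a : Fin (n + 1)} {u w z : Equiv.Perm (Fin n)}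
    (hz : InParabolic n a z) (hu : len n (u * z) = len n u + len n z)
    (hw : len n (w * z) = len n w + len n z) :
    richardsonImage u w a = richardsonImage (u * z) (w * z) a := by
  by_cases hz1 : z = 1
  · rw [hz1, mul_one, mul_one]
  obtain ⟨i, hi, hdesc⟩ := exists_descent_of_ne_one hz1
  obtain ⟨z', hzz⟩ : ∃ z', z = z' * adjSwap n i hi :=
    ⟨z * adjSwap n i hi, by rw [mul_assoc, adjSwap_mul_self, mul_one]⟩
  have hz' : z' ⟨i, by omega⟩ < z' ⟨i + 1, hi⟩ := by
    simpa only [hzz, Equiv.Perm.mul_apply, adjSwap_apply_left, adjSwap_apply_right] using hdesc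
  have hlen : len n z = len n z' + 1 := hzz ▸ len_mul_adjSwap hi hz'
  -- a descent of `z ∈ S_a × S_{n-a}` cannot straddle the boundary `a`
  have hia : (a : ℕ) ≠ i + 1 := by
    intro h
    have h₁ := (hz ⟨i, by omega⟩).1 (show i < (a : ℕ) by omega)
    have h₂ : i + 1 < (a : ℕ) := (hz ⟨i + 1, hi⟩).2 (lt_trans (Fin.lt_def.1 hdesc) h₁)
    omega
  have hpar : InParabolic n a z' := fun m => by
    simpa only [hzz, Equiv.Perm.mul_apply, adjSwap_adjSwap, adjSwap_lt_iff hia] using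
      hz (adjSwap n i hi m)
  rw [hzz] at hu hw
  obtain ⟨hu', hu'len⟩ := lt_and_len_mul_of_len_mul_adjSwap hz' hu
  obtain ⟨hw', hw'len⟩ := lt_and_len_mul_of_len_mul_adjSwap hz' hw
  calc richardsonImage u w a = richardsonImage (u * z') (w * z') a :=
        richardsonImage_mul_of_inParabolic hpar hu'len hw'len
    _ = richardsonImage (u * z' * adjSwap n i hi) (w * z' * adjSwap n i hi) a :=
        (richardsonImage_mul_adjSwap hi hu' hw' hia).symm
    _ = richardsonImage (u * z) (w * z) a := by rw [hzz, mul_assoc, mul_assoc]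
termination_by len n z
decreasing_by omega

theorem stmt_10 (n k : ℕ) (hk : k ≤ n) (u w z : Equiv.Perm (Fin n))
    (hz : InParabolic n k z)
    (hadd₁ : len n (u * z) = len n u + len n z)
    (hadd₂ : len n (w * z) = len n w + len n z) :
    {V : Submodule ℂ (Fin n → ℂ) |
      ∃ G : Fin (n + 1) → Submodule ℂ (Fin n → ℂ), IsCompleteFlag n G ∧
        InOpenSchubertCell n u G ∧ InOpenOppSchubertCell n w G ∧
        G ⟨k, Nat.lt_succ_of_le hk⟩ = V} =
    {V : Submodule ℂ (Fin n → ℂ) |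
      ∃ G : Fin (n + 1) → Submodule ℂ (Fin n → ℂ), IsCompleteFlag n G ∧
        InOpenSchubertCell n (u * z) G ∧ InOpenOppSchubertCell n (w * z) G ∧
        G ⟨k, Nat.lt_succ_of_le hk⟩ = V} :=
  richardsonImage_mul_of_inParabolic (a := ⟨k, Nat.lt_succ_of_le hk⟩) hz hadd₁ hadd₂
end
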